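/- arXiv:1808.02236 — 5 statements merged into one kernel-verified Lean document; each statement's English description precedes it below -/
import Mathlib

section
/- Let d ≥ 3 and let s be a real number with (d-2)/2 ≤ s ≤ (d-1)/2. Then there exists a constant C = C(d,s) > 0 such that for every radial function f : ℝ^d → ℂ of class C¹ with f ∈ L²(ℝ^d) and |∇f| ∈ L²(ℝ^d), and for every x ∈ ℝ^d \ {0}, one has |x|^s |f(x)| ≤ C (‖f‖_{L²(ℝ^d)} + ‖∇f‖_{L²(ℝ^d)}). -/
open MeasureTheory Set Metric
open scoped ENNReal NNReal


variable {E : Type*} [NormedAddCommGroup E] [NormedSpace ℝ E] [MeasurableSpace E]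
  [BorelSpace E] [FiniteDimensional ℝ E] [Nontrivial E]
  (μ : Measure E) [μ.IsAddHaarMeasure]

lemma lintegral_fun_norm_addHaar' (G : ℝ → ENNReal) (hG : Measurable G) :
    ∫⁻ x, G ‖x‖ ∂μ = (Module.finrank ℝ E) * μ (ball 0 1) *
      ∫⁻ r in Ioi (0 : ℝ), ENNReal.ofReal (r ^ (Module.finrank ℝ E - 1)) * G r := by
  have hGm : Measurable fun p : (sphere (0:E) 1 × Ioi (0:ℝ)) => G (p.2 : ℝ) :=
    (hG.comp measurable_subtype_coe).comp measurable_snd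
  have h1 : ∫⁻ x : ({0}ᶜ : Set E), G ‖x.1‖ ∂(μ.comap Subtype.val) = ∫⁻ x, G ‖x‖ ∂μ := by
    rw [← setLIntegral_univ]
    rw [setLIntegral_subtype (measurableSet_singleton (0:E)).compl univ (fun x => G ‖x‖)]
    rw [image_univ, Subtype.range_coe, MeasureTheory.restrict_compl_singleton]
  rw [← h1]
  have h2 := (μ.measurePreserving_homeomorphUnitSphereProd).lintegral_comp
    (f := fun p : (sphere (0:E) 1 × Ioi (0:ℝ)) => G p.2) hGm
  calc ∫⁻ x : ({0}ᶜ : Set E), G ‖x.1‖ ∂(μ.comap Subtype.val)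
      = ∫⁻ a : ({0}ᶜ : Set E), G (((homeomorphUnitSphereProd E) a).2 : ℝ)
          ∂(μ.comap Subtype.val) := lintegral_congr fun a => by simp [homeomorphUnitSphereProd, homeomorphSphereProd]
    _ = ∫⁻ p : (sphere (0:E) 1 × Ioi (0:ℝ)), G p.2
          ∂(μ.toSphere.prod (.volumeIoiPow (Module.finrank ℝ E - 1))) := h2
    _ = (Module.finrank ℝ E) * μ (ball 0 1) *
          ∫⁻ r : Ioi (0:ℝ), G r ∂(Measure.volumeIoiPow (Module.finrank ℝ E - 1)) := by
        rw [lintegral_prod _ hGm.aemeasurable]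
        simp only [lintegral_const]
        rw [Measure.toSphere_apply_univ]
        ring
    _ = (Module.finrank ℝ E) * μ (ball 0 1) *
          ∫⁻ r in Ioi (0 : ℝ), ENNReal.ofReal (r ^ (Module.finrank ℝ E - 1)) * G r := by
        congr 1
        rw [Measure.volumeIoiPow, lintegral_withDensity_eq_lintegral_mul _
          ((measurable_subtype_coe.pow_const _).ennreal_ofReal)
          (show Measurable fun r : Ioi (0:ℝ) => G ↑r from hG.comp measurable_subtype_coe)]
        simp only [Pi.mul_apply]
        rw [← setLIntegral_univ, setLIntegral_subtype measurableSet_Ioi univ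
          (fun r => ENNReal.ofReal (r ^ (Module.finrank ℝ E - 1)) * G r)]
        simp [image_univ, Subtype.range_coe]
        rfl

lemma freq_small {v : ℝ → ℝ} (hv : IntegrableOn v (Ioi (0:ℝ)))
    (ε m : ℝ) (hε : 0 < ε) (hm : 0 < m) : ∃ b, m ≤ b ∧ v b ≤ ε := by
  by_contra h
  push_neg at h
  have hconst : IntegrableOn (fun _ : ℝ => ε) (Ioi m) := by
    refine Integrable.mono' (hv.mono_set (Ioi_subset_Ioi hm.le)) aestronglyMeasurable_const ?_
    filter_upwards [ae_restrict_mem measurableSet_Ioi] with b hb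
    rw [Real.norm_eq_abs, abs_of_pos hε]
    exact (h b (le_of_lt hb)).le
  rw [integrableOn_const_iff] at hconst
  rcases hconst with h1 | h2
  · exact hε.ne' (by simpa using h1)
  · simp [Real.volume_Ioi] at h2

lemma amgm_inf {X B C : ℝ} (hB : 0 < B) (hC : 0 < C)
    (h : ∀ t, 0 < t → X ≤ (t * B + C / t) / 2) : X ≤ Real.sqrt B * Real.sqrt C := by
  have b0 : 0 < Real.sqrt B := Real.sqrt_pos.2 hB
  have c0 : 0 < Real.sqrt C := Real.sqrt_pos.2 hC
  have hb := Real.sq_sqrt hB.le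
  have hc := Real.sq_sqrt hC.le
  have ht : 0 < Real.sqrt C / Real.sqrt B := div_pos c0 b0
  refine (h _ ht).trans (le_of_eq ?_)
  field_simp
  nlinarith [hb, hc, b0, c0]

lemma amgm_pt {φ w t : ℝ} (hφ : 0 ≤ φ) (hw : 0 < w) (ht : 0 < t) :
    φ ≤ (t * (w * φ^2) + (1/t) * w⁻¹) / 2 := by
  have h1 : 0 < t * w := mul_pos ht hw
  have h2 := sq_nonneg (Real.sqrt (t*w) * φ - (Real.sqrt (t*w))⁻¹)
  have h3 : Real.sqrt (t*w) > 0 := Real.sqrt_pos.2 h1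
  have h4 : Real.sqrt (t*w) ^ 2 = t * w := Real.sq_sqrt h1.le
  have h5 : Real.sqrt (t*w) * (Real.sqrt (t*w))⁻¹ = 1 := mul_inv_cancel₀ h3.ne'
  have h6 : ((Real.sqrt (t*w))⁻¹)^2 = (t*w)⁻¹ := by rw [inv_pow, h4]
  rw [mul_inv] at h6
  have h7 : (Real.sqrt (t*w) * φ - (Real.sqrt (t*w))⁻¹) ^ 2
      = Real.sqrt (t*w)^2 * φ^2 - 2 * (Real.sqrt (t*w) * (Real.sqrt (t*w))⁻¹) * φ
        + ((Real.sqrt (t*w))⁻¹)^2 := by ring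
  rw [h7, h4, h5, h6] at h2
  have h8 : (1:ℝ)/t = t⁻¹ := one_div t
  rw [h8]
  nlinarith [h2]


lemma hasDerivAt_normSq {g : ℝ → ℂ} (hg : ContDiff ℝ 1 g) (r : ℝ) :
    HasDerivAt (fun ρ => ‖g ρ‖^2)
      (2*((g r).re*(deriv g r).re + (g r).im*(deriv g r).im)) r := by
  have hgd : HasDerivAt g (deriv g r) r := (hg.differentiable one_ne_zero r).hasDerivAt
  have hre : HasDerivAt (fun ρ => (g ρ).re) ((deriv g r).re) r :=
    Complex.reCLM.hasFDerivAt.comp_hasDerivAt r hgd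
  have him : HasDerivAt (fun ρ => (g ρ).im) ((deriv g r).im) r :=
    Complex.imCLM.hasFDerivAt.comp_hasDerivAt r hgd
  have h := (hre.mul hre).add (him.mul him)
  have heq : (fun ρ => ‖g ρ‖^2) = fun ρ => (g ρ).re * (g ρ).re + (g ρ).im * (g ρ).im := by
    funext ρ
    rw [Complex.sq_norm, Complex.normSq_apply]
  rw [heq]
  refine h.congr_deriv ?_
  ring

lemma normSq_deriv_bound {g : ℝ → ℂ} (φ : ℝ → ℝ) (hφ : ∀ r, ‖deriv g r‖ ≤ φ r) (r : ℝ) :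
    |2*((g r).re*(deriv g r).re + (g r).im*(deriv g r).im)| ≤ 2 * ‖g r‖ * φ r := by
  have h1 : (g r).re*(deriv g r).re + (g r).im*(deriv g r).im
      = ((starRingEnd ℂ) (g r) * deriv g r).re := by
    simp [Complex.mul_re, Complex.conj_re, Complex.conj_im]
  have h2 : |((starRingEnd ℂ) (g r) * deriv g r).re| ≤ ‖(starRingEnd ℂ) (g r) * deriv g r‖ :=
    Complex.abs_re_le_norm _
  have h3 : ‖(starRingEnd ℂ) (g r) * deriv g r‖ = ‖g r‖ * ‖deriv g r‖ := by
    rw [norm_mul, RCLike.norm_conj]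
  rw [abs_mul, h1, abs_two]
  have : ‖g r‖ * ‖deriv g r‖ ≤ ‖g r‖ * φ r :=
    mul_le_mul_of_nonneg_left ((hφ r)) (norm_nonneg _)
  calc 2 * |((starRingEnd ℂ) (g r) * deriv g r).re| ≤ 2 * (‖g r‖ * ‖deriv g r‖) := by
        rw [h3] at h2; linarith
    _ ≤ 2 * (‖g r‖ * φ r) := by linarith
    _ = 2 * ‖g r‖ * φ r := by ring

lemma u_mono (d : ℕ) (hd : 3 ≤ d) {g : ℝ → ℂ} {φ : ℝ → ℝ} (hg : ContDiff ℝ 1 g)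
    (hφc : Continuous φ) (hφ : ∀ r, ‖deriv g r‖ ≤ φ r)
    (hψ : IntegrableOn (fun ρ => ρ^(d-1)*(‖g ρ‖*φ ρ)) (Ioi (0:ℝ)))
    {a b : ℝ} (ha : 0 < a) (hab : a ≤ b) :
    a^(d-1)*‖g a‖^2 ≤ b^(d-1)*‖g b‖^2
      + 2 * ∫ ρ in Ioi (0:ℝ), ρ^(d-1)*(‖g ρ‖*φ ρ) := by
  set N' : ℝ → ℝ := fun r => 2*((g r).re*(deriv g r).re + (g r).im*(deriv g r).im) with hN'
  have hgc : Continuous g := hg.continuous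
  have hdc : Continuous (deriv g) := hg.continuous_deriv le_rfl
  have hN'c : Continuous N' := by
    apply Continuous.mul continuous_const
    exact ((Complex.continuous_re.comp hgc).mul (Complex.continuous_re.comp hdc)).add
      ((Complex.continuous_im.comp hgc).mul (Complex.continuous_im.comp hdc))
  have hNc : Continuous (fun ρ => ‖g ρ‖^2) := (hgc.norm).pow 2
  have hu : ∀ r ∈ uIcc a b, HasDerivAt (fun ρ => ρ^(d-1)*‖g ρ‖^2)
      ((↑(d-1) * r^(d-1-1)) * ‖g r‖^2 + r^(d-1) * N' r) r :=
    fun r _ => (hasDerivAt_pow (d-1) r).mul (hasDerivAt_normSq hg r)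
  have hcont1 : Continuous (fun ρ : ℝ => (↑(d-1) * ρ^(d-1-1)) * ‖g ρ‖^2) :=
    (continuous_const.mul (continuous_pow _)).mul hNc
  have hcont2 : Continuous (fun ρ : ℝ => ρ^(d-1) * N' ρ) := (continuous_pow _).mul hN'c
  have hFTC : ∫ ρ in a..b, ((↑(d-1) * ρ^(d-1-1)) * ‖g ρ‖^2 + ρ^(d-1) * N' ρ)
      = b^(d-1)*‖g b‖^2 - a^(d-1)*‖g a‖^2 :=
    intervalIntegral.integral_eq_sub_of_hasDerivAt hu
      ((hcont1.add hcont2).intervalIntegrable a b)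
  rw [intervalIntegral.integral_add (hcont1.intervalIntegrable a b)
    (hcont2.intervalIntegrable a b)] at hFTC
  have h1 : (0:ℝ) ≤ ∫ ρ in a..b, (↑(d-1) * ρ^(d-1-1)) * ‖g ρ‖^2 := by
    apply intervalIntegral.integral_nonneg hab
    intro ρ hρ
    have : (0:ℝ) < ρ := lt_of_lt_of_le ha hρ.1
    positivity
  have h2 : -(∫ ρ in a..b, 2*(ρ^(d-1)*(‖g ρ‖*φ ρ))) ≤ ∫ ρ in a..b, ρ^(d-1) * N' ρ := by
    rw [← intervalIntegral.integral_neg]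
    apply intervalIntegral.integral_mono_on hab
      (((continuous_const.mul ((continuous_pow _).mul (hgc.norm.mul hφc))).neg).intervalIntegrable a b)
      (hcont2.intervalIntegrable a b)
    intro ρ hρ
    have hρ0 : (0:ℝ) < ρ := lt_of_lt_of_le ha hρ.1
    have hb := normSq_deriv_bound φ hφ ρ
    have hpow : (0:ℝ) ≤ ρ^(d-1) := by positivity
    have := neg_abs_le (N' ρ)
    have h3 : ρ^(d-1) * (-(2 * ‖g ρ‖ * φ ρ)) ≤ ρ^(d-1) * N' ρ := by
      apply mul_le_mul_of_nonneg_left _ hpow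
      calc -(2 * ‖g ρ‖ * φ ρ) ≤ -|N' ρ| := by linarith
        _ ≤ N' ρ := neg_abs_le _
    calc -(2*(ρ^(d-1)*(‖g ρ‖*φ ρ))) = ρ^(d-1) * (-(2 * ‖g ρ‖ * φ ρ)) := by ring
      _ ≤ ρ^(d-1) * N' ρ := h3
  have h4 : ∫ ρ in a..b, 2*(ρ^(d-1)*(‖g ρ‖*φ ρ))
      ≤ 2 * ∫ ρ in Ioi (0:ℝ), ρ^(d-1)*(‖g ρ‖*φ ρ) := by
    rw [intervalIntegral.integral_const_mul]
    apply mul_le_mul_of_nonneg_left _ (by norm_num : (0:ℝ) ≤ 2)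
    rw [intervalIntegral.integral_of_le hab]
    apply setIntegral_mono_set hψ
    · filter_upwards [ae_restrict_mem measurableSet_Ioi] with ρ hρ
      have h0 : (0:ℝ) < ρ := hρ
      have hφ0 : 0 ≤ φ ρ := le_trans (norm_nonneg _) (hφ ρ)
      positivity
    · exact HasSubset.Subset.eventuallyLE (fun ρ hρ => lt_of_lt_of_le ha (le_of_lt hρ.1))
  linarith

lemma integral_inv_pow_le (d : ℕ) (hd : 3 ≤ d) {a b : ℝ} (ha : 0 < a) (hab : a ≤ b) :
    ∫ ρ in a..b, (ρ^(d-1))⁻¹ ≤ (a^(d-2))⁻¹/((d:ℝ)-2) := by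
  have hd2 : (0:ℝ) < (d:ℝ) - 2 := by
    have : (3:ℝ) ≤ (d:ℝ) := by exact_mod_cast hd
    linarith
  have hw : ∀ x ∈ uIcc a b, HasDerivAt (fun x : ℝ => -((x^(d-2))⁻¹/((d:ℝ)-2)))
      ((x^(d-1))⁻¹) x := by
    intro x hx
    rw [uIcc_of_le hab] at hx
    have hx0 : 0 < x := lt_of_lt_of_le ha hx.1
    have h1 : HasDerivAt (fun x : ℝ => x^(d-2)) (↑(d-2)*x^(d-2-1)) x := hasDerivAt_pow (d-2) x
    have h2 := (h1.inv (pow_ne_zero _ hx0.ne')).div_const ((d:ℝ)-2)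
    have h3 := h2.neg
    refine h3.congr_deriv (Eq.symm ?_)
    have hcast : ((d-2 : ℕ) : ℝ) = (d:ℝ) - 2 := by
      have : (2:ℕ) ≤ d := by omega
      push_cast [Nat.cast_sub this]; ring
    rw [hcast]
    have hpow : (x^(d-2))^2 = x^(d-2-1) * x^(d-1) := by
      rw [← pow_mul, ← pow_add]
      congr 1
      omega
    field_simp
    rw [hpow]
    ring
  have hIcont : ContinuousOn (fun ρ : ℝ => (ρ^(d-1))⁻¹) (uIcc a b) := by
    apply ContinuousOn.inv₀ (continuousOn_pow _)
    intro x hx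
    rw [uIcc_of_le hab] at hx
    exact pow_ne_zero _ (lt_of_lt_of_le ha hx.1).ne'
  rw [intervalIntegral.integral_eq_sub_of_hasDerivAt hw hIcont.intervalIntegrable]
  have hb2 : (0:ℝ) ≤ (b^(d-2))⁻¹/((d:ℝ)-2) := by
    have hb0 : 0 < b := lt_of_lt_of_le ha hab
    positivity
  linarith

lemma small_r (d : ℕ) (hd : 3 ≤ d) {g : ℝ → ℂ} {φ : ℝ → ℝ} (hg : ContDiff ℝ 1 g)
    (hφc : Continuous φ) (hφ : ∀ r, ‖deriv g r‖ ≤ φ r)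
    (hA : IntegrableOn (fun ρ => ρ^(d-1)*‖g ρ‖^2) (Ioi (0:ℝ)))
    (hB : IntegrableOn (fun ρ => ρ^(d-1)*φ ρ^2) (Ioi (0:ℝ)))
    (hBpos : 0 < ∫ ρ in Ioi (0:ℝ), ρ^(d-1)*φ ρ^2)
    {a : ℝ} (ha : 0 < a) :
    ‖g a‖ ≤ Real.sqrt (∫ ρ in Ioi (0:ℝ), ρ^(d-1)*φ ρ^2)
      * Real.sqrt ((a^(d-2))⁻¹/((d:ℝ)-2)) := by
  have hd2 : (0:ℝ) < (d:ℝ) - 2 := by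
    have : (3:ℝ) ≤ (d:ℝ) := by exact_mod_cast hd
    linarith
  have hCa : 0 < (a^(d-2))⁻¹/((d:ℝ)-2) := by positivity
  apply amgm_inf hBpos hCa
  intro t ht
  apply le_of_forall_pos_le_add
  intro ε hε
  obtain ⟨b, hb1, hb2⟩ := freq_small hA (ε^2) (max a 1) (by positivity)
    (lt_of_lt_of_le zero_lt_one (le_max_right a 1))
  have hab : a ≤ b := le_trans (le_max_left a 1) hb1
  have hb1' : (1:ℝ) ≤ b := le_trans (le_max_right a 1) hb1
  have hgb : ‖g b‖ ≤ ε := by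
    have h1 : ‖g b‖^2 ≤ b^(d-1)*‖g b‖^2 :=
      le_mul_of_one_le_left (by positivity) (one_le_pow₀ hb1')
    have h2 : ‖g b‖^2 ≤ ε^2 := h1.trans hb2
    calc ‖g b‖ = Real.sqrt (‖g b‖^2) := (Real.sqrt_sq (norm_nonneg _)).symm
      _ ≤ Real.sqrt (ε^2) := Real.sqrt_le_sqrt h2
      _ = ε := Real.sqrt_sq hε.le
  have hdc : Continuous (deriv g) := hg.continuous_deriv le_rfl
  have hFTC : ∫ ρ in a..b, deriv g ρ = g b - g a :=
    intervalIntegral.integral_eq_sub_of_hasDerivAt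
      (fun r _ => (hg.differentiable one_ne_zero r).hasDerivAt) (hdc.intervalIntegrable a b)
  have h5 : ‖g a‖ ≤ ‖g b‖ + ∫ ρ in a..b, ‖deriv g ρ‖ := by
    have hn := intervalIntegral.norm_integral_le_integral_norm (f := deriv g) (μ := volume) hab
    rw [hFTC] at hn
    calc ‖g a‖ = ‖g b - (g b - g a)‖ := by congr 1; abel
      _ ≤ ‖g b‖ + ‖g b - g a‖ := norm_sub_le _ _
      _ ≤ ‖g b‖ + ∫ ρ in a..b, ‖deriv g ρ‖ := by linarith
  have h6 : ∫ ρ in a..b, ‖deriv g ρ‖ ≤ ∫ ρ in a..b, φ ρ :=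
    intervalIntegral.integral_mono_on hab (hdc.norm.intervalIntegrable a b)
      (hφc.intervalIntegrable a b) (fun ρ _ => hφ ρ)
  have hIcont : ContinuousOn (fun ρ : ℝ => (ρ^(d-1))⁻¹) (uIcc a b) := by
    apply ContinuousOn.inv₀ (continuousOn_pow _)
    intro x hx
    rw [uIcc_of_le hab] at hx
    exact pow_ne_zero _ (lt_of_lt_of_le ha hx.1).ne'
  have hint2 : IntervalIntegrable (fun ρ : ℝ => ρ^(d-1)*φ ρ^2) volume a b :=
    (((continuous_pow _).mul (hφc.pow 2))).intervalIntegrable a b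
  have hint3 : IntervalIntegrable (fun ρ : ℝ => (ρ^(d-1))⁻¹) volume a b :=
    hIcont.intervalIntegrable
  have h7 : ∫ ρ in a..b, φ ρ
      ≤ (t * (∫ ρ in a..b, ρ^(d-1)*φ ρ^2) + (1/t) * ∫ ρ in a..b, (ρ^(d-1))⁻¹)/2 := by
    have hpt : ∀ ρ ∈ Icc a b, φ ρ ≤ (t*(ρ^(d-1)*φ ρ^2) + (1/t)*(ρ^(d-1))⁻¹)/2 := by
      intro ρ hρ
      have hρ0 : 0 < ρ := lt_of_lt_of_le ha hρ.1
      exact amgm_pt (le_trans (norm_nonneg _) (hφ ρ)) (by positivity) ht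
    have hint4 : IntervalIntegrable
        (fun ρ : ℝ => (t*(ρ^(d-1)*φ ρ^2) + (1/t)*(ρ^(d-1))⁻¹)/2) volume a b :=
      (((hint2.const_mul t).add (hint3.const_mul (1/t))).div_const 2)
    have hmono := intervalIntegral.integral_mono_on hab (hφc.intervalIntegrable a b) hint4 hpt
    rw [intervalIntegral.integral_div, intervalIntegral.integral_add
      (hint2.const_mul t) (hint3.const_mul (1/t)),
      intervalIntegral.integral_const_mul, intervalIntegral.integral_const_mul] at hmono
    exact hmono
  have h8 : ∫ ρ in a..b, ρ^(d-1)*φ ρ^2 ≤ ∫ ρ in Ioi (0:ℝ), ρ^(d-1)*φ ρ^2 := by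
    rw [intervalIntegral.integral_of_le hab]
    apply setIntegral_mono_set hB
    · filter_upwards [ae_restrict_mem measurableSet_Ioi] with ρ hρ
      have h0 : (0:ℝ) < ρ := hρ
      positivity
    · exact HasSubset.Subset.eventuallyLE (fun ρ hρ => lt_of_lt_of_le ha (le_of_lt hρ.1))
  have h9 := integral_inv_pow_le d hd ha hab
  have h10 : t * (∫ ρ in a..b, ρ^(d-1)*φ ρ^2) ≤ t * ∫ ρ in Ioi (0:ℝ), ρ^(d-1)*φ ρ^2 :=
    mul_le_mul_of_nonneg_left h8 ht.le
  have h11 : (1/t) * (∫ ρ in a..b, (ρ^(d-1))⁻¹) ≤ (1/t) * ((a^(d-2))⁻¹/((d:ℝ)-2)) :=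
    mul_le_mul_of_nonneg_left h9 (by positivity)
  have hdiv : (a^(d-2))⁻¹/((d:ℝ)-2)/t = (1/t) * ((a^(d-2))⁻¹/((d:ℝ)-2)) := by ring
  rw [hdiv]
  linarith


lemma big_r (d : ℕ) (hd : 3 ≤ d) {g : ℝ → ℂ} {φ : ℝ → ℝ} (hg : ContDiff ℝ 1 g)
    (hφc : Continuous φ) (hφ : ∀ r, ‖deriv g r‖ ≤ φ r)
    (hA : IntegrableOn (fun ρ => ρ^(d-1)*‖g ρ‖^2) (Ioi (0:ℝ)))
    (hB : IntegrableOn (fun ρ => ρ^(d-1)*φ ρ^2) (Ioi (0:ℝ)))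
    {a : ℝ} (ha : 0 < a) :
    a^(d-1)*‖g a‖^2 ≤ (∫ ρ in Ioi (0:ℝ), ρ^(d-1)*‖g ρ‖^2)
      + ∫ ρ in Ioi (0:ℝ), ρ^(d-1)*φ ρ^2 := by
  have hbnd : ∀ ρ : ℝ, 0 < ρ →
      ρ^(d-1)*(‖g ρ‖*φ ρ) ≤ (ρ^(d-1)*‖g ρ‖^2 + ρ^(d-1)*φ ρ^2)/2 := by
    intro ρ hρ
    have hp : (0:ℝ) ≤ ρ^(d-1) := by positivity
    nlinarith [sq_nonneg (‖g ρ‖ - φ ρ), mul_nonneg hp (sq_nonneg (‖g ρ‖ - φ ρ))]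
  have hψ : IntegrableOn (fun ρ => ρ^(d-1)*(‖g ρ‖*φ ρ)) (Ioi (0:ℝ)) := by
    refine Integrable.mono' ((hA.add hB).div_const 2)
      (((continuous_pow _).mul (hg.continuous.norm.mul hφc)).aestronglyMeasurable.restrict) ?_
    filter_upwards [ae_restrict_mem measurableSet_Ioi] with ρ hρ
    have h0 : (0:ℝ) < ρ := hρ
    have hφ0 : 0 ≤ φ ρ := le_trans (norm_nonneg _) (hφ ρ)
    rw [Real.norm_eq_abs, abs_of_nonneg (by positivity)]
    exact hbnd ρ h0
  have hJ : ∫ ρ in Ioi (0:ℝ), ρ^(d-1)*(‖g ρ‖*φ ρ)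
      ≤ ((∫ ρ in Ioi (0:ℝ), ρ^(d-1)*‖g ρ‖^2) + ∫ ρ in Ioi (0:ℝ), ρ^(d-1)*φ ρ^2)/2 := by
    have := setIntegral_mono_on hψ ((hA.add hB).div_const 2) measurableSet_Ioi
      (fun ρ hρ => hbnd ρ hρ)
    rw [integral_div] at this
    refine this.trans (le_of_eq ?_)
    congr 1
    rw [← integral_add hA hB]
    rfl
  apply le_of_forall_pos_le_add
  intro ε hε
  obtain ⟨b, hb1, hb2⟩ := freq_small hA ε (max a 1) hε
    (lt_of_lt_of_le zero_lt_one (le_max_right a 1))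
  have hab : a ≤ b := le_trans (le_max_left a 1) hb1
  have := u_mono d hd hg hφc hφ hψ ha hab
  linarith

lemma memLp_two_lintegral {α : Type*} [MeasurableSpace α] {μ : Measure α} {F : Type*}
    [NormedAddCommGroup F] {f : α → F} (hf : MemLp f 2 μ) :
    ∫⁻ x, ENNReal.ofReal (‖f x‖^2) ∂μ = ENNReal.ofReal ((eLpNorm f 2 μ).toReal^2) := by
  have hint : (fun x => ENNReal.ofReal (‖f x‖^2)) = fun x => (‖f x‖₊ : ℝ≥0∞) ^ (2:ℝ) := by
    funext x
    rw [← enorm_eq_nnnorm, ← ofReal_norm, ENNReal.ofReal_rpow_of_nonneg (norm_nonneg _) (by norm_num)]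
    norm_num
  have hsnorm : eLpNorm f 2 μ = (∫⁻ x, (‖f x‖₊ : ℝ≥0∞) ^ (2:ℝ) ∂μ) ^ (1/(2:ℝ)) := by
    rw [eLpNorm_eq_lintegral_rpow_enorm_toReal two_ne_zero ENNReal.ofNat_ne_top]
    norm_num [enorm_eq_nnnorm]
  have hL2 : (∫⁻ x, (‖f x‖₊ : ℝ≥0∞) ^ (2:ℝ) ∂μ) = (eLpNorm f 2 μ) ^ (2:ℝ) := by
    rw [hsnorm, ← ENNReal.rpow_mul]
    norm_num
  rw [hint, hL2, ENNReal.ofReal_pow ENNReal.toReal_nonneg, ENNReal.ofReal_toReal hf.2.ne]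
  norm_cast

lemma radial_transfer (d : ℕ) (hd : 3 ≤ d) {F : Type*} [NormedAddCommGroup F]
    {f : EuclideanSpace ℝ (Fin d) → F} (hf : Continuous f) {v : ℝ → ℝ} (hv : Continuous v)
    (hv0 : ∀ r, 0 ≤ v r) (hfv : ∀ x, ‖f x‖ = v ‖x‖) (hmem : MemLp f 2 volume) :
    IntegrableOn (fun ρ => ρ^(d-1) * v ρ^2) (Ioi (0:ℝ)) ∧
    ((d:ℝ) * (volume (ball (0:EuclideanSpace ℝ (Fin d)) 1)).toReal)
        * ∫ ρ in Ioi (0:ℝ), ρ^(d-1)*v ρ^2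
      = (eLpNorm f 2 volume).toReal^2 := by
  haveI : Nonempty (Fin d) := ⟨⟨0, by omega⟩⟩
  have hrk : Module.finrank ℝ (EuclideanSpace ℝ (Fin d)) = d := finrank_euclideanSpace_fin
  have hGm : Measurable fun r : ℝ => ENNReal.ofReal (v r ^ 2) :=
    ((hv.pow 2)).measurable.ennreal_ofReal
  have hpolar := lintegral_fun_norm_addHaar' (volume : Measure (EuclideanSpace ℝ (Fin d)))
    (fun r => ENNReal.ofReal (v r^2)) hGm
  rw [hrk] at hpolar
  have hLHS : ∫⁻ x : EuclideanSpace ℝ (Fin d), ENNReal.ofReal (v ‖x‖ ^ 2)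
      = ENNReal.ofReal ((eLpNorm f 2 volume).toReal^2) := by
    rw [← memLp_two_lintegral hmem]
    exact lintegral_congr fun x => by rw [hfv]
  have hRHS : ∫⁻ r in Ioi (0:ℝ), ENNReal.ofReal (r ^ (d-1)) * ENNReal.ofReal (v r^2)
      = ∫⁻ r in Ioi (0:ℝ), ENNReal.ofReal (r^(d-1) * v r^2) := by
    apply setLIntegral_congr_fun_ae measurableSet_Ioi
    filter_upwards with r hr
    have h0 : (0:ℝ) < r := hr
    rw [ENNReal.ofReal_mul (by positivity)]
  rw [hLHS, hRHS] at hpolar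
  set c : ℝ≥0∞ := (d : ℝ≥0∞) * volume (ball (0:EuclideanSpace ℝ (Fin d)) 1) with hc
  set L : ℝ≥0∞ := ∫⁻ r in Ioi (0:ℝ), ENNReal.ofReal (r^(d-1) * v r^2) with hL
  have hballpos : 0 < volume (ball (0:EuclideanSpace ℝ (Fin d)) 1) :=
    measure_ball_pos volume 0 one_pos
  have hballfin : volume (ball (0:EuclideanSpace ℝ (Fin d)) 1) < ⊤ := measure_ball_lt_top
  have hc0 : c ≠ 0 := by
    simp only [hc, ne_eq, mul_eq_zero, not_or]
    exact ⟨by simp; omega, hballpos.ne'⟩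
  have hcT : c ≠ ⊤ := by
    simp only [hc]
    exact ENNReal.mul_ne_top (ENNReal.natCast_ne_top d) hballfin.ne
  have hLfin : L ≠ ⊤ := by
    intro h
    rw [h, ENNReal.mul_top hc0] at hpolar
    exact absurd hpolar (ENNReal.ofReal_ne_top)
  have hmeas : AEMeasurable (fun r : ℝ => ENNReal.ofReal (r^(d-1) * v r^2))
      (volume.restrict (Ioi (0:ℝ))) :=
    (((continuous_pow _).mul (hv.pow 2)).measurable.ennreal_ofReal).aemeasurable
  have hint : IntegrableOn (fun ρ => ρ^(d-1) * v ρ^2) (Ioi (0:ℝ)) := by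
    have := integrable_toReal_of_lintegral_ne_top hmeas hLfin
    apply this.congr
    filter_upwards [ae_restrict_mem measurableSet_Ioi] with ρ hρ
    have h0 : (0:ℝ) < ρ := hρ
    rw [ENNReal.toReal_ofReal (by positivity)]
  refine ⟨hint, ?_⟩
  have hval : ENNReal.ofReal (∫ ρ in Ioi (0:ℝ), ρ^(d-1)*v ρ^2) = L := by
    rw [hL]
    apply ofReal_integral_eq_lintegral_ofReal hint
    filter_upwards [ae_restrict_mem measurableSet_Ioi] with ρ hρ
    have h0 : (0:ℝ) < ρ := hρ
    positivity
  have := congrArg ENNReal.toReal hpolar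
  rw [ENNReal.toReal_ofReal (by positivity), ← hval, ENNReal.toReal_mul,
    ENNReal.toReal_ofReal] at this
  · rw [hc, ENNReal.toReal_mul] at this
    simp only [ENNReal.toReal_natCast] at this
    exact this.symm
  · apply integral_nonneg_of_ae
    filter_upwards [ae_restrict_mem measurableSet_Ioi] with ρ hρ
    have h0 : (0:ℝ) < ρ := hρ
    positivity

lemma radial_fderiv {F : Type*} [NormedAddCommGroup F] [InnerProductSpace ℝ F]
    [CompleteSpace F] {f : F → ℂ}
    (hf : ContDiff ℝ 1 f) (hrad : ∀ x y : F, ‖x‖ = ‖y‖ → f x = f y)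
    (x y : F) (h : ‖x‖ = ‖y‖) : ‖fderiv ℝ f x‖ = ‖fderiv ℝ f y‖ := by
  set T := Submodule.reflection (Submodule.span ℝ {x - y})ᗮ with hT
  have hTx : T x = y := Submodule.reflection_sub h
  have hfT : f ∘ T = f := funext fun z => hrad _ _ (T.norm_map z)
  have hd1 : HasFDerivAt (⇑T) (T.toLinearIsometry.toContinuousLinearMap) x := by
    have := T.toLinearIsometry.toContinuousLinearMap.hasFDerivAt (x := x)
    exact this
  have hd2 : HasFDerivAt (f ∘ ⇑T)
      ((fderiv ℝ f y).comp T.toLinearIsometry.toContinuousLinearMap) x := by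
    have hfy : HasFDerivAt f (fderiv ℝ f y) (T x) := by
      rw [hTx]; exact (hf.differentiable one_ne_zero y).hasFDerivAt
    exact hfy.comp x hd1
  have h3 : fderiv ℝ f x = (fderiv ℝ f y).comp T.toLinearIsometry.toContinuousLinearMap := by
    rw [← hd2.fderiv, hfT]
  rw [h3]; exact ContinuousLinearMap.opNorm_comp_linearIsometryEquiv _ T

set_option maxHeartbeats 2000000 in
/-- Radial Sobolev embedding (Lemma 2.4): for `d ≥ 3` and `(d-2)/2 ≤ s ≤ (d-1)/2`,
there is `C = C(d,s) > 0` such that for every radial `C¹` function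
`f : ℝ^d → ℂ` with `f ∈ L²` and `|∇f| ∈ L²`, and every `x ≠ 0`,
`|x|^s |f(x)| ≤ C (‖f‖_{L²} + ‖∇f‖_{L²})`. -/
theorem radial_sobolev_embedding (d : ℕ) (hd : 3 ≤ d) (s : ℝ)
    (hs₁ : ((d : ℝ) - 2) / 2 ≤ s) (hs₂ : s ≤ ((d : ℝ) - 1) / 2) :
    ∃ C : ℝ, 0 < C ∧
      ∀ f : EuclideanSpace ℝ (Fin d) → ℂ,
        (∀ x y : EuclideanSpace ℝ (Fin d), ‖x‖ = ‖y‖ → f x = f y) →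
        ContDiff ℝ 1 f →
        MemLp f 2 volume →
        MemLp (fun x => ‖fderiv ℝ f x‖) 2 volume →
        ∀ x : EuclideanSpace ℝ (Fin d), x ≠ 0 →
          ‖x‖ ^ s * ‖f x‖ ≤
            C * ((eLpNorm f 2 volume).toReal +
                 (eLpNorm (fun x => ‖fderiv ℝ f x‖) 2 volume).toReal) := by
  haveI : Nonempty (Fin d) := ⟨⟨0, by omega⟩⟩
  have hd2 : (0:ℝ) < (d:ℝ) - 2 := by
    have : (3:ℝ) ≤ (d:ℝ) := by exact_mod_cast hd
    linarith
  set cr : ℝ := (d:ℝ) * (volume (ball (0:EuclideanSpace ℝ (Fin d)) 1)).toReal with hcr_def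
  have hcr : 0 < cr := by
    apply mul_pos (by positivity)
    exact ENNReal.toReal_pos (measure_ball_pos volume 0 one_pos).ne' measure_ball_lt_top.ne
  set κ : ℝ := Real.sqrt cr with hκ_def
  have hκ : 0 < κ := Real.sqrt_pos.2 hcr
  have hκ2 : κ^2 = cr := Real.sq_sqrt hcr.le
  set C : ℝ := 1/κ + 1/(κ * Real.sqrt ((d:ℝ)-2)) with hC_def
  have hsd : 0 < Real.sqrt ((d:ℝ)-2) := Real.sqrt_pos.2 hd2
  have hC : 0 < C := by positivity
  refine ⟨C, hC, ?_⟩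
  intro f hrad hf hmem hmem'
  set Nf : ℝ := (eLpNorm f 2 volume).toReal with hNf_def
  set Ng : ℝ := (eLpNorm (fun x => ‖fderiv ℝ f x‖) 2 volume).toReal with hNg_def
  have hNf0 : 0 ≤ Nf := ENNReal.toReal_nonneg
  have hNg0 : 0 ≤ Ng := ENNReal.toReal_nonneg
  by_cases hz : eLpNorm (fun x => ‖fderiv ℝ f x‖) 2 volume = 0
  · -- degenerate case : f ≡ 0
    have hdc : Continuous fun x : EuclideanSpace ℝ (Fin d) => ‖fderiv ℝ f x‖ :=
      (hf.continuous_fderiv one_ne_zero).norm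
    have h1 : (fun x : EuclideanSpace ℝ (Fin d) => ‖fderiv ℝ f x‖) =ᵐ[volume] 0 :=
      (eLpNorm_eq_zero_iff hmem'.1 two_ne_zero).1 hz
    have h2 : (fun x : EuclideanSpace ℝ (Fin d) => ‖fderiv ℝ f x‖) = fun _ => 0 :=
      (Continuous.ae_eq_iff_eq volume hdc continuous_const).1 h1
    have h3 : ∀ x, fderiv ℝ f x = 0 := fun x => norm_eq_zero.1 (congrFun h2 x)
    have hconst : ∀ x y, f x = f y := is_const_of_fderiv_eq_zero (hf.differentiable one_ne_zero) h3
    have huniv : (volume : Measure (EuclideanSpace ℝ (Fin d))) univ = ⊤ :=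
      MeasureTheory.measure_univ_of_isAddLeftInvariant volume
    have hf0 : f 0 = 0 := by
      by_contra hne
      have hE : eLpNorm f 2 volume = eLpNorm (fun _ : EuclideanSpace ℝ (Fin d) => f 0) 2 volume := by
        congr 1
        funext x
        exact hconst x 0
      rw [eLpNorm_const (f 0) two_ne_zero (by
        intro h0
        rw [h0] at huniv
        simp at huniv), huniv] at hE
      have htop : (⊤ : ℝ≥0∞) ^ (1/(2:ℝ≥0∞).toReal) = ⊤ := by
        rw [ENNReal.top_rpow_of_pos (by norm_num)]
      rw [htop, ENNReal.mul_top (by simpa using hne)] at hE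
      exact hmem.2.ne hE
    have hfx0 : ∀ x, f x = 0 := fun x => (hconst x 0).trans hf0
    intro x _
    rw [hfx0 x, norm_zero, mul_zero]
    positivity
  · -- main case
    set e : EuclideanSpace ℝ (Fin d) := EuclideanSpace.single (⟨0, by omega⟩ : Fin d) (1:ℝ) with he_def
    have he : ‖e‖ = 1 := by rw [he_def, EuclideanSpace.norm_single, norm_one]
    have hsm : ∀ r : ℝ, ‖r • e‖ = |r| := by
      intro r
      rw [norm_smul, he, mul_one, Real.norm_eq_abs]
    set g : ℝ → ℂ := fun r => f (r • e) with hg_def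
    have hfx : ∀ x, f x = g ‖x‖ := by
      intro x
      apply hrad
      rw [hsm, abs_of_nonneg (norm_nonneg x)]
    have hg : ContDiff ℝ 1 g := hf.comp ((contDiff_id.smul contDiff_const))
    set φ : ℝ → ℝ := fun r => ‖fderiv ℝ f (r • e)‖ with hφ_def
    have hφc : Continuous φ :=
      ((hf.continuous_fderiv one_ne_zero).comp (continuous_id.smul continuous_const)).norm
    have hgderiv : ∀ r : ℝ, HasDerivAt g ((fderiv ℝ f (r•e)) e) r := by
      intro r
      have h1 : HasDerivAt (fun ρ : ℝ => ρ • e) e r := by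
        simpa using (hasDerivAt_id r).smul_const e
      exact (hf.differentiable one_ne_zero (r•e)).hasFDerivAt.comp_hasDerivAt r h1
    have hφ : ∀ r, ‖deriv g r‖ ≤ φ r := by
      intro r
      rw [(hgderiv r).deriv]
      calc ‖(fderiv ℝ f (r•e)) e‖ ≤ ‖fderiv ℝ f (r•e)‖ * ‖e‖ :=
            (fderiv ℝ f (r•e)).le_opNorm e
        _ = φ r := by rw [he, mul_one]
    have hφrad : ∀ x, ‖fderiv ℝ f x‖ = φ ‖x‖ := by
      intro x
      apply radial_fderiv hf hrad
      rw [hsm, abs_of_nonneg (norm_nonneg x)]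
    -- transfer
    obtain ⟨hA, hAval⟩ := radial_transfer d hd hf.continuous
      (v := fun r => ‖g r‖) (hg.continuous.norm) (fun r => norm_nonneg _)
      (fun x => by rw [hfx x]) hmem
    have hdc' : Continuous fun x : EuclideanSpace ℝ (Fin d) => ‖fderiv ℝ f x‖ :=
      (hf.continuous_fderiv one_ne_zero).norm
    obtain ⟨hB, hBval⟩ := radial_transfer d hd hdc' (v := φ) hφc
      (fun r => le_trans (norm_nonneg _) (hφ r))
      (fun x => by rw [Real.norm_eq_abs, abs_of_nonneg (norm_nonneg _), hφrad x]) hmem'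
    set A : ℝ := ∫ ρ in Ioi (0:ℝ), ρ^(d-1)*‖g ρ‖^2 with hAdef
    set B : ℝ := ∫ ρ in Ioi (0:ℝ), ρ^(d-1)*φ ρ^2 with hBdef
    have hAval' : cr * A = Nf^2 := hAval
    have hBval' : cr * B = Ng^2 := hBval
    have hNgpos : 0 < Ng := ENNReal.toReal_pos hz hmem'.2.ne
    have hBpos : 0 < B := by
      rcases lt_or_ge 0 B with h|h
      · exact h
      · exfalso
        have h1 : cr * B ≤ 0 := mul_nonpos_of_nonneg_of_nonpos hcr.le h
        nlinarith [pow_pos hNgpos 2]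
    have hA0 : 0 ≤ A := by
      rcases le_or_gt 0 A with h|h
      · exact h
      · exfalso
        have h1 : cr * A < 0 := mul_neg_of_pos_of_neg hcr h
        nlinarith [sq_nonneg Nf]
    have hB0 : 0 ≤ B := hBpos.le
    have hsqA : Real.sqrt A = Nf / κ := by
      have h1 : A = (Nf/κ)^2 := by
        rw [div_pow, hκ2]
        exact (eq_div_iff hcr.ne').2 (by linarith)
      rw [h1, Real.sqrt_sq (by positivity)]
    have hsqB : Real.sqrt B = Ng / κ := by
      have h1 : B = (Ng/κ)^2 := by
        rw [div_pow, hκ2]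
        exact (eq_div_iff hcr.ne').2 (by linarith)
      rw [h1, Real.sqrt_sq (by positivity)]
    intro x hx
    have hr : 0 < ‖x‖ := norm_pos_iff.2 hx
    rw [hfx x]
    have hsqrtpow : ∀ (k : ℕ), Real.sqrt (‖x‖^k) = ‖x‖ ^ ((k:ℝ)/2) := by
      intro k
      rw [Real.sqrt_eq_rpow, ← Real.rpow_natCast ‖x‖ k, ← Real.rpow_mul (norm_nonneg x)]
      congr 1
      ring
    rcases le_or_gt 1 ‖x‖ with hr1 | hr1
    · -- large radius
      have hkey := big_r d hd hg hφc hφ hA hB hr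
      have h1 : Real.sqrt (‖x‖^(d-1)*‖g ‖x‖‖^2) ≤ Real.sqrt (A+B) := Real.sqrt_le_sqrt hkey
      have h2 : Real.sqrt (‖x‖^(d-1)*‖g ‖x‖‖^2) = ‖x‖^(((d-1:ℕ):ℝ)/2) * ‖g ‖x‖‖ := by
        rw [Real.sqrt_mul (by positivity), Real.sqrt_sq (norm_nonneg _), hsqrtpow]
      have h3 : Real.sqrt (A+B) ≤ Real.sqrt A + Real.sqrt B := by
        have h4 := Real.sq_sqrt hA0
        have h5 := Real.sq_sqrt hB0
        have h6 : A + B ≤ (Real.sqrt A + Real.sqrt B)^2 := by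
          nlinarith [Real.sqrt_nonneg A, Real.sqrt_nonneg B,
            mul_nonneg (Real.sqrt_nonneg A) (Real.sqrt_nonneg B)]
        calc Real.sqrt (A+B) ≤ Real.sqrt ((Real.sqrt A + Real.sqrt B)^2) := Real.sqrt_le_sqrt h6
          _ = Real.sqrt A + Real.sqrt B := Real.sqrt_sq (by positivity)
      have hexp : ‖x‖^s ≤ ‖x‖^(((d-1:ℕ):ℝ)/2) := by
        apply Real.rpow_le_rpow_of_exponent_le hr1
        have : ((d-1:ℕ):ℝ) = (d:ℝ)-1 := by
          push_cast [Nat.cast_sub (by omega : 1 ≤ d)]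
          ring
        rw [this]
        exact hs₂
      have hlast : (Nf+Ng)/κ ≤ C*(Nf+Ng) := by
        have h7 : (Nf+Ng)/κ = (1/κ)*(Nf+Ng) := by ring
        have h8 : 0 < 1/(κ * Real.sqrt ((d:ℝ)-2)) := by positivity
        have h9 : 1/κ ≤ C := by rw [hC_def]; linarith
        rw [h7]
        exact mul_le_mul_of_nonneg_right h9 (by positivity)
      calc ‖x‖^s * ‖g ‖x‖‖ ≤ ‖x‖^(((d-1:ℕ):ℝ)/2) * ‖g ‖x‖‖ :=
            mul_le_mul_of_nonneg_right hexp (norm_nonneg _)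
        _ = Real.sqrt (‖x‖^(d-1)*‖g ‖x‖‖^2) := h2.symm
        _ ≤ Real.sqrt (A+B) := h1
        _ ≤ Real.sqrt A + Real.sqrt B := h3
        _ = (Nf+Ng)/κ := by rw [hsqA, hsqB]; ring
        _ ≤ C*(Nf+Ng) := hlast
    · -- small radius
      have hkey := small_r d hd hg hφc hφ hA hB hBpos hr
      set P : ℝ := ‖x‖ ^ (((d-2:ℕ):ℝ)/2) with hPdef
      have hPpos : 0 < P := Real.rpow_pos_of_pos hr _
      have hsq : Real.sqrt ((‖x‖^(d-2))⁻¹/((d:ℝ)-2)) = P⁻¹ * (Real.sqrt ((d:ℝ)-2))⁻¹ := by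
        rw [show (‖x‖^(d-2))⁻¹/((d:ℝ)-2) = ((‖x‖^(d-2)) * ((d:ℝ)-2))⁻¹ by
          rw [div_eq_mul_inv, ← mul_inv]]
        rw [Real.sqrt_inv, Real.sqrt_mul (by positivity), hsqrtpow, mul_inv]
      have hexp : ‖x‖^s ≤ P := by
        rw [hPdef]
        apply Real.rpow_le_rpow_of_exponent_ge hr hr1.le
        have : ((d-2:ℕ):ℝ) = (d:ℝ)-2 := by
          push_cast [Nat.cast_sub (by omega : 2 ≤ d)]
          ring
        rw [this]
        exact hs₁
      have hlast : Ng/(κ*Real.sqrt ((d:ℝ)-2)) ≤ C*(Nf+Ng) := by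
        have h7 : Ng/(κ*Real.sqrt ((d:ℝ)-2)) = (1/(κ*Real.sqrt ((d:ℝ)-2)))*Ng := by ring
        have h8 : (1/(κ*Real.sqrt ((d:ℝ)-2)))*Ng ≤ (1/(κ*Real.sqrt ((d:ℝ)-2)))*(Nf+Ng) :=
          mul_le_mul_of_nonneg_left (by linarith) (by positivity)
        have h9 : 1/(κ*Real.sqrt ((d:ℝ)-2)) ≤ C := by
          rw [hC_def]
          have : 0 < 1/κ := by positivity
          linarith
        rw [h7]
        exact h8.trans (mul_le_mul_of_nonneg_right h9 (by positivity))
      calc ‖x‖^s * ‖g ‖x‖‖ ≤ P * ‖g ‖x‖‖ := mul_le_mul_of_nonneg_right hexp (norm_nonneg _)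
        _ ≤ P * (Real.sqrt B * (P⁻¹ * (Real.sqrt ((d:ℝ)-2))⁻¹)) := by
            apply mul_le_mul_of_nonneg_left _ hPpos.le
            rw [← hsq]
            exact hkey
        _ = Real.sqrt B * (Real.sqrt ((d:ℝ)-2))⁻¹ := by
            field_simp
        _ = Ng/(κ*Real.sqrt ((d:ℝ)-2)) := by
            rw [hsqB]
            field_simp
        _ ≤ C*(Nf+Ng) := hlast
end

section
/- Let d ≥ 1 and let φ : ℝ^d → ℝ be a Schwartz function. Then ∫_{ℝ^d} Δφ(x) · (x · ∇φ(x)) dx = ((d-2)/2) ∫_{ℝ^d} |∇φ(x)|² dx, where Δφ denotes the Laplacian of φ (the trace of its Hessian) and x · ∇φ(x) is the Euclidean inner product of x with the gradient of φ at x. -/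
open MeasureTheory RealInnerProductSpace

section Aux

variable {d : ℕ}

local notation "𝔼" => EuclideanSpace ℝ (Fin d)

/-- Product of two Schwartz functions is integrable. -/
lemma sch_int0 (u w : SchwartzMap 𝔼 ℝ) :
    Integrable (fun x : 𝔼 => u x * w x) := by
  refine ((u.integrable_pow_mul volume 0).const_mul
      (SchwartzMap.seminorm ℝ 0 0 w)).mono'
      ((u.continuous.mul w.continuous).aestronglyMeasurable) ?_
  filter_upwards with x
  rw [norm_mul]
  calc ‖u x‖ * ‖w x‖ ≤ ‖u x‖ * SchwartzMap.seminorm ℝ 0 0 w := by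
        have := SchwartzMap.norm_le_seminorm ℝ w x
        exact mul_le_mul_of_nonneg_left this (norm_nonneg _)
    _ = SchwartzMap.seminorm ℝ 0 0 w * (‖x‖ ^ 0 * ‖u x‖) := by
        rw [pow_zero, one_mul]; ring

/-- A coordinate times a product of two Schwartz functions is integrable. -/
lemma sch_int1 (i : Fin d) (u w : SchwartzMap 𝔼 ℝ) :
    Integrable (fun x : 𝔼 => x i * (u x * w x)) := by
  have hcont : Continuous (fun x : 𝔼 => x i) := (EuclideanSpace.proj (𝕜 := ℝ) i).continuous
  refine ((u.integrable_pow_mul volume 1).const_mul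
      (SchwartzMap.seminorm ℝ 0 0 w)).mono'
      ((hcont.mul (u.continuous.mul w.continuous)).aestronglyMeasurable) ?_
  filter_upwards with x
  have hxi : |x i| ≤ ‖x‖ := by
    have h := abs_real_inner_le_norm x (EuclideanSpace.single i (1 : ℝ))
    rw [EuclideanSpace.inner_single_right] at h
    simpa [EuclideanSpace.norm_single] using h
  have hw := SchwartzMap.norm_le_seminorm ℝ w x
  have h0 : (0 : ℝ) ≤ SchwartzMap.seminorm ℝ 0 0 w := (norm_nonneg (w x)).trans hw
  calc ‖x i * (u x * w x)‖ = |x i| * (‖u x‖ * ‖w x‖) := by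
        rw [norm_mul, norm_mul]; rfl
    _ ≤ ‖x‖ * (‖u x‖ * SchwartzMap.seminorm ℝ 0 0 w) := by
        apply mul_le_mul hxi (mul_le_mul_of_nonneg_left hw (norm_nonneg _))
          (by positivity) (norm_nonneg _)
    _ = SchwartzMap.seminorm ℝ 0 0 w * (‖x‖ ^ 1 * ‖u x‖) := by ring

end Aux

/-- Integration-by-parts identity (Lemma 3.2, first identity): for a Schwartz
function `φ : ℝ^d → ℝ`,
`∫ Δφ(x) (x · ∇φ(x)) dx = ((d-2)/2) ∫ |∇φ(x)|² dx`. -/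
theorem virial_identity_laplacian (d : ℕ) (hd : 1 ≤ d)
    (φ : SchwartzMap (EuclideanSpace ℝ (Fin d)) ℝ) :
    (∫ x : EuclideanSpace ℝ (Fin d),
        (∑ j : Fin d, fderiv ℝ (fun y => fderiv ℝ (⇑φ) y (EuclideanSpace.single j 1)) x
            (EuclideanSpace.single j 1)) * ⟪x, gradient (⇑φ) x⟫) =
      (((d : ℝ) - 2) / 2) * ∫ x : EuclideanSpace ℝ (Fin d), ‖gradient (⇑φ) x‖ ^ 2 := by
  classical
  have hφd : Differentiable ℝ (⇑φ) := φ.differentiable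
  set E := EuclideanSpace ℝ (Fin d) with hE
  set e : Fin d → E := fun j => EuclideanSpace.single j 1 with he
  set f : Fin d → SchwartzMap E ℝ := fun j => LineDeriv.lineDerivOpCLM ℝ (SchwartzMap E ℝ) (e j) φ with hfdef
  set F : Fin d → Fin d → SchwartzMap E ℝ :=
    fun i j => LineDeriv.lineDerivOpCLM ℝ (SchwartzMap E ℝ) (e i) (f j) with hFdef
  have hf : ∀ j, ⇑(f j) = fun y => fderiv ℝ (⇑φ) y (e j) := fun j => rfl
  have hFap : ∀ i j x, F i j x = fderiv ℝ (⇑(f j)) x (e i) := fun i j x => rfl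
  -- differentiability of the first derivative
  have hd1 : Differentiable ℝ (fderiv ℝ (⇑φ)) := by
    have h2 : ContDiff ℝ 2 (⇑φ) := φ.smooth 2
    exact (h2.fderiv_right (m := 1) (by norm_num)).differentiable (by norm_num)
  -- key formula for derivatives of directional derivatives
  have key : ∀ (v : E) (x : E), fderiv ℝ (fun y => fderiv ℝ (⇑φ) y v) x
      = (fderiv ℝ (fderiv ℝ (⇑φ)) x).flip v := by
    intro v x
    rw [show (fun y => fderiv ℝ (⇑φ) y v) = fun y => (fderiv ℝ (⇑φ) y) ((fun _ => v) y) from rfl,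
      fderiv_clm_apply (hd1 x) (differentiableAt_const v)]
    simp
  -- symmetry of second derivatives
  have hsymm : ∀ i j (x : E), F i j x = F j i x := by
    intro i j x
    have h1 : F i j x = fderiv ℝ (fderiv ℝ (⇑φ)) x (e i) (e j) := by
      rw [hFap, hf, key]; rfl
    have h2 : F j i x = fderiv ℝ (fderiv ℝ (⇑φ)) x (e j) (e i) := by
      rw [hFap, hf, key]; rfl
    rw [h1, h2, second_derivative_symmetric (fun y => (hφd y).hasFDerivAt)
      (hd1 x).hasFDerivAt (e i) (e j)]
  -- coordinate functions
  have hcd : ∀ i : Fin d, Differentiable ℝ (fun x : E => x i) :=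
    fun i => (EuclideanSpace.proj (𝕜 := ℝ) i).differentiable
  have hcfd : ∀ (i : Fin d) (x : E), fderiv ℝ (fun y : E => y i) x
      = EuclideanSpace.proj (𝕜 := ℝ) i :=
    fun i x => (EuclideanSpace.proj (𝕜 := ℝ) i).fderiv
  have hproj : ∀ i j : Fin d, EuclideanSpace.proj (𝕜 := ℝ) i (e j)
      = if i = j then (1 : ℝ) else 0 := by
    intro i j
    show (EuclideanSpace.single j (1 : ℝ)) i = _
    rw [EuclideanSpace.single_apply]
  -- gradient coordinates
  have hgradcoord : ∀ (x : E) (i : Fin d), gradient (⇑φ) x i = f i x := by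
    intro x i
    have h1 : ⟪gradient (⇑φ) x, e i⟫ = fderiv ℝ (⇑φ) x (e i) :=
      InnerProductSpace.toDual_symm_apply
    rw [he] at h1
    rw [EuclideanSpace.inner_single_right] at h1
    rw [hf]; simpa [he] using h1
  have hip : ∀ x : E, (⟪x, gradient (⇑φ) x⟫ : ℝ) = ∑ i, x i * f i x := by
    intro x
    rw [PiLp.inner_apply]
    exact Finset.sum_congr rfl fun i _ => by
      rw [RCLike.inner_apply, hgradcoord]; simp; ring
  have hnormsq : ∀ x : E, ‖gradient (⇑φ) x‖ ^ 2 = ∑ j, f j x * f j x := by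
    intro x
    rw [← real_inner_self_eq_norm_sq, PiLp.inner_apply]
    exact Finset.sum_congr rfl fun i _ => by
      rw [RCLike.inner_apply, hgradcoord]; simp
  -- integrability facts
  have int0 : ∀ u w : SchwartzMap E ℝ, Integrable (fun x : E => u x * w x) := sch_int0
  have int1 : ∀ (i : Fin d) (u w : SchwartzMap E ℝ),
      Integrable (fun x : E => x i * (u x * w x)) := sch_int1
  -- derivative of coordinate times Schwartz
  have hdf : ∀ (i j : Fin d) (x : E), fderiv ℝ (fun y : E => y i * f i y) x (e j)
      = x i * F j i x + (if i = j then (1:ℝ) else 0) * f i x := by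
    intro i j x
    rw [fderiv_fun_mul (hcd i x) ((f i).differentiable x)]
    rw [ContinuousLinearMap.add_apply, ContinuousLinearMap.smul_apply,
      ContinuousLinearMap.smul_apply, hcfd, hproj, hFap]
    simp [mul_comm]
  -- Step B : first integration by parts
  have hB : ∀ i j : Fin d, (∫ x : E, x i * (F j j x * f i x))
      = -(∫ x : E, x i * (F j i x * f j x))
        - (if i = j then (1:ℝ) else 0) * ∫ x : E, f i x * f j x := by
    intro i j
    set c : ℝ := if i = j then (1:ℝ) else 0 with hc
    have h1 : Integrable (fun x : E => fderiv ℝ (fun y : E => y i * f i y) x (e j) * f j x) := by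
      refine (((int1 i (F j i) (f j)).add ((int0 (f i) (f j)).const_mul c)).congr ?_)
      filter_upwards with x
      simp only [Pi.add_apply, ← hc]
      rw [hdf i j x]; ring
    have h2 : Integrable (fun x : E => (x i * f i x) * fderiv ℝ (⇑(f j)) x (e j)) := by
      refine ((int1 i (f i) (F j j)).congr ?_)
      filter_upwards with x
      rw [← hFap]; ring
    have h3 : Integrable (fun x : E => (x i * f i x) * f j x) := by
      refine ((int1 i (f i) (f j)).congr ?_)
      filter_upwards with x; ring
    have hdiff1 : Differentiable ℝ (fun y : E => y i * f i y) :=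
      (hcd i).mul (f i).differentiable
    have ibp := integral_mul_fderiv_eq_neg_fderiv_mul_of_integrable h1 h2 h3 (fun x _ => hdiff1 x)
      (fun x _ => (f j).differentiable x)
    calc (∫ x : E, x i * (F j j x * f i x))
        = ∫ x : E, (x i * f i x) * fderiv ℝ (⇑(f j)) x (e j) := by
          refine integral_congr_ae ?_
          filter_upwards with x
          rw [← hFap]; ring
      _ = -∫ x : E, fderiv ℝ (fun y : E => y i * f i y) x (e j) * f j x := ibp
      _ = -∫ x : E, (x i * (F j i x * f j x) + c * (f i x * f j x)) := by
          congr 1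
          refine integral_congr_ae ?_
          filter_upwards with x
          rw [hdf i j x]; ring
      _ = -(∫ x : E, x i * (F j i x * f j x)) - c * ∫ x : E, f i x * f j x := by
          rw [integral_add (int1 i (F j i) (f j)) ((int0 (f i) (f j)).const_mul c),
            integral_const_mul]
          ring
  -- Step C : second integration by parts
  have hC : ∀ i j : Fin d, (∫ x : E, x i * (F i j x * f j x))
      = -(1/2) * ∫ x : E, f j x * f j x := by
    intro i j
    have hg' : ∀ x : E, fderiv ℝ (fun y : E => f j y * f j y) x (e i)
        = 2 * (F i j x * f j x) := by
      intro x
      rw [fderiv_fun_mul ((f j).differentiable x) ((f j).differentiable x)]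
      simp only [ContinuousLinearMap.add_apply, ContinuousLinearMap.smul_apply,
        smul_eq_mul, ← hFap i j x]
      ring
    have hc' : ∀ x : E, fderiv ℝ (fun y : E => y i) x (e i) = 1 := by
      intro x; rw [hcfd, hproj]; simp
    have h1 : Integrable (fun x : E => fderiv ℝ (fun y : E => y i) x (e i)
        * (f j x * f j x)) := by
      refine ((int0 (f j) (f j)).congr ?_)
      filter_upwards with x
      rw [hc', one_mul]
    have h2 : Integrable (fun x : E => x i * fderiv ℝ (fun y : E => f j y * f j y) x (e i)) := by
      refine (((int1 i (F i j) (f j)).const_mul 2).congr ?_)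
      filter_upwards with x
      rw [hg']; ring
    have h3 : Integrable (fun x : E => x i * (f j x * f j x)) := int1 i (f j) (f j)
    have ibp := integral_mul_fderiv_eq_neg_fderiv_mul_of_integrable h1 h2 h3 (fun x _ => hcd i x)
      (fun x _ => (((f j).differentiable).mul ((f j).differentiable)) x)
    have e1 : (∫ x : E, x i * fderiv ℝ (fun y : E => f j y * f j y) x (e i))
        = 2 * ∫ x : E, x i * (F i j x * f j x) := by
      rw [← integral_const_mul]
      refine integral_congr_ae ?_
      filter_upwards with x
      rw [hg']; ring
    have e2 : (∫ x : E, fderiv ℝ (fun y : E => y i) x (e i) * (f j x * f j x))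
        = ∫ x : E, f j x * f j x := by
      refine integral_congr_ae ?_
      filter_upwards with x
      rw [hc', one_mul]
    rw [e1, e2] at ibp
    linarith
  -- combine: each (i,j) term
  have hterm : ∀ i j : Fin d, (∫ x : E, x i * (F j j x * f i x))
      = (1/2) * (∫ x : E, f j x * f j x)
        - (if i = j then (1:ℝ) else 0) * ∫ x : E, f i x * f j x := by
    intro i j
    rw [hB i j]
    have : (∫ x : E, x i * (F j i x * f j x)) = ∫ x : E, x i * (F i j x * f j x) := by
      refine integral_congr_ae ?_
      filter_upwards with x
      rw [hsymm j i x]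
    rw [this, hC i j]
    ring
  -- the left-hand side
  have hLHS : (∫ x : E,
        (∑ j : Fin d, fderiv ℝ (fun y => fderiv ℝ (⇑φ) y (e j)) x (e j))
          * ⟪x, gradient (⇑φ) x⟫)
      = ∑ j : Fin d, ∑ i : Fin d, ∫ x : E, x i * (F j j x * f i x) := by
    have hpt : (fun x : E =>
        (∑ j : Fin d, fderiv ℝ (fun y => fderiv ℝ (⇑φ) y (e j)) x (e j))
          * ⟪x, gradient (⇑φ) x⟫)
        = fun x : E => ∑ j : Fin d, ∑ i : Fin d, x i * (F j j x * f i x) := by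
      funext x
      rw [hip x, Finset.sum_mul]
      refine Finset.sum_congr rfl fun j _ => ?_
      rw [Finset.mul_sum]
      refine Finset.sum_congr rfl fun i _ => ?_
      have : fderiv ℝ (fun y => fderiv ℝ (⇑φ) y (e j)) x (e j) = F j j x := by
        rw [hFap, hf]
      rw [this]; ring
    rw [hpt]
    rw [integral_finset_sum _ (fun j _ => integrable_finset_sum _
      (fun i _ => (int1 i (F j j) (f i)).congr (by filter_upwards with x; ring)))]
    refine Finset.sum_congr rfl fun j _ => ?_
    rw [integral_finset_sum _
      (fun i _ => (int1 i (F j j) (f i)).congr (by filter_upwards with x; ring))]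
  -- the right-hand side
  have hRHS : (∫ x : E, ‖gradient (⇑φ) x‖ ^ 2)
      = ∑ j : Fin d, ∫ x : E, f j x * f j x := by
    rw [show (fun x : E => ‖gradient (⇑φ) x‖ ^ 2)
      = fun x : E => ∑ j : Fin d, f j x * f j x from funext fun x => hnormsq x]
    exact integral_finset_sum _ fun j _ => int0 (f j) (f j)
  rw [hLHS, hRHS]
  have hfinal : ∀ j : Fin d, (∑ i : Fin d, ∫ x : E, x i * (F j j x * f i x))
      = ((d : ℝ) - 2) / 2 * ∫ x : E, f j x * f j x := by
    intro j
    have : (∑ i : Fin d, ∫ x : E, x i * (F j j x * f i x))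
        = ∑ i : Fin d, ((1/2) * (∫ x : E, f j x * f j x)
          - (if i = j then (1:ℝ) else 0) * ∫ x : E, f i x * f j x) :=
      Finset.sum_congr rfl fun i _ => hterm i j
    rw [this, Finset.sum_sub_distrib, Finset.sum_const, Finset.card_univ, Fintype.card_fin]
    simp only [ite_mul, one_mul, zero_mul, Finset.sum_ite_eq', Finset.mem_univ,
      if_true, nsmul_eq_mul]
    ring
  rw [Finset.sum_congr rfl fun j _ => hfinal j, ← Finset.mul_sum]
end

section
/- Let d ≥ 3, a > -((d-2)/2)², and p > 1. Suppose Q : (0,∞) → ℝ is of class C² and satisfies the radial elliptic equation Q''(r) + ((d-1)/r) Q'(r) - (a/r²) Q(r) - Q(r) + |Q(r)|^{p-1} Q(r) = 0 for all r > 0. Assume there exist constants C, δ, ε > 0 such that |Q(r)| + |Q'(r)| ≤ C e^{-δ r} for all r ≥ 1, and |Q(r)| ≤ C r^{1 - d/2 + ε} and |Q'(r)| ≤ C r^{-d/2 + ε} for all 0 < r ≤ 1. Then ∫₀^∞ Q(r)² r^{d-1} dr = ((d+2-(d-2)p)/(2(p+1))) ∫₀^∞ |Q(r)|^{p+1} r^{d-1}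 dr, and ∫₀^∞ (Q'(r)² + a Q(r)²/r²) r^{d-1} dr = (d(p-1)/(2(p+1))) ∫₀^∞ |Q(r)|^{p+1} r^{d-1} dr. -/
open MeasureTheory Set Filter Topology

lemma abs_rpow_mul_self' {p : ℝ} (hp : 1 < p) (x : ℝ) :
    |x| ^ (p - 1) * x * x = |x| ^ (p + 1) := by
  rcases eq_or_ne x 0 with rfl | hx
  · simp [Real.zero_rpow (by linarith : p + 1 ≠ 0)]
  · have h1 : |x| ^ (p + 1) = |x| ^ (p - 1) * |x| ^ (2 : ℝ) := by
      rw [← Real.rpow_add (abs_pos.2 hx)]; ring_nf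
    rw [h1, Real.rpow_two, sq_abs]; ring

lemma hasDerivAt_abs_rpow' {p : ℝ} (hp : 1 < p) (x : ℝ) :
    HasDerivAt (fun t : ℝ => |t| ^ (p + 1)) ((p + 1) * |x| ^ (p - 1) * x) x := by
  have := hasDerivAt_abs_rpow x (p := p + 1) (by linarith)
  simpa [show p + 1 - 2 = p - 1 by ring] using this

lemma tendsto_pow_mul_exp_neg_mul (k : ℕ) {b : ℝ} (hb : 0 < b) :
    Tendsto (fun r : ℝ => r ^ k * Real.exp (-b * r)) atTop (𝓝 0) := by
  have h1 := Real.tendsto_pow_mul_exp_neg_atTop_nhds_zero k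
  have h2 : Tendsto (fun r : ℝ => b * r) atTop atTop :=
    tendsto_id.const_mul_atTop hb
  have h4 : Tendsto (fun r : ℝ => (b * r) ^ k * Real.exp (-(b * r))) atTop (𝓝 0) :=
    h1.comp h2
  have h5 := h4.const_mul (b ^ k)⁻¹
  simp only [mul_zero] at h5
  refine h5.congr fun r => ?_
  rw [mul_pow]
  have hne : b ^ k ≠ 0 := pow_ne_zero _ hb.ne'
  field_simp

lemma integrableOn_pow_mul_exp (k : ℕ) {b : ℝ} (hb : 0 < b) :
    IntegrableOn (fun r : ℝ => r ^ k * Real.exp (-b * r)) (Ioi 1) := by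
  apply integrable_of_isBigO_exp_neg (half_pos hb)
  · exact (continuousOn_pow k).mul (Real.continuous_exp.comp (by continuity)).continuousOn
  · have h0 := tendsto_pow_mul_exp_neg_mul k (half_pos hb)
    rw [Asymptotics.isBigO_iff]
    refine ⟨1, ?_⟩
    filter_upwards [h0.eventually (eventually_le_nhds one_pos), eventually_ge_atTop (0:ℝ)]
      with r hr hr0
    have hsplit : Real.exp (-b * r) = Real.exp (-(b/2) * r) * Real.exp (-(b/2) * r) := by
      rw [← Real.exp_add]; ring_nf
    rw [Real.norm_eq_abs, Real.norm_eq_abs, abs_of_nonneg (by positivity),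
      abs_of_nonneg (Real.exp_pos _).le, hsplit, one_mul]
    calc r ^ k * (Real.exp (-(b/2) * r) * Real.exp (-(b/2) * r))
        = (r ^ k * Real.exp (-(b/2) * r)) * Real.exp (-(b/2) * r) := by ring
      _ ≤ 1 * Real.exp (-(b/2) * r) := by
          apply mul_le_mul_of_nonneg_right hr (Real.exp_pos _).le
      _ = Real.exp (-(b/2) * r) := one_mul _


lemma ftc_Ioc (G H : ℝ → ℝ) (hd : ∀ r : ℝ, 0 < r → HasDerivAt G (H r) r)
    (hHc : ContinuousOn H (Ioi 0)) {t : ℝ} (ht : 0 < t) (ht1 : t ≤ 1) :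
    ∫ r in Ioc t 1, H r = G 1 - G t := by
  rw [← intervalIntegral.integral_of_le ht1]
  refine intervalIntegral.integral_eq_sub_of_hasDerivAt (fun x hx => ?_) ?_
  · rw [uIcc_of_le ht1] at hx
    exact hd x (lt_of_lt_of_le ht hx.1)
  · apply ContinuousOn.intervalIntegrable
    apply hHc.mono
    rw [uIcc_of_le ht1]
    intro x hx
    exact lt_of_lt_of_le ht hx.1

lemma improper_integral_zero (G H : ℝ → ℝ)
    (hd : ∀ r : ℝ, 0 < r → HasDerivAt G (H r) r)
    (hHi : IntegrableOn H (Ioi 0))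
    (h0 : Tendsto G (𝓝[>] (0:ℝ)) (𝓝 0))
    (htop : Tendsto G atTop (𝓝 0)) :
    ∫ r in Ioi (0:ℝ), H r = 0 := by
  have hu_pos : ∀ n : ℕ, (0:ℝ) < 1/(n+1) := fun n => by positivity
  have hu_t : Tendsto (fun n : ℕ => (1:ℝ)/(n+1)) atTop (𝓝 0) :=
    tendsto_one_div_add_atTop_nhds_zero_nat
  have hu_t' : Tendsto (fun n : ℕ => (1:ℝ)/(n+1)) atTop (𝓝[>] 0) :=
    tendsto_nhdsWithin_of_tendsto_nhds_of_eventually_within _ hu_t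
      (Eventually.of_forall fun n => hu_pos n)
  have hint : ∀ n : ℕ, ∫ r in Ioi ((1:ℝ)/(n+1)), H r = 0 - G (1/(n+1)) := fun n =>
    integral_Ioi_of_hasDerivAt_of_tendsto ((hd _ (hu_pos n)).continuousAt.continuousWithinAt)
      (fun x hx => hd x ((hu_pos n).trans hx)) (hHi.mono_set (Ioi_subset_Ioi (hu_pos n).le)) htop
  have hmono : Monotone (fun n : ℕ => Ioi ((1:ℝ)/(n+1))) := by
    intro m n hmn
    apply Ioi_subset_Ioi
    apply one_div_le_one_div_of_le (by positivity)
    have : (m:ℝ) ≤ n := Nat.cast_le.2 hmn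
    linarith
  have hU : ⋃ n : ℕ, Ioi ((1:ℝ)/(n+1)) = Ioi (0:ℝ) := by
    ext x
    simp only [mem_iUnion, mem_Ioi]
    constructor
    · rintro ⟨n, hn⟩; exact (hu_pos n).trans hn
    · intro hx; obtain ⟨n, hn⟩ := exists_nat_one_div_lt hx; exact ⟨n, hn⟩
  have h1 : Tendsto (fun n : ℕ => ∫ r in Ioi ((1:ℝ)/(n+1)), H r) atTop
      (𝓝 (∫ r in Ioi (0:ℝ), H r)) := by
    have h := tendsto_setIntegral_of_monotone (fun n => measurableSet_Ioi) hmono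
      (by rw [hU]; exact hHi)
    rwa [hU] at h
  have h2 : Tendsto (fun n : ℕ => 0 - G (1/(n+1))) atTop (𝓝 0) := by
    have := tendsto_const_nhds (x := (0:ℝ)) (f := atTop (α := ℕ)) |>.sub (h0.comp hu_t')
    simpa using this
  exact tendsto_nhds_unique (h1.congr hint) h2

lemma tendsto_G_left (G H : ℝ → ℝ)
    (hd : ∀ r : ℝ, 0 < r → HasDerivAt G (H r) r)
    (hHc : ContinuousOn H (Ioi 0))
    (hHi : IntegrableOn H (Ioc (0:ℝ) 1)) :
    Tendsto G (𝓝[>] (0:ℝ)) (𝓝 (G 1 - ∫ r in Ioc (0:ℝ) 1, H r)) := by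
  have hnorm_int : IntegrableOn (fun r => ‖H r‖) (Ioc (0:ℝ) 1) := hHi.norm
  have hψ0 : Tendsto (fun t => ∫ r in Ioc (0:ℝ) t, ‖H r‖) (𝓝[>] (0:ℝ)) (𝓝 0) := by
    rw [NormedAddCommGroup.tendsto_nhds_zero]
    intro ε' hε'
    have hu_le : ∀ n : ℕ, (1:ℝ)/(n+1) ≤ 1 := by
      intro n
      rw [div_le_one (by positivity)]
      have : (0:ℝ) ≤ n := Nat.cast_nonneg n
      linarith
    obtain ⟨n, hn⟩ : ∃ n : ℕ, ∫ r in Ioc (0:ℝ) (1/(n+1)), ‖H r‖ < ε' := by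
      have hanti : Antitone (fun n : ℕ => Ioc (0:ℝ) (1/(n+1))) := by
        intro m n hmn
        apply Ioc_subset_Ioc_right
        apply one_div_le_one_div_of_le (by positivity)
        have : (m:ℝ) ≤ n := Nat.cast_le.2 hmn
        linarith
      have hseq := tendsto_setIntegral_of_antitone (fun n => measurableSet_Ioc) hanti
        ⟨0, hnorm_int.mono_set (Ioc_subset_Ioc_right (hu_le 0))⟩
      have hInter : ⋂ n : ℕ, Ioc (0:ℝ) (1/(n+1)) = ∅ := by
        ext x
        simp only [mem_iInter, mem_Ioc, mem_empty_iff_false, iff_false, not_forall]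
        by_contra hcon
        push_neg at hcon
        obtain ⟨m, hm⟩ := exists_nat_one_div_lt (hcon 0).1
        exact absurd ((hcon m).2) (not_le.2 hm)
      rw [hInter] at hseq
      simp only [Measure.restrict_empty, integral_zero_measure] at hseq
      exact (hseq.eventually (eventually_lt_nhds hε')).exists
    have hmem : Ioo (0:ℝ) (1/(n+1)) ∈ 𝓝[>] (0:ℝ) :=
      Ioo_mem_nhdsGT_of_mem ⟨le_refl _, by positivity⟩
    filter_upwards [hmem] with t ht
    have h1 : ∫ r in Ioc (0:ℝ) t, ‖H r‖ ≤ ∫ r in Ioc (0:ℝ) (1/(n+1)), ‖H r‖ := by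
      refine setIntegral_mono_set (hnorm_int.mono_set (Ioc_subset_Ioc_right (hu_le n)))
        (ae_of_all _ fun r => norm_nonneg _) ?_
      exact HasSubset.Subset.eventuallyLE (Ioc_subset_Ioc_right ht.2.le)
    have h2 : (0:ℝ) ≤ ∫ r in Ioc (0:ℝ) t, ‖H r‖ :=
      setIntegral_nonneg measurableSet_Ioc fun r _ => norm_nonneg _
    rw [Real.norm_eq_abs, abs_of_nonneg h2]
    exact lt_of_le_of_lt h1 hn
  have hsmall : Tendsto (fun t => ∫ r in Ioc (0:ℝ) t, H r) (𝓝[>] (0:ℝ)) (𝓝 0) := by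
    refine squeeze_zero_norm' (Eventually.of_forall fun t => ?_) hψ0
    exact norm_integral_le_integral_norm _
  have hsplit : ∀ᶠ t in 𝓝[>] (0:ℝ),
      G 1 - (∫ r in Ioc (0:ℝ) 1, H r) + ∫ r in Ioc (0:ℝ) t, H r = G t := by
    filter_upwards [Ioo_mem_nhdsGT_of_mem
      (⟨le_refl (0:ℝ), zero_lt_one⟩ : (0:ℝ) ∈ Ico (0:ℝ) 1)] with t ht
    have hftc := ftc_Ioc G H hd hHc ht.1 ht.2.le
    have hdecomp : ∫ r in Ioc (0:ℝ) 1, H r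
        = (∫ r in Ioc (0:ℝ) t, H r) + ∫ r in Ioc t 1, H r := by
      rw [← Ioc_union_Ioc_eq_Ioc ht.1.le ht.2.le]
      exact setIntegral_union (Ioc_disjoint_Ioc_of_le le_rfl) measurableSet_Ioc
        (hHi.mono_set (Ioc_subset_Ioc_right ht.2.le))
        (hHi.mono_set (Ioc_subset_Ioc_left ht.1.le))
    linarith
  have h := (tendsto_const_nhds (x := G 1 - ∫ r in Ioc (0:ℝ) 1, H r)
    (f := 𝓝[>] (0:ℝ))).add hsmall
  rw [add_zero] at h
  exact h.congr' hsplit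

set_option maxHeartbeats 2000000 in
/-- Pohozaev-type identities (Lemma 3.3, identities (3.3)) for a decaying solution
`Q` of the radial elliptic equation
`Q'' + ((d-1)/r) Q' - (a/r²) Q - Q + |Q|^{p-1} Q = 0` on `(0,∞)`. -/
theorem pohozaev_identities (d : ℕ) (hd : 3 ≤ d) (a p : ℝ)
    (ha : -((((d : ℝ) - 2) / 2) ^ 2) < a) (hp : 1 < p)
    (Q : ℝ → ℝ) (hQ : ContDiffOn ℝ 2 Q (Ioi 0))
    (heq : ∀ r : ℝ, 0 < r →
      deriv (deriv Q) r + (((d : ℝ) - 1) / r) * deriv Q r - (a / r ^ 2) * Q r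
        - Q r + |Q r| ^ (p - 1) * Q r = 0)
    (C δ ε : ℝ) (hC : 0 < C) (hδ : 0 < δ) (hε : 0 < ε)
    (hdecay : ∀ r : ℝ, 1 ≤ r → |Q r| + |deriv Q r| ≤ C * Real.exp (-δ * r))
    (hzero₁ : ∀ r : ℝ, 0 < r → r ≤ 1 → |Q r| ≤ C * r ^ (1 - (d : ℝ) / 2 + ε))
    (hzero₂ : ∀ r : ℝ, 0 < r → r ≤ 1 → |deriv Q r| ≤ C * r ^ (-(d : ℝ) / 2 + ε)) :
    (∫ r in Ioi (0 : ℝ), Q r ^ 2 * r ^ ((d : ℝ) - 1)) =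
        (((d : ℝ) + 2 - ((d : ℝ) - 2) * p) / (2 * (p + 1))) *
          ∫ r in Ioi (0 : ℝ), |Q r| ^ (p + 1) * r ^ ((d : ℝ) - 1) ∧
      (∫ r in Ioi (0 : ℝ), (deriv Q r ^ 2 + a * Q r ^ 2 / r ^ 2) * r ^ ((d : ℝ) - 1)) =
        ((d : ℝ) * (p - 1) / (2 * (p + 1))) *
          ∫ r in Ioi (0 : ℝ), |Q r| ^ (p + 1) * r ^ ((d : ℝ) - 1) := by
  obtain ⟨e, rfl⟩ : ∃ e, d = e + 3 := ⟨d - 3, by omega⟩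
  have hp1 : (0:ℝ) < p + 1 := by linarith
  have hp1' : (p:ℝ) + 1 ≠ 0 := hp1.ne'
  -- regularity
  have hQ'cd : ContDiffOn ℝ 1 (deriv Q) (Ioi 0) :=
    hQ.deriv_of_isOpen isOpen_Ioi (by norm_num)
  have hdQ : ∀ r : ℝ, 0 < r → HasDerivAt Q (deriv Q r) r := fun r hr =>
    ((hQ.contDiffAt (Ioi_mem_nhds hr)).differentiableAt (by norm_num)).hasDerivAt
  have hdQ' : ∀ r : ℝ, 0 < r → HasDerivAt (deriv Q) (deriv (deriv Q) r) r := fun r hr =>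
    ((hQ'cd.contDiffAt (Ioi_mem_nhds hr)).differentiableAt (by norm_num)).hasDerivAt
  have hQc : ContinuousOn Q (Ioi 0) := hQ.continuousOn
  have hQ'c : ContinuousOn (deriv Q) (Ioi 0) := hQ'cd.continuousOn
  have hQb : ∀ r : ℝ, 1 ≤ r → |Q r| ≤ C * Real.exp (-δ * r) := fun r hr =>
    le_trans (le_add_of_nonneg_right (abs_nonneg _)) (hdecay r hr)
  have hQ'b : ∀ r : ℝ, 1 ≤ r → |deriv Q r| ≤ C * Real.exp (-δ * r) := fun r hr =>
    le_trans (le_add_of_nonneg_left (abs_nonneg _)) (hdecay r hr)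
  have habs : Continuous (fun x : ℝ => |x| ^ (p + 1)) := by
    refine continuous_iff_continuousAt.2 fun x => ?_
    exact (Real.continuousAt_rpow_const _ _ (Or.inr (by linarith))).comp
      continuous_abs.continuousAt
  -- derivative of the nonlinear term
  have hdg : ∀ r : ℝ, 0 < r → HasDerivAt (fun s => |Q s| ^ (p+1))
      ((p+1) * |Q r| ^ (p-1) * Q r * deriv Q r) r := fun r hr => by
    have h := (hasDerivAt_abs_rpow' hp (Q r)).comp r (hdQ r hr)
    exact h.congr_deriv (by ring)
  -- second derivative via the equation
  have hQ2 : ∀ r : ℝ, 0 < r → deriv (deriv Q) r =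
      -(((e:ℝ)+2)/r) * deriv Q r + (a/r^2) * Q r + Q r - |Q r|^(p-1) * Q r := by
    intro r hr
    have h := heq r hr
    push_cast at h
    have hrne : r ≠ 0 := hr.ne'
    field_simp at h ⊢
    linarith
  -- derivative of G1
  have hG1 : ∀ r : ℝ, 0 < r → HasDerivAt (fun s => deriv Q s * Q s * s ^ (e+2))
      (deriv Q r ^ 2 * r ^ (e+2) + a * (Q r ^ 2 * r ^ e) + Q r ^ 2 * r ^ (e+2)
        - |Q r| ^ (p+1) * r ^ (e+2)) r := by
    intro r hr
    have hrne : r ≠ 0 := hr.ne'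
    have h := ((hdQ' r hr).mul (hdQ r hr)).mul (hasDerivAt_pow (e+2) r)
    refine h.congr_deriv (Eq.symm ?_)
    simp only [Pi.mul_apply, Pi.pow_apply]
    rw [hQ2 r hr, ← abs_rpow_mul_self' hp (Q r)]
    push_cast
    field_simp
    ring
  -- derivative of G2 (rescaled by 2(p+1) to clear denominators)
  have hG2 : ∀ r : ℝ, 0 < r → HasDerivAt (fun s =>
        (p+1) * (deriv Q s ^ 2 * s ^ (e+3)) - a*(p+1) * (Q s ^ 2 * s ^ (e+1))
          - (p+1) * (Q s ^ 2 * s ^ (e+3)) + 2 * (|Q s| ^ (p+1) * s ^ (e+3)))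
      ((-((p+1)*((e:ℝ)+1))) * (deriv Q r ^ 2 * r ^ (e+2))
        - a*(p+1)*((e:ℝ)+1) * (Q r ^ 2 * r ^ e)
        - (p+1)*((e:ℝ)+3) * (Q r ^ 2 * r ^ (e+2))
        + 2*((e:ℝ)+3) * (|Q r| ^ (p+1) * r ^ (e+2))) r := by
    intro r hr
    have hrne : r ≠ 0 := hr.ne'
    have hA := (((hdQ' r hr).pow 2).mul (hasDerivAt_pow (e+3) r)).const_mul (p+1)
    have hB := (((hdQ r hr).pow 2).mul (hasDerivAt_pow (e+1) r)).const_mul (a*(p+1))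
    have hC' := (((hdQ r hr).pow 2).mul (hasDerivAt_pow (e+3) r)).const_mul (p+1)
    have hD := ((hdg r hr).mul (hasDerivAt_pow (e+3) r)).const_mul 2
    have h := ((hA.sub hB).sub hC').add hD
    refine h.congr_deriv (Eq.symm ?_)
    simp only [Pi.mul_apply, Pi.pow_apply]
    rw [hQ2 r hr, ← abs_rpow_mul_self' hp (Q r)]
    push_cast
    field_simp
    ring
  -- continuity of the four basic integrands
  have hF1c : ContinuousOn (fun r : ℝ => deriv Q r ^ 2 * r ^ (e+2)) (Ioi 0) :=
    (hQ'c.pow 2).mul (continuous_pow (e+2)).continuousOn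
  have hF2c : ContinuousOn (fun r : ℝ => Q r ^ 2 * r ^ e) (Ioi 0) :=
    (hQc.pow 2).mul (continuous_pow e).continuousOn
  have hF3c : ContinuousOn (fun r : ℝ => Q r ^ 2 * r ^ (e+2)) (Ioi 0) :=
    (hQc.pow 2).mul (continuous_pow (e+2)).continuousOn
  have hF4c : ContinuousOn (fun r : ℝ => |Q r| ^ (p+1) * r ^ (e+2)) (Ioi 0) :=
    (habs.comp_continuousOn hQc).mul (continuous_pow (e+2)).continuousOn
  -- integrability on (1, ∞)
  have master : ∀ (f : ℝ → ℝ) (k : ℕ) (b C' : ℝ), 0 < b → ContinuousOn f (Ioi 0) →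
      (∀ r : ℝ, 1 ≤ r → ‖f r‖ ≤ C' * (r ^ k * Real.exp (-b * r))) →
      IntegrableOn f (Ioi 1) := by
    intro f k b C' hb hfc hbd
    refine Integrable.mono' ((integrableOn_pow_mul_exp k hb).const_mul C')
      ((hfc.mono (Ioi_subset_Ioi zero_le_one)).aestronglyMeasurable measurableSet_Ioi) ?_
    refine (ae_restrict_iff' measurableSet_Ioi).2 (ae_of_all _ fun r hr => ?_)
    exact hbd r (le_of_lt hr)
  have sqexp : ∀ (u r : ℝ), |u| ≤ C * Real.exp (-δ*r) →
      u^2 ≤ C^2 * Real.exp (-(2*δ)*r) := by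
    intro u r h
    calc u^2 = |u|^2 := (sq_abs u).symm
      _ ≤ (C * Real.exp (-δ*r))^2 := pow_le_pow_left₀ (abs_nonneg u) h 2
      _ = C^2 * Real.exp (-(2*δ)*r) := by rw [mul_pow, sq (Real.exp _), ← Real.exp_add]; ring_nf
  have rpexp : ∀ r : ℝ, 1 ≤ r → |Q r| ^ (p+1) ≤ C^(p+1) * Real.exp (-(δ*(p+1))*r) := by
    intro r hr
    calc |Q r| ^ (p+1) ≤ (C * Real.exp (-δ*r)) ^ (p+1) :=
          Real.rpow_le_rpow (abs_nonneg _) (hQb r hr) (by linarith)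
      _ = C^(p+1) * Real.exp (-(δ*(p+1))*r) := by
          rw [Real.mul_rpow hC.le (Real.exp_pos _).le, ← Real.exp_mul]
          congr 2; ring
  have hF1i1 : IntegrableOn (fun r : ℝ => deriv Q r ^ 2 * r ^ (e+2)) (Ioi 1) := by
    refine master _ (e+2) (2*δ) (C^2) (by positivity) hF1c fun r hr => ?_
    have h1 : (0:ℝ) < r := lt_of_lt_of_le one_pos hr
    rw [Real.norm_eq_abs, abs_of_nonneg (by positivity)]
    calc deriv Q r ^ 2 * r ^ (e+2)
        ≤ (C^2 * Real.exp (-(2*δ)*r)) * r ^ (e+2) :=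
          mul_le_mul_of_nonneg_right (sqexp _ _ (hQ'b r hr)) (by positivity)
      _ = C^2 * (r ^ (e+2) * Real.exp (-(2*δ)*r)) := by ring
  have hF2i1 : IntegrableOn (fun r : ℝ => Q r ^ 2 * r ^ e) (Ioi 1) := by
    refine master _ e (2*δ) (C^2) (by positivity) hF2c fun r hr => ?_
    have h1 : (0:ℝ) < r := lt_of_lt_of_le one_pos hr
    rw [Real.norm_eq_abs, abs_of_nonneg (by positivity)]
    calc Q r ^ 2 * r ^ e
        ≤ (C^2 * Real.exp (-(2*δ)*r)) * r ^ e :=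
          mul_le_mul_of_nonneg_right (sqexp _ _ (hQb r hr)) (by positivity)
      _ = C^2 * (r ^ e * Real.exp (-(2*δ)*r)) := by ring
  have hF3i1 : IntegrableOn (fun r : ℝ => Q r ^ 2 * r ^ (e+2)) (Ioi 1) := by
    refine master _ (e+2) (2*δ) (C^2) (by positivity) hF3c fun r hr => ?_
    have h1 : (0:ℝ) < r := lt_of_lt_of_le one_pos hr
    rw [Real.norm_eq_abs, abs_of_nonneg (by positivity)]
    calc Q r ^ 2 * r ^ (e+2)
        ≤ (C^2 * Real.exp (-(2*δ)*r)) * r ^ (e+2) :=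
          mul_le_mul_of_nonneg_right (sqexp _ _ (hQb r hr)) (by positivity)
      _ = C^2 * (r ^ (e+2) * Real.exp (-(2*δ)*r)) := by ring
  have hF4i1 : IntegrableOn (fun r : ℝ => |Q r| ^ (p+1) * r ^ (e+2)) (Ioi 1) := by
    refine master _ (e+2) (δ*(p+1)) (C^(p+1)) (by positivity) hF4c fun r hr => ?_
    have h1 : (0:ℝ) < r := lt_of_lt_of_le one_pos hr
    have hnn : (0:ℝ) ≤ |Q r| ^ (p+1) := Real.rpow_nonneg (abs_nonneg _) _
    rw [Real.norm_eq_abs, abs_of_nonneg (by positivity)]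
    calc |Q r| ^ (p+1) * r ^ (e+2)
        ≤ (C^(p+1) * Real.exp (-(δ*(p+1))*r)) * r ^ (e+2) :=
          mul_le_mul_of_nonneg_right (rpexp r hr) (by positivity)
      _ = C^(p+1) * (r ^ (e+2) * Real.exp (-(δ*(p+1))*r)) := by ring
  -- integrability on (0, 1] for F1 F2 F3
  have base : IntegrableOn (fun r : ℝ => r ^ (2*ε-1)) (Ioc (0:ℝ) 1) := by
    have h := intervalIntegral.intervalIntegrable_rpow' (a := (0:ℝ)) (b := 1) (by linarith : (-1:ℝ) < 2*ε-1)
    rwa [intervalIntegrable_iff_integrableOn_Ioc_of_le zero_le_one] at h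
  have master0 : ∀ (f : ℝ → ℝ), ContinuousOn f (Ioi 0) →
      (∀ r : ℝ, 0 < r → r ≤ 1 → ‖f r‖ ≤ C^2 * r ^ (2*ε-1)) →
      IntegrableOn f (Ioc (0:ℝ) 1) := by
    intro f hfc hbd
    refine Integrable.mono' (base.const_mul (C^2))
      ((hfc.mono Ioc_subset_Ioi_self).aestronglyMeasurable measurableSet_Ioc) ?_
    refine (ae_restrict_iff' measurableSet_Ioc).2 (ae_of_all _ fun r hr => ?_)
    exact hbd r hr.1 hr.2
  have sqbound : ∀ (u α : ℝ) (k : ℕ) (r : ℝ), 0 < r → |u| ≤ C * r ^ α →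
      2*α + (k:ℝ) = 2*ε - 1 → u ^ 2 * r ^ k ≤ C ^ 2 * r ^ (2*ε - 1) := by
    intro u α k r hr hu hk
    have h1 : u^2 ≤ (C * r^α)^2 := by
      rw [← sq_abs u]; exact pow_le_pow_left₀ (abs_nonneg u) hu 2
    have h2 : u^2 * r^k ≤ (C * r^α)^2 * r^k :=
      mul_le_mul_of_nonneg_right h1 (pow_nonneg hr.le k)
    refine h2.trans_eq ?_
    rw [mul_pow, mul_assoc]
    congr 1
    rw [← Real.rpow_natCast (r^α) 2, ← Real.rpow_mul hr.le, ← Real.rpow_natCast r k,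
      ← Real.rpow_add hr, ← hk]
    norm_num
    ring_nf
  have hF1i0 : IntegrableOn (fun r : ℝ => deriv Q r ^ 2 * r ^ (e+2)) (Ioc (0:ℝ) 1) := by
    refine master0 _ hF1c fun r hr hr1 => ?_
    rw [Real.norm_eq_abs, abs_of_nonneg (by positivity)]
    refine sqbound _ _ _ r hr (hzero₂ r hr hr1) ?_
    push_cast; ring
  have hF2i0 : IntegrableOn (fun r : ℝ => Q r ^ 2 * r ^ e) (Ioc (0:ℝ) 1) := by
    refine master0 _ hF2c fun r hr hr1 => ?_
    rw [Real.norm_eq_abs, abs_of_nonneg (by positivity)]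
    refine sqbound _ _ _ r hr (hzero₁ r hr hr1) ?_
    push_cast; ring
  have hF3i0 : IntegrableOn (fun r : ℝ => Q r ^ 2 * r ^ (e+2)) (Ioc (0:ℝ) 1) := by
    refine master0 _ hF3c fun r hr hr1 => ?_
    rw [Real.norm_eq_abs, abs_of_nonneg (by positivity)]
    calc Q r ^ 2 * r ^ (e+2) ≤ Q r ^ 2 * r ^ e := by
          refine mul_le_mul_of_nonneg_left ?_ (sq_nonneg _)
          exact pow_le_pow_of_le_one hr.le hr1 (by omega)
      _ ≤ C ^ 2 * r ^ (2*ε-1) := by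
          refine sqbound _ _ _ r hr (hzero₁ r hr hr1) ?_
          push_cast; ring

  -- gluing
  have glue : ∀ {f : ℝ → ℝ}, IntegrableOn f (Ioc (0:ℝ) 1) → IntegrableOn f (Ioi (1:ℝ)) →
      IntegrableOn f (Ioi (0:ℝ)) := by
    intro f h1 h2
    rw [← Ioc_union_Ioi_eq_Ioi (zero_le_one (α := ℝ))]
    exact h1.union h2
  -- generic decay-to-zero helpers
  have decay_top : ∀ (f : ℝ → ℝ) (k : ℕ) (b C' : ℝ), 0 < b →
      (∀ r : ℝ, 1 ≤ r → ‖f r‖ ≤ C' * (r ^ k * Real.exp (-b * r))) →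
      Tendsto f atTop (𝓝 0) := by
    intro f k b C' hb hbd
    refine squeeze_zero_norm' ((eventually_ge_atTop 1).mono hbd) ?_
    simpa using (tendsto_pow_mul_exp_neg_mul k hb).const_mul C'
  have decay_zero : ∀ (f : ℝ → ℝ) (C' : ℝ),
      (∀ t : ℝ, 0 < t → t ≤ 1 → ‖f t‖ ≤ C' * t ^ (2*ε)) →
      Tendsto f (𝓝[>] (0:ℝ)) (𝓝 0) := by
    intro f C' hbd
    refine squeeze_zero_norm' (a := fun t : ℝ => C' * t ^ (2*ε)) ?_ ?_
    · filter_upwards [Ioo_mem_nhdsGT_of_mem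
        (⟨le_refl (0:ℝ), zero_lt_one⟩ : (0:ℝ) ∈ Ico (0:ℝ) 1)] with t ht
      exact hbd t ht.1 ht.2.le
    · have hc : ContinuousAt (fun x : ℝ => x ^ (2*ε)) 0 :=
        Real.continuousAt_rpow_const _ _ (Or.inr (by positivity))
      have h0 : Tendsto (fun t : ℝ => t ^ (2*ε)) (𝓝[>] (0:ℝ)) (𝓝 0) := by
        have h := hc.tendsto
        rw [Real.zero_rpow (by positivity : 2*ε ≠ 0)] at h
        exact h.mono_left nhdsWithin_le_nhds
      simpa using h0.const_mul C'
  -- product bounds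
  have genprod : ∀ (α β : ℝ) (k : ℕ) (t u v : ℝ), 0 < t → t ≤ 1 → |u| ≤ C * t ^ α →
      |v| ≤ C * t ^ β → 2*ε ≤ α + β + (k:ℝ) → ‖u * v * t ^ k‖ ≤ C^2 * t ^ (2*ε) := by
    intro α β k t u v ht ht1 hu hv hsum
    rw [Real.norm_eq_abs, abs_mul, abs_mul, abs_of_nonneg (pow_nonneg ht.le _)]
    have hm : |u| * |v| ≤ (C * t ^ α) * (C * t ^ β) :=
      mul_le_mul hu hv (abs_nonneg _) (by positivity)
    calc |u| * |v| * t^k ≤ ((C * t ^ α) * (C * t ^ β)) * t^k :=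
          mul_le_mul_of_nonneg_right hm (by positivity)
      _ = C^2 * (t ^ α * t ^ β * t ^ (k:ℝ)) := by rw [Real.rpow_natCast]; ring
      _ = C^2 * t ^ (α + β + (k:ℝ)) := by
          rw [← Real.rpow_add ht, ← Real.rpow_add ht]
      _ ≤ C^2 * t ^ (2*ε) := by
          refine mul_le_mul_of_nonneg_left ?_ (by positivity)
          exact Real.rpow_le_rpow_of_exponent_ge ht ht1 hsum
  have gentop : ∀ (u v : ℝ) (k : ℕ) (r : ℝ), 1 ≤ r → |u| ≤ C * Real.exp (-δ*r) →
      |v| ≤ C * Real.exp (-δ*r) → ‖u * v * r ^ k‖ ≤ C^2 * (r ^ k * Real.exp (-(2*δ)*r)) := by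
    intro u v k r hr hu hv
    have hr0 : (0:ℝ) ≤ r := le_trans zero_le_one hr
    rw [Real.norm_eq_abs, abs_mul, abs_mul, abs_of_nonneg (pow_nonneg hr0 _)]
    have hm : |u| * |v| ≤ (C * Real.exp (-δ*r)) * (C * Real.exp (-δ*r)) :=
      mul_le_mul hu hv (abs_nonneg _) (by positivity)
    have hee : Real.exp (-δ*r) * Real.exp (-δ*r) = Real.exp (-(2*δ)*r) := by
      rw [← Real.exp_add]; ring_nf
    calc |u| * |v| * r^k ≤ ((C * Real.exp (-δ*r)) * (C * Real.exp (-δ*r))) * r^k :=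
          mul_le_mul_of_nonneg_right hm (by positivity)
      _ = C^2 * (r^k * (Real.exp (-δ*r) * Real.exp (-δ*r))) := by ring
      _ = C^2 * (r^k * Real.exp (-(2*δ)*r)) := by rw [hee]
  -- limits of G1
  have prod_bound : ∀ t : ℝ, 0 < t → t ≤ 1 →
      ‖deriv Q t * Q t * t ^ (e+2)‖ ≤ C^2 * t ^ (2*ε) := fun t ht ht1 =>
    genprod _ _ (e+2) t _ _ ht ht1 (hzero₂ t ht ht1) (hzero₁ t ht ht1)
      (by push_cast; linarith)
  have hG1zero : Tendsto (fun r => deriv Q r * Q r * r ^ (e+2)) (𝓝[>] (0:ℝ)) (𝓝 0) :=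
    decay_zero _ (C^2) prod_bound
  have hG1top : Tendsto (fun r => deriv Q r * Q r * r ^ (e+2)) atTop (𝓝 0) :=
    decay_top _ (e+2) (2*δ) (C^2) (by positivity)
      (fun r hr => gentop _ _ _ r hr (hQ'b r hr) (hQb r hr))
  -- integrability on compact pieces
  have hIocInt : ∀ (f : ℝ → ℝ), ContinuousOn f (Ioi 0) → ∀ t : ℝ, 0 < t →
      IntegrableOn f (Ioc t 1) := by
    intro f hf t ht
    rcases le_or_gt t 1 with h | h
    · have hsub : Icc t 1 ⊆ Ioi 0 := fun x hx => lt_of_lt_of_le ht hx.1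
      exact ((hf.mono hsub).integrableOn_Icc).mono_set Ioc_subset_Icc_self
    · rw [Ioc_eq_empty (by linarith)]
      exact integrableOn_empty
  have hHc : ContinuousOn (fun r : ℝ => deriv Q r ^ 2 * r ^ (e+2) + a * (Q r ^ 2 * r ^ e)
      + Q r ^ 2 * r ^ (e+2) - |Q r| ^ (p+1) * r ^ (e+2)) (Ioi 0) :=
    ((hF1c.add (continuousOn_const.mul hF2c)).add hF3c).sub hF4c
  -- nonnegativity of integrals on Ioc 0 1
  have hpos1 : (0:ℝ→ℝ) ≤ᵐ[volume.restrict (Ioc (0:ℝ) 1)] fun r => deriv Q r ^ 2 * r ^ (e+2) :=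
    (ae_restrict_iff' measurableSet_Ioc).2 (ae_of_all _ fun r hr => by
      simp only [Pi.zero_apply]; exact mul_nonneg (sq_nonneg _) (pow_nonneg hr.1.le _))
  have hpos2 : (0:ℝ→ℝ) ≤ᵐ[volume.restrict (Ioc (0:ℝ) 1)] fun r => Q r ^ 2 * r ^ e :=
    (ae_restrict_iff' measurableSet_Ioc).2 (ae_of_all _ fun r hr => by
      simp only [Pi.zero_apply]; exact mul_nonneg (sq_nonneg _) (pow_nonneg hr.1.le _))
  have hpos3 : (0:ℝ→ℝ) ≤ᵐ[volume.restrict (Ioc (0:ℝ) 1)] fun r => Q r ^ 2 * r ^ (e+2) :=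
    (ae_restrict_iff' measurableSet_Ioc).2 (ae_of_all _ fun r hr => by
      simp only [Pi.zero_apply]; exact mul_nonneg (sq_nonneg _) (pow_nonneg hr.1.le _))
  -- integrability of the nonlinear term on (0,1]
  have hF4i0 : IntegrableOn (fun r : ℝ => |Q r| ^ (p+1) * r ^ (e+2)) (Ioc (0:ℝ) 1) := by
    apply integrableOn_Ioc_of_intervalIntegral_norm_bounded_left
      (I := (∫ r in Ioc (0:ℝ) 1, deriv Q r ^ 2 * r ^ (e+2))
        + |a| * (∫ r in Ioc (0:ℝ) 1, Q r ^ 2 * r ^ e)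
        + (∫ r in Ioc (0:ℝ) 1, Q r ^ 2 * r ^ (e+2))
        + C^2 + |deriv Q 1 * Q 1 * (1:ℝ) ^ (e+2)|)
      (fun n : ℕ => hIocInt _ hF4c _ (by positivity))
      tendsto_one_div_add_atTop_nhds_zero_nat
    refine Eventually.of_forall fun n => ?_
    have ht : (0:ℝ) < 1/(n+1) := by positivity
    have ht1 : (1:ℝ)/(n+1) ≤ 1 := by
      rw [div_le_one (by positivity)]
      have : (0:ℝ) ≤ n := Nat.cast_nonneg n
      linarith
    set t : ℝ := 1/(n+1) with htdef
    have hnn : ∫ r in Ioc t 1, ‖|Q r| ^ (p+1) * r ^ (e+2)‖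
        = ∫ r in Ioc t 1, |Q r| ^ (p+1) * r ^ (e+2) := by
      refine setIntegral_congr_fun measurableSet_Ioc fun r hr => ?_
      have hr0 : (0:ℝ) < r := lt_of_lt_of_le ht hr.1.le
      have hnn0 : (0:ℝ) ≤ |Q r| ^ (p+1) := Real.rpow_nonneg (abs_nonneg _) _
      rw [Real.norm_eq_abs, abs_of_nonneg (by positivity)]
    have hftc := ftc_Ioc _ _ hG1 hHc ht ht1
    have hint1 := hIocInt _ hF1c _ ht
    have hint2 := hIocInt _ hF2c _ ht
    have hint3 := hIocInt _ hF3c _ ht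
    have hint4 := hIocInt _ hF4c _ ht
    have hexpand : ∫ r in Ioc t 1, (deriv Q r ^ 2 * r ^ (e+2) + a * (Q r ^ 2 * r ^ e)
          + Q r ^ 2 * r ^ (e+2) - |Q r| ^ (p+1) * r ^ (e+2))
        = (∫ r in Ioc t 1, deriv Q r ^ 2 * r ^ (e+2))
          + a * (∫ r in Ioc t 1, Q r ^ 2 * r ^ e)
          + (∫ r in Ioc t 1, Q r ^ 2 * r ^ (e+2))
          - ∫ r in Ioc t 1, |Q r| ^ (p+1) * r ^ (e+2) := by
      have e4 : (∫ r in Ioc t 1, ((deriv Q r ^ 2 * r ^ (e+2) + a * (Q r ^ 2 * r ^ e)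
            + Q r ^ 2 * r ^ (e+2)) - |Q r| ^ (p+1) * r ^ (e+2)))
          = (∫ r in Ioc t 1, (deriv Q r ^ 2 * r ^ (e+2) + a * (Q r ^ 2 * r ^ e)
            + Q r ^ 2 * r ^ (e+2))) - ∫ r in Ioc t 1, |Q r| ^ (p+1) * r ^ (e+2) :=
        integral_sub ((hint1.add (hint2.const_mul a)).add hint3) hint4
      have e3 : (∫ r in Ioc t 1, (deriv Q r ^ 2 * r ^ (e+2) + a * (Q r ^ 2 * r ^ e)
            + Q r ^ 2 * r ^ (e+2)))
          = (∫ r in Ioc t 1, (deriv Q r ^ 2 * r ^ (e+2) + a * (Q r ^ 2 * r ^ e)))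
            + ∫ r in Ioc t 1, Q r ^ 2 * r ^ (e+2) :=
        integral_add (hint1.add (hint2.const_mul a)) hint3
      have e1 : (∫ r in Ioc t 1, (deriv Q r ^ 2 * r ^ (e+2) + a * (Q r ^ 2 * r ^ e)))
          = (∫ r in Ioc t 1, deriv Q r ^ 2 * r ^ (e+2))
            + ∫ r in Ioc t 1, a * (Q r ^ 2 * r ^ e) :=
        integral_add hint1 (hint2.const_mul a)
      have e2 : (∫ r in Ioc t 1, a * (Q r ^ 2 * r ^ e))
          = a * ∫ r in Ioc t 1, Q r ^ 2 * r ^ e := integral_const_mul a _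
      rw [e4, e3, e1, e2]
    have hb1 : (∫ r in Ioc t 1, deriv Q r ^ 2 * r ^ (e+2))
        ≤ ∫ r in Ioc (0:ℝ) 1, deriv Q r ^ 2 * r ^ (e+2) :=
      setIntegral_mono_set hF1i0 hpos1 (HasSubset.Subset.eventuallyLE (Ioc_subset_Ioc_left ht.le))
    have hb2 : (∫ r in Ioc t 1, Q r ^ 2 * r ^ e)
        ≤ ∫ r in Ioc (0:ℝ) 1, Q r ^ 2 * r ^ e :=
      setIntegral_mono_set hF2i0 hpos2 (HasSubset.Subset.eventuallyLE (Ioc_subset_Ioc_left ht.le))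
    have hb3 : (∫ r in Ioc t 1, Q r ^ 2 * r ^ (e+2))
        ≤ ∫ r in Ioc (0:ℝ) 1, Q r ^ 2 * r ^ (e+2) :=
      setIntegral_mono_set hF3i0 hpos3 (HasSubset.Subset.eventuallyLE (Ioc_subset_Ioc_left ht.le))
    have hb2' : a * (∫ r in Ioc t 1, Q r ^ 2 * r ^ e)
        ≤ |a| * ∫ r in Ioc (0:ℝ) 1, Q r ^ 2 * r ^ e := by
      have hXnn : (0:ℝ) ≤ ∫ r in Ioc t 1, Q r ^ 2 * r ^ e := by
        refine setIntegral_nonneg measurableSet_Ioc fun r hr => ?_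
        have : (0:ℝ) < r := lt_of_lt_of_le ht hr.1.le
        positivity
      calc a * (∫ r in Ioc t 1, Q r ^ 2 * r ^ e)
          ≤ |a| * (∫ r in Ioc t 1, Q r ^ 2 * r ^ e) :=
            mul_le_mul_of_nonneg_right (le_abs_self a) hXnn
        _ ≤ |a| * ∫ r in Ioc (0:ℝ) 1, Q r ^ 2 * r ^ e :=
            mul_le_mul_of_nonneg_left hb2 (abs_nonneg a)
    have hG1t : |deriv Q t * Q t * t ^ (e+2)| ≤ C^2 := by
      have h1 := prod_bound t ht ht1
      rw [Real.norm_eq_abs] at h1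
      have h2 : t ^ (2*ε) ≤ 1 := Real.rpow_le_one ht.le ht1 (by positivity)
      calc |deriv Q t * Q t * t ^ (e+2)| ≤ C^2 * t ^ (2*ε) := h1
        _ ≤ C^2 := mul_le_of_le_one_right (by positivity) h2
    rw [hnn]
    have key : (∫ r in Ioc t 1, |Q r| ^ (p+1) * r ^ (e+2))
        = (∫ r in Ioc t 1, deriv Q r ^ 2 * r ^ (e+2))
          + a * (∫ r in Ioc t 1, Q r ^ 2 * r ^ e)
          + (∫ r in Ioc t 1, Q r ^ 2 * r ^ (e+2))
          - (deriv Q 1 * Q 1 * (1:ℝ) ^ (e+2) - deriv Q t * Q t * t ^ (e+2)) := by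
      rw [hexpand] at hftc
      linarith
    rw [key]
    have habs1 : deriv Q t * Q t * t ^ (e+2) ≤ C^2 := le_trans (le_abs_self _) hG1t
    linarith [neg_abs_le (deriv Q 1 * Q 1 * (1:ℝ) ^ (e+2))]
  -- global integrability
  have hF1i : IntegrableOn (fun r : ℝ => deriv Q r ^ 2 * r ^ (e+2)) (Ioi (0:ℝ)) :=
    glue hF1i0 hF1i1
  have hF2i : IntegrableOn (fun r : ℝ => Q r ^ 2 * r ^ e) (Ioi (0:ℝ)) := glue hF2i0 hF2i1
  have hF3i : IntegrableOn (fun r : ℝ => Q r ^ 2 * r ^ (e+2)) (Ioi (0:ℝ)) := glue hF3i0 hF3i1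
  have hF4i : IntegrableOn (fun r : ℝ => |Q r| ^ (p+1) * r ^ (e+2)) (Ioi (0:ℝ)) :=
    glue hF4i0 hF4i1
  have hHi : IntegrableOn (fun r : ℝ => deriv Q r ^ 2 * r ^ (e+2) + a * (Q r ^ 2 * r ^ e)
      + Q r ^ 2 * r ^ (e+2) - |Q r| ^ (p+1) * r ^ (e+2)) (Ioi (0:ℝ)) :=
    ((hF1i.add (hF2i.const_mul a)).add hF3i).sub hF4i
  -- first Pohozaev relation
  have eqI : (∫ r in Ioi (0:ℝ), deriv Q r ^ 2 * r ^ (e+2))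
      + a * (∫ r in Ioi (0:ℝ), Q r ^ 2 * r ^ e)
      + (∫ r in Ioi (0:ℝ), Q r ^ 2 * r ^ (e+2))
      - (∫ r in Ioi (0:ℝ), |Q r| ^ (p+1) * r ^ (e+2)) = 0 := by
    have h0 := improper_integral_zero _ _ hG1 hHi hG1zero hG1top
    have e4 : (∫ r in Ioi (0:ℝ), ((deriv Q r ^ 2 * r ^ (e+2) + a * (Q r ^ 2 * r ^ e)
          + Q r ^ 2 * r ^ (e+2)) - |Q r| ^ (p+1) * r ^ (e+2)))
        = (∫ r in Ioi (0:ℝ), (deriv Q r ^ 2 * r ^ (e+2) + a * (Q r ^ 2 * r ^ e)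
          + Q r ^ 2 * r ^ (e+2))) - ∫ r in Ioi (0:ℝ), |Q r| ^ (p+1) * r ^ (e+2) :=
      integral_sub ((hF1i.add (hF2i.const_mul a)).add hF3i) hF4i
    have e3 : (∫ r in Ioi (0:ℝ), (deriv Q r ^ 2 * r ^ (e+2) + a * (Q r ^ 2 * r ^ e)
          + Q r ^ 2 * r ^ (e+2)))
        = (∫ r in Ioi (0:ℝ), (deriv Q r ^ 2 * r ^ (e+2) + a * (Q r ^ 2 * r ^ e)))
          + ∫ r in Ioi (0:ℝ), Q r ^ 2 * r ^ (e+2) :=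
      integral_add (hF1i.add (hF2i.const_mul a)) hF3i
    have e1 : (∫ r in Ioi (0:ℝ), (deriv Q r ^ 2 * r ^ (e+2) + a * (Q r ^ 2 * r ^ e)))
        = (∫ r in Ioi (0:ℝ), deriv Q r ^ 2 * r ^ (e+2))
          + ∫ r in Ioi (0:ℝ), a * (Q r ^ 2 * r ^ e) :=
      integral_add hF1i (hF2i.const_mul a)
    have e2 : (∫ r in Ioi (0:ℝ), a * (Q r ^ 2 * r ^ e))
        = a * ∫ r in Ioi (0:ℝ), Q r ^ 2 * r ^ e := integral_const_mul a _
    rw [e4, e3, e1, e2] at h0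
    linarith

  -- continuity and integrability of H2
  have hH2c : ContinuousOn (fun r : ℝ =>
      (-((p+1)*((e:ℝ)+1))) * (deriv Q r ^ 2 * r ^ (e+2))
        - a*(p+1)*((e:ℝ)+1) * (Q r ^ 2 * r ^ e)
        - (p+1)*((e:ℝ)+3) * (Q r ^ 2 * r ^ (e+2))
        + 2*((e:ℝ)+3) * (|Q r| ^ (p+1) * r ^ (e+2))) (Ioi 0) :=
    (((continuousOn_const.mul hF1c).sub (continuousOn_const.mul hF2c)).sub
      (continuousOn_const.mul hF3c)).add (continuousOn_const.mul hF4c)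
  have hH2i0 : IntegrableOn (fun r : ℝ =>
      (-((p+1)*((e:ℝ)+1))) * (deriv Q r ^ 2 * r ^ (e+2))
        - a*(p+1)*((e:ℝ)+1) * (Q r ^ 2 * r ^ e)
        - (p+1)*((e:ℝ)+3) * (Q r ^ 2 * r ^ (e+2))
        + 2*((e:ℝ)+3) * (|Q r| ^ (p+1) * r ^ (e+2))) (Ioc (0:ℝ) 1) :=
    (((hF1i0.const_mul _).sub (hF2i0.const_mul _)).sub (hF3i0.const_mul _)).add
      (hF4i0.const_mul _)
  have hH2i : IntegrableOn (fun r : ℝ =>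
      (-((p+1)*((e:ℝ)+1))) * (deriv Q r ^ 2 * r ^ (e+2))
        - a*(p+1)*((e:ℝ)+1) * (Q r ^ 2 * r ^ e)
        - (p+1)*((e:ℝ)+3) * (Q r ^ 2 * r ^ (e+2))
        + 2*((e:ℝ)+3) * (|Q r| ^ (p+1) * r ^ (e+2))) (Ioi (0:ℝ)) :=
    (((hF1i.const_mul _).sub (hF2i.const_mul _)).sub (hF3i.const_mul _)).add
      (hF4i.const_mul _)
  -- G2 tends to 0 at infinity
  have hT1top : Tendsto (fun r : ℝ => (p+1) * (deriv Q r ^ 2 * r ^ (e+3))) atTop (𝓝 0) := by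
    refine decay_top _ (e+3) (2*δ) ((p+1)*C^2) (by positivity) fun r hr => ?_
    have hr0 : (0:ℝ) ≤ r := le_trans zero_le_one hr
    rw [Real.norm_eq_abs, abs_of_nonneg (by
      exact mul_nonneg hp1.le (mul_nonneg (sq_nonneg _) (pow_nonneg hr0 _)))]
    calc (p+1) * (deriv Q r ^ 2 * r ^ (e+3))
        ≤ (p+1) * ((C^2 * Real.exp (-(2*δ)*r)) * r ^ (e+3)) := by
          refine mul_le_mul_of_nonneg_left ?_ hp1.le
          exact mul_le_mul_of_nonneg_right (sqexp _ _ (hQ'b r hr)) (pow_nonneg hr0 _)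
      _ = (p+1)*C^2 * (r ^ (e+3) * Real.exp (-(2*δ)*r)) := by ring
  have hT2top : Tendsto (fun r : ℝ => a*(p+1) * (Q r ^ 2 * r ^ (e+1))) atTop (𝓝 0) := by
    refine decay_top _ (e+1) (2*δ) (|a| * (p+1)*C^2) (by positivity) fun r hr => ?_
    have hr0 : (0:ℝ) ≤ r := le_trans zero_le_one hr
    rw [Real.norm_eq_abs, abs_mul]
    rw [abs_of_nonneg (mul_nonneg (sq_nonneg (Q r)) (pow_nonneg hr0 _))]
    have habsa : |a*(p+1)| = |a| * (p+1) := by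
      rw [abs_mul, abs_of_nonneg hp1.le]
    rw [habsa]
    calc |a| * (p+1) * (Q r ^ 2 * r ^ (e+1))
        ≤ |a| * (p+1) * ((C^2 * Real.exp (-(2*δ)*r)) * r ^ (e+1)) := by
          refine mul_le_mul_of_nonneg_left ?_ (by positivity)
          exact mul_le_mul_of_nonneg_right (sqexp _ _ (hQb r hr)) (pow_nonneg hr0 _)
      _ = |a| * (p+1)*C^2 * (r ^ (e+1) * Real.exp (-(2*δ)*r)) := by ring
  have hT3top : Tendsto (fun r : ℝ => (p+1) * (Q r ^ 2 * r ^ (e+3))) atTop (𝓝 0) := by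
    refine decay_top _ (e+3) (2*δ) ((p+1)*C^2) (by positivity) fun r hr => ?_
    have hr0 : (0:ℝ) ≤ r := le_trans zero_le_one hr
    rw [Real.norm_eq_abs, abs_of_nonneg (by
      exact mul_nonneg hp1.le (mul_nonneg (sq_nonneg _) (pow_nonneg hr0 _)))]
    calc (p+1) * (Q r ^ 2 * r ^ (e+3))
        ≤ (p+1) * ((C^2 * Real.exp (-(2*δ)*r)) * r ^ (e+3)) := by
          refine mul_le_mul_of_nonneg_left ?_ hp1.le
          exact mul_le_mul_of_nonneg_right (sqexp _ _ (hQb r hr)) (pow_nonneg hr0 _)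
      _ = (p+1)*C^2 * (r ^ (e+3) * Real.exp (-(2*δ)*r)) := by ring
  have hT4top : Tendsto (fun r : ℝ => 2 * (|Q r| ^ (p+1) * r ^ (e+3))) atTop (𝓝 0) := by
    refine decay_top _ (e+3) (δ*(p+1)) (2*C^(p+1)) (by positivity) fun r hr => ?_
    have hr0 : (0:ℝ) ≤ r := le_trans zero_le_one hr
    have hnn : (0:ℝ) ≤ |Q r| ^ (p+1) := Real.rpow_nonneg (abs_nonneg _) _
    rw [Real.norm_eq_abs, abs_of_nonneg (by
      exact mul_nonneg zero_le_two (mul_nonneg hnn (pow_nonneg hr0 _)))]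
    calc 2 * (|Q r| ^ (p+1) * r ^ (e+3))
        ≤ 2 * ((C^(p+1) * Real.exp (-(δ*(p+1))*r)) * r ^ (e+3)) := by
          refine mul_le_mul_of_nonneg_left ?_ zero_le_two
          exact mul_le_mul_of_nonneg_right (rpexp r hr) (pow_nonneg hr0 _)
      _ = 2*C^(p+1) * (r ^ (e+3) * Real.exp (-(δ*(p+1))*r)) := by ring
  have hG2top : Tendsto (fun s : ℝ =>
      (p+1) * (deriv Q s ^ 2 * s ^ (e+3)) - a*(p+1) * (Q s ^ 2 * s ^ (e+1))
        - (p+1) * (Q s ^ 2 * s ^ (e+3)) + 2 * (|Q s| ^ (p+1) * s ^ (e+3)))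
      atTop (𝓝 0) := by
    have h := ((hT1top.sub hT2top).sub hT3top).add hT4top
    simpa using h
  -- limits of the first three pieces of G2 at 0+
  have hT1z : Tendsto (fun t : ℝ => (p+1) * (deriv Q t ^ 2 * t ^ (e+3)))
      (𝓝[>] (0:ℝ)) (𝓝 0) := by
    refine decay_zero _ ((p+1)*C^2) fun t ht ht1 => ?_
    have hg := genprod _ _ (e+3) t _ _ ht ht1 (hzero₂ t ht ht1) (hzero₂ t ht ht1)
      (by push_cast; linarith)
    rw [Real.norm_eq_abs] at hg ⊢
    calc |(p+1) * (deriv Q t ^ 2 * t ^ (e+3))|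
        = (p+1) * |deriv Q t * deriv Q t * t ^ (e+3)| := by
          rw [abs_mul, abs_of_nonneg hp1.le, sq]
      _ ≤ (p+1) * (C^2 * t ^ (2*ε)) := mul_le_mul_of_nonneg_left hg hp1.le
      _ = (p+1)*C^2 * t ^ (2*ε) := by ring
  have hT2z : Tendsto (fun t : ℝ => a*(p+1) * (Q t ^ 2 * t ^ (e+1)))
      (𝓝[>] (0:ℝ)) (𝓝 0) := by
    refine decay_zero _ (|a| * (p+1)*C^2) fun t ht ht1 => ?_
    have hg := genprod _ _ (e+1) t _ _ ht ht1 (hzero₁ t ht ht1) (hzero₁ t ht ht1)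
      (by push_cast; linarith)
    rw [Real.norm_eq_abs] at hg ⊢
    calc |a*(p+1) * (Q t ^ 2 * t ^ (e+1))|
        = |a| * (p+1) * |Q t * Q t * t ^ (e+1)| := by
          rw [abs_mul, abs_mul, abs_of_nonneg hp1.le, sq]
      _ ≤ |a| * (p+1) * (C^2 * t ^ (2*ε)) :=
          mul_le_mul_of_nonneg_left hg (by positivity)
      _ = |a| * (p+1)*C^2 * t ^ (2*ε) := by ring
  have hT3z : Tendsto (fun t : ℝ => (p+1) * (Q t ^ 2 * t ^ (e+3)))
      (𝓝[>] (0:ℝ)) (𝓝 0) := by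
    refine decay_zero _ ((p+1)*C^2) fun t ht ht1 => ?_
    have hg := genprod _ _ (e+3) t _ _ ht ht1 (hzero₁ t ht ht1) (hzero₁ t ht ht1)
      (by push_cast; linarith)
    rw [Real.norm_eq_abs] at hg ⊢
    calc |(p+1) * (Q t ^ 2 * t ^ (e+3))|
        = (p+1) * |Q t * Q t * t ^ (e+3)| := by
          rw [abs_mul, abs_of_nonneg hp1.le, sq]
      _ ≤ (p+1) * (C^2 * t ^ (2*ε)) := mul_le_mul_of_nonneg_left hg hp1.le
      _ = (p+1)*C^2 * t ^ (2*ε) := by ring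
  -- limit of G2 at 0+
  obtain ⟨L, hG2L⟩ : ∃ L : ℝ, Tendsto (fun s : ℝ =>
      (p+1) * (deriv Q s ^ 2 * s ^ (e+3)) - a*(p+1) * (Q s ^ 2 * s ^ (e+1))
        - (p+1) * (Q s ^ 2 * s ^ (e+3)) + 2 * (|Q s| ^ (p+1) * s ^ (e+3)))
      (𝓝[>] (0:ℝ)) (𝓝 L) :=
    ⟨_, tendsto_G_left _ _ hG2 hH2c hH2i0⟩
  have hT4L : Tendsto (fun t : ℝ => 2 * (|Q t| ^ (p+1) * t ^ (e+3)))
      (𝓝[>] (0:ℝ)) (𝓝 L) := by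
    have h := ((hG2L.sub hT1z).add hT2z).add hT3z
    rw [sub_zero, add_zero, add_zero] at h
    exact h.congr fun t => by ring
  have hL0 : 0 ≤ L := by
    refine ge_of_tendsto hT4L ?_
    filter_upwards [self_mem_nhdsWithin] with t (ht : t ∈ Ioi (0:ℝ))
    have ht0 : (0:ℝ) < t := ht
    have hnn : (0:ℝ) ≤ |Q t| ^ (p+1) := Real.rpow_nonneg (abs_nonneg _) _
    positivity
  have hLzero : L = 0 := by
    rcases hL0.eq_or_lt with h | hL
    · exact h.symm
    exfalso
    have hev : ∀ᶠ t in 𝓝[>] (0:ℝ),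
        L/2 < 2 * (|Q t| ^ (p+1) * t ^ (e+3)) ∧ t ∈ Ioo (0:ℝ) 1 :=
      (hT4L.eventually (lt_mem_nhds (by linarith : L/2 < L))).and
        (by exact Ioo_mem_nhdsGT_of_mem ⟨le_refl _, zero_lt_one⟩)
    obtain ⟨c, hc, hsub⟩ := mem_nhdsGT_iff_exists_Ioo_subset.1 hev
    have hc'0 : (0:ℝ) < min c 1 := lt_min hc zero_lt_one
    have hc'1 : min c 1 ≤ 1 := min_le_right _ _
    have hsub' : Ioo (0:ℝ) (min c 1) ⊆
        {t : ℝ | L/2 < 2 * (|Q t| ^ (p+1) * t ^ (e+3)) ∧ t ∈ Ioo (0:ℝ) 1} :=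
      fun x hx => hsub ⟨hx.1, lt_of_lt_of_le hx.2 (min_le_left _ _)⟩
    have hIoo : IntegrableOn (fun t : ℝ => |Q t| ^ (p+1) * t ^ (e+2))
        (Ioo (0:ℝ) (min c 1)) :=
      hF4i0.mono_set (fun x hx => ⟨hx.1, le_trans hx.2.le hc'1⟩)
    have hinv : IntegrableOn (fun t : ℝ => t ^ (-1:ℝ)) (Ioo (0:ℝ) (min c 1)) := by
      refine Integrable.mono' (hIoo.const_mul (4/L)) ?_ ?_
      · refine (ContinuousOn.aestronglyMeasurable ?_ measurableSet_Ioo)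
        exact fun x hx => (Real.continuousAt_rpow_const x (-1) (Or.inl (ne_of_gt hx.1))).continuousWithinAt
      · refine (ae_restrict_iff' measurableSet_Ioo).2 (ae_of_all _ fun t htIoo => ?_)
        obtain ⟨hts, _⟩ := hsub' htIoo
        have ht0 : (0:ℝ) < t := htIoo.1
        have hnn : (0:ℝ) ≤ |Q t| ^ (p+1) := Real.rpow_nonneg (abs_nonneg _) _
        rw [Real.norm_eq_abs, Real.rpow_neg_one, abs_of_nonneg (inv_nonneg.2 ht0.le)]
        rw [inv_eq_one_div, div_le_iff₀ ht0]
        have h1 : L/4 < |Q t| ^ (p+1) * t ^ (e+2) * t := by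
          have h2 : |Q t| ^ (p+1) * t ^ (e+3) = |Q t| ^ (p+1) * t ^ (e+2) * t := by ring
          rw [h2] at hts
          linarith
        calc (1:ℝ) = (4/L) * (L/4) := by field_simp
          _ ≤ (4/L) * (|Q t| ^ (p+1) * t ^ (e+2) * t) := by
              refine mul_le_mul_of_nonneg_left h1.le (by positivity)
          _ = 4/L * (|Q t| ^ (p+1) * t ^ (e+2)) * t := by ring
    have hcontra := (intervalIntegral.integrableOn_Ioo_rpow_iff hc'0).1 hinv
    linarith
  have hG2zero : Tendsto (fun s : ℝ =>
      (p+1) * (deriv Q s ^ 2 * s ^ (e+3)) - a*(p+1) * (Q s ^ 2 * s ^ (e+1))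
        - (p+1) * (Q s ^ 2 * s ^ (e+3)) + 2 * (|Q s| ^ (p+1) * s ^ (e+3)))
      (𝓝[>] (0:ℝ)) (𝓝 0) := hLzero ▸ hG2L
  -- second Pohozaev relation
  have eqII : (-((p+1)*((e:ℝ)+1))) * (∫ r in Ioi (0:ℝ), deriv Q r ^ 2 * r ^ (e+2))
      - a*(p+1)*((e:ℝ)+1) * (∫ r in Ioi (0:ℝ), Q r ^ 2 * r ^ e)
      - (p+1)*((e:ℝ)+3) * (∫ r in Ioi (0:ℝ), Q r ^ 2 * r ^ (e+2))
      + 2*((e:ℝ)+3) * (∫ r in Ioi (0:ℝ), |Q r| ^ (p+1) * r ^ (e+2)) = 0 := by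
    have h0 := improper_integral_zero _ _ hG2 hH2i hG2zero hG2top
    have f1 : (∫ r in Ioi (0:ℝ), (((-((p+1)*((e:ℝ)+1))) * (deriv Q r ^ 2 * r ^ (e+2))
          - a*(p+1)*((e:ℝ)+1) * (Q r ^ 2 * r ^ e)
          - (p+1)*((e:ℝ)+3) * (Q r ^ 2 * r ^ (e+2)))
          + 2*((e:ℝ)+3) * (|Q r| ^ (p+1) * r ^ (e+2))))
        = (∫ r in Ioi (0:ℝ), ((-((p+1)*((e:ℝ)+1))) * (deriv Q r ^ 2 * r ^ (e+2))
          - a*(p+1)*((e:ℝ)+1) * (Q r ^ 2 * r ^ e)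
          - (p+1)*((e:ℝ)+3) * (Q r ^ 2 * r ^ (e+2))))
          + ∫ r in Ioi (0:ℝ), 2*((e:ℝ)+3) * (|Q r| ^ (p+1) * r ^ (e+2)) :=
      integral_add (((hF1i.const_mul _).sub (hF2i.const_mul _)).sub (hF3i.const_mul _))
        (hF4i.const_mul _)
    have f2 : (∫ r in Ioi (0:ℝ), ((-((p+1)*((e:ℝ)+1))) * (deriv Q r ^ 2 * r ^ (e+2))
          - a*(p+1)*((e:ℝ)+1) * (Q r ^ 2 * r ^ e)
          - (p+1)*((e:ℝ)+3) * (Q r ^ 2 * r ^ (e+2))))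
        = (∫ r in Ioi (0:ℝ), ((-((p+1)*((e:ℝ)+1))) * (deriv Q r ^ 2 * r ^ (e+2))
          - a*(p+1)*((e:ℝ)+1) * (Q r ^ 2 * r ^ e)))
          - ∫ r in Ioi (0:ℝ), (p+1)*((e:ℝ)+3) * (Q r ^ 2 * r ^ (e+2)) :=
      integral_sub ((hF1i.const_mul _).sub (hF2i.const_mul _)) (hF3i.const_mul _)
    have f3 : (∫ r in Ioi (0:ℝ), ((-((p+1)*((e:ℝ)+1))) * (deriv Q r ^ 2 * r ^ (e+2))
          - a*(p+1)*((e:ℝ)+1) * (Q r ^ 2 * r ^ e)))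
        = (∫ r in Ioi (0:ℝ), (-((p+1)*((e:ℝ)+1))) * (deriv Q r ^ 2 * r ^ (e+2)))
          - ∫ r in Ioi (0:ℝ), a*(p+1)*((e:ℝ)+1) * (Q r ^ 2 * r ^ e) :=
      integral_sub (hF1i.const_mul _) (hF2i.const_mul _)
    have g1 : (∫ r in Ioi (0:ℝ), (-((p+1)*((e:ℝ)+1))) * (deriv Q r ^ 2 * r ^ (e+2)))
        = (-((p+1)*((e:ℝ)+1))) * ∫ r in Ioi (0:ℝ), deriv Q r ^ 2 * r ^ (e+2) :=
      integral_const_mul _ _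
    have g2 : (∫ r in Ioi (0:ℝ), a*(p+1)*((e:ℝ)+1) * (Q r ^ 2 * r ^ e))
        = a*(p+1)*((e:ℝ)+1) * ∫ r in Ioi (0:ℝ), Q r ^ 2 * r ^ e :=
      integral_const_mul _ _
    have g3 : (∫ r in Ioi (0:ℝ), (p+1)*((e:ℝ)+3) * (Q r ^ 2 * r ^ (e+2)))
        = (p+1)*((e:ℝ)+3) * ∫ r in Ioi (0:ℝ), Q r ^ 2 * r ^ (e+2) :=
      integral_const_mul _ _
    have g4 : (∫ r in Ioi (0:ℝ), 2*((e:ℝ)+3) * (|Q r| ^ (p+1) * r ^ (e+2)))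
        = 2*((e:ℝ)+3) * ∫ r in Ioi (0:ℝ), |Q r| ^ (p+1) * r ^ (e+2) :=
      integral_const_mul _ _
    rw [f1, f2, f3, g1, g2, g3, g4] at h0
    linarith
  -- convert the goal integrals
  have hcast : ((e+3:ℕ):ℝ) - 1 = ((e+2:ℕ):ℝ) := by push_cast; ring
  have hconv1 : (∫ r in Ioi (0:ℝ), Q r ^ 2 * r ^ (((e+3:ℕ):ℝ) - 1))
      = ∫ r in Ioi (0:ℝ), Q r ^ 2 * r ^ (e+2) := by
    refine setIntegral_congr_fun measurableSet_Ioi fun r hr => ?_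
    rw [hcast, Real.rpow_natCast]
  have hconv4 : (∫ r in Ioi (0:ℝ), |Q r| ^ (p+1) * r ^ (((e+3:ℕ):ℝ) - 1))
      = ∫ r in Ioi (0:ℝ), |Q r| ^ (p+1) * r ^ (e+2) := by
    refine setIntegral_congr_fun measurableSet_Ioi fun r hr => ?_
    rw [hcast, Real.rpow_natCast]
  have hconv2 : (∫ r in Ioi (0:ℝ), (deriv Q r ^ 2 + a * Q r ^ 2 / r ^ 2) * r ^ (((e+3:ℕ):ℝ) - 1))
      = ∫ r in Ioi (0:ℝ), (deriv Q r ^ 2 * r ^ (e+2) + a * (Q r ^ 2 * r ^ e)) := by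
    refine setIntegral_congr_fun measurableSet_Ioi fun r hr => ?_
    have hr0 : (0:ℝ) < r := hr
    have hrne : r ≠ 0 := hr0.ne'
    rw [hcast, Real.rpow_natCast]
    field_simp
    ring
  have hsum12 : (∫ r in Ioi (0:ℝ), (deriv Q r ^ 2 * r ^ (e+2) + a * (Q r ^ 2 * r ^ e)))
      = (∫ r in Ioi (0:ℝ), deriv Q r ^ 2 * r ^ (e+2))
        + a * ∫ r in Ioi (0:ℝ), Q r ^ 2 * r ^ e := by
    rw [integral_add hF1i (hF2i.const_mul a)]
    congr 1
    exact integral_const_mul _ _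
  constructor
  · rw [hconv1, hconv4]
    rw [div_mul_eq_mul_div, eq_div_iff (by positivity : (2:ℝ)*(p+1) ≠ 0)]
    push_cast
    linear_combination (-((p+1)*((e:ℝ)+1))) * eqI - eqII
  · rw [hconv2, hconv4, hsum12]
    rw [div_mul_eq_mul_div, eq_div_iff (by positivity : (2:ℝ)*(p+1) ≠ 0)]
    push_cast
    linear_combination ((p+1)*((e:ℝ)+3)) * eqI + eqII
end

section
/- Let d ≥ 3 and a ≥ 0, and set ν = √(((d-2)/2)² + a). Then there exists a constant C = C(d,a) > 0 such that for every t > 0, every measurable F : (0,∞) → ℂ with ∫₀^∞ |F(s)| s^{d-1} ds < ∞, and every r > 0, one has | (1/(2t)) ∫₀^∞ F(s) s^{d-1} (rs)^{-(d-2)/2} e^{i(r²+s²)/(4t)} J_ν(rs/(2t)) ds | ≤ C t^{-d/2} ∫₀^∞ |F(s)| s^{d-1} ds. -/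
open MeasureTheory Set Complex Filter Topology

/-- The Bessel function of order `ν > -1/2`, defined for `r > 0` by
`J_ν(r) = ((r/2)^ν / (Γ(ν+1/2)Γ(1/2))) ∫_{-1}^{1} e^{isr} (1-s²)^{(2ν-1)/2} ds`. -/
noncomputable def besselJ (ν : ℝ) (r : ℝ) : ℂ :=
  (((r / 2) ^ ν / (Real.Gamma (ν + 1 / 2) * Real.Gamma (1 / 2)) : ℝ) : ℂ) *
    ∫ s in (-1 : ℝ)..1,
      Complex.exp (Complex.I * (s : ℂ) * (r : ℂ)) * (((1 - s ^ 2) ^ ((2 * ν - 1) / 2) : ℝ) : ℂ)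

/-- The holomorphic integrand used in the contour-shift argument. -/
noncomputable def oscF (μ x : ℝ) (z : ℂ) : ℂ :=
  Complex.exp (Complex.I * z * x) * (1 - z ^ 2) ^ (μ : ℂ)

lemma cpow_cont {μ : ℝ} (hμ : 0 < μ) {z : ℂ} (hz : 0 ≤ (1 - z ^ 2).re) :
    ContinuousAt (fun w : ℂ => (1 - w ^ 2) ^ (μ : ℂ)) z := by
  have h1 : ContinuousAt (fun w : ℂ => 1 - w ^ 2) z :=
    (continuous_const.sub (continuous_pow 2)).continuousAt
  have h2 : ContinuousAt (fun w : ℂ => w ^ (μ : ℂ)) (1 - z ^ 2) :=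
    continuousAt_cpow_const_of_re_pos (Or.inl hz) (by simpa using hμ)
  exact ContinuousAt.comp (g := fun w : ℂ => w ^ (μ : ℂ)) (f := fun w : ℂ => 1 - w ^ 2) h2 h1

lemma oscF_contAt {μ x : ℝ} (hμ : 0 < μ) {z : ℂ} (hz : 0 ≤ (1 - z ^ 2).re) :
    ContinuousAt (oscF μ x) z := by
  refine ContinuousAt.mul ?_ (cpow_cont hμ hz)
  exact (Complex.continuous_exp.comp (by continuity)).continuousAt

lemma rect_id {μ x : ℝ} (hμ : 0 < μ) {R : ℝ} (hR : 0 < R) :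
    (∫ s : ℝ in (-1:ℝ)..1, oscF μ x (s : ℂ)) =
      (∫ s : ℝ in (-1:ℝ)..1, oscF μ x ((s : ℂ) + R * I)) -
      I * (∫ y : ℝ in (0:ℝ)..R, oscF μ x (1 + y * I)) +
      I * (∫ y : ℝ in (0:ℝ)..R, oscF μ x (-1 + y * I)) := by
  have h := Complex.integral_boundary_rect_eq_zero_of_differentiable_on_off_countable
    (oscF μ x) (-1) (1 + R * I) ∅ countable_empty ?_ ?_
  · have h' := h
    simp only [Complex.neg_re, Complex.one_re, Complex.add_re, Complex.mul_re,
      Complex.ofReal_re, Complex.I_re, Complex.ofReal_im, Complex.I_im, Complex.neg_im,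
      Complex.one_im, Complex.add_im, Complex.mul_im] at h'
    norm_num at h'
    linear_combination h'
  · intro z hz
    rw [Complex.mem_reProdIm] at hz
    have h1 : |z.re| ≤ 1 := by
      have h := hz.1
      simp only [Complex.neg_re, Complex.one_re, Complex.add_re, Complex.mul_re,
        Complex.ofReal_re, Complex.I_re, Complex.ofReal_im, Complex.I_im] at h
      norm_num at h
      rw [abs_le]; exact h
    have hre : 0 ≤ (1 - z ^ 2).re := by
      simp only [Complex.sub_re, Complex.one_re, pow_two, Complex.mul_re]
      nlinarith [sq_nonneg z.im, abs_le.1 h1]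
    exact (oscF_contAt hμ hre).continuousWithinAt
  · intro z hz
    simp only [mem_diff, mem_empty_iff_false, not_false_iff, and_true] at hz
    rw [Complex.mem_reProdIm] at hz
    have h1 : |z.re| ≤ 1 := by
      have h := hz.1
      simp only [Complex.neg_re, Complex.one_re, Complex.add_re, Complex.mul_re,
        Complex.ofReal_re, Complex.I_re, Complex.ofReal_im, Complex.I_im] at h
      norm_num at h
      rw [abs_le]; exact ⟨h.1.le, h.2.le⟩
    have h2 : 0 < z.im := by
      have h := hz.2
      simp only [Complex.neg_im, Complex.one_im, Complex.add_im, Complex.mul_im,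
        Complex.ofReal_re, Complex.I_im, Complex.ofReal_im, Complex.I_re] at h
      norm_num at h
      rcases h.1 with h0 | h0
      · exact h0
      · exact hR.trans h0
    have hre : 0 < (1 - z ^ 2).re := by
      simp only [Complex.sub_re, Complex.one_re, pow_two, Complex.mul_re]
      nlinarith [abs_le.1 h1]
    refine DifferentiableAt.mul ?_ ?_
    · exact (Complex.differentiable_exp.comp (by fun_prop)).differentiableAt
    · exact ((differentiableAt_const _).sub (differentiableAt_pow 2)).cpow
        (differentiableAt_const _) (Or.inl hre)

lemma oscF_vert_norm {μ x : ℝ} (hμ : 0 < μ) {σ : ℝ} (hσ : σ = 1 ∨ σ = -1) {y : ℝ}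
    (hy : 0 ≤ y) : ‖oscF μ x ((σ : ℂ) + y * I)‖ ≤ Real.exp (-(x * y)) * (y ^ 2 + 2 * y) ^ μ := by
  have hσ2 : (σ : ℂ) ^ 2 = 1 := by rcases hσ with h | h <;> (rw [h]; norm_num)
  have habs1 : ‖1 - ((σ : ℂ) + y * I) ^ 2‖ ≤ y ^ 2 + 2 * y := by
    have hzeq : (1 : ℂ) - ((σ : ℂ) + y * I) ^ 2 = (y : ℂ) ^ 2 - 2 * σ * y * I := by
      have hI : (I : ℂ) ^ 2 = -1 := Complex.I_sq
      linear_combination (-1 : ℂ) * hσ2 - (y : ℂ) ^ 2 * hI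
    rw [hzeq]
    refine (norm_sub_le _ _).trans ?_
    have e1 : ‖(y : ℂ) ^ 2‖ = y ^ 2 := by
      rw [norm_pow, Complex.norm_real, Real.norm_eq_abs, _root_.abs_of_nonneg hy]
    have e2 : ‖2 * (σ : ℂ) * y * I‖ = 2 * y := by
      simp only [norm_mul, Complex.norm_real, Complex.norm_I, Complex.norm_two]
      rcases hσ with h | h <;> rw [h] <;> simp [_root_.abs_of_nonneg hy]
    rw [e1, e2]
  have hexp : ‖Complex.exp (Complex.I * ((σ : ℂ) + y * I) * x)‖ =
      Real.exp (-(x * y)) := by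
    rw [Complex.norm_exp]
    congr 1
    simp only [Complex.mul_re, Complex.add_re, Complex.add_im, Complex.mul_im,
      Complex.I_re, Complex.I_im, Complex.ofReal_re, Complex.ofReal_im]
    ring
  have hcpow : ‖(1 - ((σ : ℂ) + y * I) ^ 2) ^ (μ : ℂ)‖ ≤ (y ^ 2 + 2 * y) ^ μ := by
    refine (Complex.norm_cpow_le _ _).trans ?_
    simp only [Complex.ofReal_re, Complex.ofReal_im, mul_zero, Real.exp_zero, div_one]
    exact Real.rpow_le_rpow (norm_nonneg _) habs1 hμ.le
  calc ‖oscF μ x ((σ : ℂ) + y * I)‖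
      = ‖Complex.exp (Complex.I * ((σ : ℂ) + y * I) * x)‖ *
        ‖(1 - ((σ : ℂ) + y * I) ^ 2) ^ (μ : ℂ)‖ := by
        rw [oscF]; exact norm_mul _ _
    _ ≤ Real.exp (-(x * y)) * (y ^ 2 + 2 * y) ^ μ := by
        rw [hexp]
        exact mul_le_mul_of_nonneg_left hcpow (Real.exp_nonneg _)

lemma oscF_norm_le {μ x : ℝ} (hμ : 0 < μ) (s R : ℝ) :
    ‖oscF μ x ((s : ℂ) + R * I)‖ ≤
      Real.exp (-(x * R)) * (‖1 - ((s : ℂ) + R * I) ^ 2‖) ^ μ := by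
  have hexp : ‖Complex.exp (Complex.I * ((s : ℂ) + R * I) * x)‖ =
      Real.exp (-(x * R)) := by
    rw [Complex.norm_exp]
    congr 1
    simp only [Complex.mul_re, Complex.add_re, Complex.add_im, Complex.mul_im,
      Complex.I_re, Complex.I_im, Complex.ofReal_re, Complex.ofReal_im]
    ring
  have hcpow : ‖(1 - ((s : ℂ) + R * I) ^ 2) ^ (μ : ℂ)‖ ≤
      (‖1 - ((s : ℂ) + R * I) ^ 2‖) ^ μ := by
    refine (Complex.norm_cpow_le _ _).trans ?_
    simp only [Complex.ofReal_re, Complex.ofReal_im, mul_zero, Real.exp_zero, div_one]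
    exact le_rfl
  rw [oscF, norm_mul]
  calc ‖Complex.exp (Complex.I * ((s:ℂ) + R * I) * x)‖ * ‖(1 - ((s:ℂ) + R * I) ^ 2) ^ (μ:ℂ)‖
      = Real.exp (-(x * R)) * ‖(1 - ((s:ℂ) + R * I) ^ 2) ^ (μ:ℂ)‖ := by
        rw [← hexp]
    _ ≤ _ := mul_le_mul_of_nonneg_left hcpow (Real.exp_nonneg _)

lemma osc_bound {μ x : ℝ} (hμ : 0 < μ) (hx : 1 ≤ x) :
    ‖∫ s in (-1:ℝ)..1,
        Complex.exp (Complex.I * (s : ℂ) * (x : ℂ)) * (((1 - s ^ 2) ^ μ : ℝ) : ℂ)‖ ≤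
      2 * (2 ^ μ * (Real.Gamma (2 * μ + 1) + 2 ^ μ * Real.Gamma (μ + 1))) * x ^ (-(μ + 1)) := by
  have hx0 : 0 < x := lt_of_lt_of_le one_pos hx
  -- rewrite the integral in terms of `oscF`
  have hcongr : (∫ s in (-1:ℝ)..1,
      Complex.exp (Complex.I * (s : ℂ) * (x : ℂ)) * (((1 - s ^ 2) ^ μ : ℝ) : ℂ)) =
      ∫ s in (-1:ℝ)..1, oscF μ x (s : ℂ) := by
    refine intervalIntegral.integral_congr fun s hs => ?_
    rw [uIcc_of_le (by norm_num : (-1:ℝ) ≤ 1)] at hs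
    have h0 : (0:ℝ) ≤ 1 - s ^ 2 := by nlinarith [hs.1, hs.2]
    rw [oscF, Complex.ofReal_cpow h0]
    push_cast
    ring
  -- integrability and values of Gamma-type integrals
  have hint : ∀ p : ℝ, 0 < p → IntegrableOn (fun y : ℝ => y ^ p * Real.exp (-(x * y))) (Ioi 0) := by
    intro p hp
    have h := integrableOn_rpow_mul_exp_neg_mul_rpow (s := p) (p := 1) (b := x)
      (by linarith) one_pos hx0
    refine h.congr_fun (fun y hy => ?_) measurableSet_Ioi
    dsimp only; rw [Real.rpow_one]; ring_nf
  have hval : ∀ p : ℝ, 0 < p →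
      (∫ y in Ioi (0:ℝ), y ^ p * Real.exp (-(x * y))) = (1 / x) ^ (p + 1) * Real.Gamma (p + 1) := by
    intro p hp
    have h := Real.integral_rpow_mul_exp_neg_mul_Ioi (a := p + 1) (r := x) (by linarith) hx0
    rw [show p + 1 - 1 = p by ring] at h
    exact h
  set N : ℝ → ℝ := fun y =>
    2 ^ μ * (y ^ (2 * μ) * Real.exp (-(x * y)) + 2 ^ μ * (y ^ μ * Real.exp (-(x * y)))) with hN
  have hN_int : IntegrableOn N (Ioi 0) :=
    (((hint (2 * μ) (by linarith)).add ((hint μ hμ).const_mul (2 ^ μ))).const_mul (2 ^ μ))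
  have hN_val : (∫ y in Ioi (0:ℝ), N y) ≤
      2 ^ μ * (Real.Gamma (2 * μ + 1) + 2 ^ μ * Real.Gamma (μ + 1)) * x ^ (-(μ + 1)) := by
    rw [hN, integral_const_mul, integral_add (hint (2 * μ) (by linarith))
      ((hint μ hμ).const_mul (2 ^ μ)), integral_const_mul, hval (2 * μ) (by linarith), hval μ hμ]
    have hinv : (1 / x) ^ (μ + 1) = x ^ (-(μ + 1)) := by
      rw [one_div, ← Real.rpow_neg_one x, ← Real.rpow_mul hx0.le]
      ring_nf
    have hinv2 : (1 / x) ^ (2 * μ + 1) ≤ x ^ (-(μ + 1)) := by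
      rw [← hinv]
      exact Real.rpow_le_rpow_of_exponent_ge (by positivity)
        (by rw [div_le_one hx0]; linarith) (by linarith)
    have hg1 : 0 ≤ Real.Gamma (μ + 1) := (Real.Gamma_pos_of_pos (by linarith)).le
    have hg2 : 0 ≤ Real.Gamma (2 * μ + 1) := (Real.Gamma_pos_of_pos (by linarith)).le
    have h2μ : (0:ℝ) < 2 ^ μ := Real.rpow_pos_of_pos (by norm_num) μ
    rw [hinv]
    nlinarith [mul_le_mul_of_nonneg_left (mul_le_mul_of_nonneg_right hinv2 hg2) h2μ.le]
  -- pointwise bound of the vertical integrand by N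
  have hsplit : ∀ y : ℝ, 0 ≤ y → (y ^ 2 + 2 * y) ^ μ ≤ 2 ^ μ * (y ^ (2 * μ) + 2 ^ μ * y ^ μ) := by
    intro y hy
    have h2μ : (0:ℝ) ≤ 2 ^ μ := (Real.rpow_pos_of_pos (by norm_num) μ).le
    have hyμ : (0:ℝ) ≤ y ^ μ := Real.rpow_nonneg hy μ
    have hy2μ : (0:ℝ) ≤ y ^ (2 * μ) := Real.rpow_nonneg hy (2 * μ)
    rcases le_total (y ^ 2) (2 * y) with h | h
    · have : (y ^ 2 + 2 * y) ^ μ ≤ (2 * (2 * y)) ^ μ :=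
        Real.rpow_le_rpow (by positivity) (by linarith) hμ.le
      refine this.trans ?_
      rw [Real.mul_rpow (by norm_num) (by positivity), Real.mul_rpow (by norm_num) hy]
      nlinarith [mul_nonneg h2μ hy2μ]
    · have : (y ^ 2 + 2 * y) ^ μ ≤ (2 * y ^ 2) ^ μ :=
        Real.rpow_le_rpow (by positivity) (by linarith) hμ.le
      refine this.trans ?_
      rw [Real.mul_rpow (by norm_num) (by positivity)]
      have : (y ^ 2) ^ μ = y ^ (2 * μ) := by
        rw [← Real.rpow_natCast y 2, ← Real.rpow_mul hy]
        norm_num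
      rw [this]
      nlinarith [mul_nonneg h2μ (mul_nonneg h2μ hyμ)]
  have hvertN : ∀ σ : ℝ, σ = 1 ∨ σ = -1 → ∀ y : ℝ, y ∈ Ioi (0:ℝ) →
      ‖oscF μ x ((σ : ℂ) + y * I)‖ ≤ N y := by
    intro σ hσ y hy
    have hy0 : (0:ℝ) ≤ y := (mem_Ioi.1 hy).le
    refine (oscF_vert_norm hμ hσ hy0).trans ?_
    have := mul_le_mul_of_nonneg_left (hsplit y hy0) (Real.exp_nonneg (-(x * y)))
    refine this.trans (le_of_eq ?_)
    rw [hN]; ring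
  -- continuity, hence measurability, of the vertical integrands
  have hvertCont : ∀ σ : ℝ, σ = 1 ∨ σ = -1 → Continuous (fun y : ℝ => oscF μ x ((σ : ℂ) + y * I)) := by
    intro σ hσ
    have hσ2 : (σ : ℂ) ^ 2 = 1 := by rcases hσ with h | h <;> (rw [h]; norm_num)
    rw [continuous_iff_continuousAt]
    intro y
    have hre : 0 ≤ (1 - ((σ : ℂ) + y * I) ^ 2).re := by
      have hzeq : (1 : ℂ) - ((σ : ℂ) + y * I) ^ 2 = (y : ℂ) ^ 2 - 2 * σ * y * I := by
        linear_combination (-1 : ℂ) * hσ2 - (y : ℂ) ^ 2 * Complex.I_sq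
      rw [hzeq]
      simp only [Complex.sub_re, Complex.mul_re, Complex.mul_im, Complex.I_re, Complex.I_im,
        Complex.ofReal_re, Complex.ofReal_im, pow_two]
      ring_nf
      norm_num
      positivity
    exact ContinuousAt.comp (g := oscF μ x) (f := fun y : ℝ => (σ : ℂ) + y * I)
      (oscF_contAt hμ hre) (by continuity : Continuous fun y : ℝ => (σ : ℂ) + y * I).continuousAt
  have hvertInt : ∀ σ : ℝ, σ = 1 ∨ σ = -1 →
      IntegrableOn (fun y : ℝ => oscF μ x ((σ : ℂ) + y * I)) (Ioi 0) := by
    intro σ hσ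
    refine Integrable.mono' hN_int ((hvertCont σ hσ).aestronglyMeasurable.restrict) ?_
    exact (ae_restrict_iff' measurableSet_Ioi).2 (Eventually.of_forall (hvertN σ hσ))
  have hnormV : ∀ σ : ℝ, σ = 1 ∨ σ = -1 →
      ‖∫ y in Ioi (0:ℝ), oscF μ x ((σ : ℂ) + y * I)‖ ≤ ∫ y in Ioi (0:ℝ), N y := by
    intro σ hσ
    exact norm_integral_le_of_norm_le hN_int
      ((ae_restrict_iff' measurableSet_Ioi).2 (Eventually.of_forall (hvertN σ hσ)))
  -- the top side tends to zero
  have hT : Tendsto (fun R : ℝ => ∫ s in (-1:ℝ)..1, oscF μ x ((s : ℂ) + R * I)) atTop (𝓝 0) := by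
    have hg0 : Tendsto (fun R : ℝ => (2 : ℝ) * (Real.exp (-(x * R)) * (2 ^ μ * R ^ (2 * μ))))
        atTop (𝓝 0) := by
      have h0 := tendsto_rpow_mul_exp_neg_mul_atTop_nhds_zero (2 * μ) x hx0
      have h1 : Tendsto (fun R : ℝ => (2 : ℝ) * (2 ^ μ * (R ^ (2 * μ) * Real.exp (-x * R))))
          atTop (𝓝 ((2 : ℝ) * (2 ^ μ * 0))) := ((h0.const_mul (2 ^ μ)).const_mul 2)
      rw [mul_zero, mul_zero] at h1
      refine h1.congr fun R => by ring_nf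
    refine squeeze_zero_norm' ?_ hg0
    filter_upwards [eventually_ge_atTop (2:ℝ)] with R hR
    have hR0 : (0:ℝ) ≤ R := by linarith
    have hpoint : ∀ s ∈ Set.uIoc (-1:ℝ) 1, ‖oscF μ x ((s : ℂ) + R * I)‖ ≤
        Real.exp (-(x * R)) * (2 ^ μ * R ^ (2 * μ)) := by
      intro s hs
      rw [uIoc_of_le (by norm_num : (-1:ℝ) ≤ 1)] at hs
      have hs1 : s ^ 2 ≤ 1 := by nlinarith [hs.1.le, hs.2]
      refine (oscF_norm_le hμ s R).trans ?_
      refine mul_le_mul_of_nonneg_left ?_ (Real.exp_nonneg _)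
      have habs : ‖1 - ((s : ℂ) + R * I) ^ 2‖ ≤ 2 * R ^ 2 := by
        calc ‖1 - ((s : ℂ) + R * I) ^ 2‖
            ≤ ‖(1:ℂ)‖ + ‖((s : ℂ) + R * I) ^ 2‖ :=
              norm_sub_le _ _
          _ = 1 + (s ^ 2 + R ^ 2) := by
              rw [norm_one, norm_pow, Complex.norm_def, Real.sq_sqrt (Complex.normSq_nonneg _),
                Complex.normSq_add_mul_I]
          _ ≤ 2 * R ^ 2 := by nlinarith
      calc (‖1 - ((s : ℂ) + R * I) ^ 2‖) ^ μ
          ≤ (2 * R ^ 2) ^ μ := Real.rpow_le_rpow (norm_nonneg _) habs hμ.le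
        _ = 2 ^ μ * R ^ (2 * μ) := by
            rw [Real.mul_rpow (by norm_num) (by positivity)]
            congr 1
            rw [← Real.rpow_natCast R 2, ← Real.rpow_mul hR0]
            norm_num [mul_comm]
    calc ‖∫ s in (-1:ℝ)..1, oscF μ x ((s : ℂ) + R * I)‖
        ≤ Real.exp (-(x * R)) * (2 ^ μ * R ^ (2 * μ)) * |1 - (-1 : ℝ)| :=
          intervalIntegral.norm_integral_le_of_norm_le_const hpoint
      _ = 2 * (Real.exp (-(x * R)) * (2 ^ μ * R ^ (2 * μ))) := by
          rw [show |1 - (-1:ℝ)| = 2 by norm_num]; ring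
  -- vertical integrals converge to integrals over `Ioi 0`
  have hVp := intervalIntegral_tendsto_integral_Ioi (0:ℝ) (hvertInt 1 (Or.inl rfl)) tendsto_id
  have hVm := intervalIntegral_tendsto_integral_Ioi (0:ℝ) (hvertInt (-1) (Or.inr rfl)) tendsto_id
  simp only [Complex.ofReal_one] at hVp
  simp only [Complex.ofReal_neg, Complex.ofReal_one] at hVm
  -- pass to the limit in the rectangle identity
  have hconv : Tendsto (fun R : ℝ =>
      (∫ s in (-1:ℝ)..1, oscF μ x ((s : ℂ) + R * I)) -
        I * (∫ y in (0:ℝ)..R, oscF μ x (1 + y * I)) +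
        I * (∫ y in (0:ℝ)..R, oscF μ x (-1 + y * I))) atTop
      (𝓝 (0 - I * (∫ y in Ioi (0:ℝ), oscF μ x (1 + y * I)) +
        I * (∫ y in Ioi (0:ℝ), oscF μ x (-1 + y * I)))) :=
    (hT.sub (hVp.const_mul I)).add (hVm.const_mul I)
  have heq : (∫ s in (-1:ℝ)..1, oscF μ x (s : ℂ)) =
      0 - I * (∫ y in Ioi (0:ℝ), oscF μ x (1 + y * I)) +
        I * (∫ y in Ioi (0:ℝ), oscF μ x (-1 + y * I)) := by
    refine tendsto_nhds_unique ?_ hconv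
    refine Tendsto.congr' ?_ tendsto_const_nhds
    filter_upwards [eventually_gt_atTop (0:ℝ)] with R hR
    exact rect_id hμ hR
  -- conclude
  rw [hcongr, heq]
  have hb1 : ‖I * (∫ y in Ioi (0:ℝ), oscF μ x (1 + y * I))‖ ≤ ∫ y in Ioi (0:ℝ), N y := by
    rw [norm_mul, Complex.norm_I, one_mul]
    have := hnormV 1 (Or.inl rfl)
    simpa using this
  have hb2 : ‖I * (∫ y in Ioi (0:ℝ), oscF μ x (-1 + y * I))‖ ≤ ∫ y in Ioi (0:ℝ), N y := by
    rw [norm_mul, Complex.norm_I, one_mul]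
    have := hnormV (-1) (Or.inr rfl)
    simpa using this
  calc ‖0 - I * (∫ y in Ioi (0:ℝ), oscF μ x (1 + y * I)) +
        I * (∫ y in Ioi (0:ℝ), oscF μ x (-1 + y * I))‖
      ≤ ‖0 - I * (∫ y in Ioi (0:ℝ), oscF μ x (1 + y * I))‖ +
        ‖I * (∫ y in Ioi (0:ℝ), oscF μ x (-1 + y * I))‖ := norm_add_le _ _
    _ ≤ (∫ y in Ioi (0:ℝ), N y) + (∫ y in Ioi (0:ℝ), N y) := by
        rw [zero_sub, norm_neg]
        exact add_le_add hb1 hb2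
    _ ≤ 2 * (2 ^ μ * (Real.Gamma (2 * μ + 1) + 2 ^ μ * Real.Gamma (μ + 1))) * x ^ (-(μ + 1)) := by
        linarith [hN_val]


lemma besselJ_trivial_bound {ν : ℝ} (hν : 1/2 ≤ ν) (x : ℝ) :
    ‖besselJ ν x‖ ≤ |(x / 2) ^ ν| / (Real.Gamma (ν + 1/2) * Real.Gamma (1/2)) * 2 := by
  have hG : 0 < Real.Gamma (ν + 1/2) * Real.Gamma (1/2) :=
    mul_pos (Real.Gamma_pos_of_pos (by linarith)) (Real.Gamma_pos_of_pos (by norm_num))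
  rw [besselJ, norm_mul]
  have h1 : ‖((((x / 2) ^ ν / (Real.Gamma (ν + 1/2) * Real.Gamma (1/2))) : ℝ) : ℂ)‖ =
      |(x / 2) ^ ν| / (Real.Gamma (ν + 1/2) * Real.Gamma (1/2)) := by
    rw [Complex.norm_real, Real.norm_eq_abs, abs_div, abs_of_pos hG]
  rw [h1]
  refine mul_le_mul_of_nonneg_left ?_ (by positivity)
  have h2 : ∀ s ∈ Set.uIoc (-1:ℝ) 1,
      ‖Complex.exp (Complex.I * (s : ℂ) * (x : ℂ)) *
        (((1 - s ^ 2) ^ ((2 * ν - 1) / 2) : ℝ) : ℂ)‖ ≤ 1 := by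
    intro s hs
    rw [uIoc_of_le (by norm_num : (-1:ℝ) ≤ 1)] at hs
    have hs0 : (0:ℝ) ≤ 1 - s ^ 2 := by nlinarith [hs.1.le, hs.2]
    have hs2 : (1:ℝ) - s ^ 2 ≤ 1 := by nlinarith [sq_nonneg s]
    rw [norm_mul]
    have he : ‖Complex.exp (Complex.I * (s : ℂ) * (x : ℂ))‖ = 1 := by
      rw [Complex.norm_exp]
      convert Real.exp_zero using 2
      simp [Complex.mul_re]
    rw [he, one_mul, Complex.norm_real, Real.norm_eq_abs]
    rw [_root_.abs_of_nonneg (Real.rpow_nonneg hs0 _)]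
    exact Real.rpow_le_one hs0 hs2 (by linarith)
  calc ‖∫ s in (-1:ℝ)..1, Complex.exp (Complex.I * (s : ℂ) * (x : ℂ)) *
        (((1 - s ^ 2) ^ ((2 * ν - 1) / 2) : ℝ) : ℂ)‖
      ≤ 1 * |1 - (-1:ℝ)| := intervalIntegral.norm_integral_le_of_norm_le_const h2
    _ = 2 := by norm_num

lemma besselJ_kernel_bound (d : ℕ) (hd : 3 ≤ d) (a : ℝ) (ha : 0 ≤ a) (ν : ℝ)
    (hν : ν = Real.sqrt (((((d : ℝ) - 2) / 2) ^ 2) + a)) :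
    ∃ K : ℝ, 0 < K ∧ ∀ x : ℝ, 0 < x → ‖besselJ ν x‖ ≤ K * x ^ (((d : ℝ) - 2) / 2) := by
  set ν₀ : ℝ := ((d : ℝ) - 2) / 2 with hν₀def
  have hd3 : (3:ℝ) ≤ (d : ℝ) := by exact_mod_cast hd
  have hν₀ : (1:ℝ)/2 ≤ ν₀ := by rw [hν₀def]; linarith
  have hν₀0 : (0:ℝ) ≤ ν₀ := by linarith
  have hνge : ν₀ ≤ ν := by
    rw [hν]
    calc ν₀ = Real.sqrt (ν₀ ^ 2) := (Real.sqrt_sq hν₀0).symm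
      _ ≤ _ := Real.sqrt_le_sqrt (by linarith)
  have hν2 : 1/2 ≤ ν := le_trans hν₀ hνge
  have hνpos : 0 < ν := lt_of_lt_of_le (by norm_num) hν2
  set G : ℝ := Real.Gamma (ν + 1/2) * Real.Gamma (1/2) with hGdef
  have hG : 0 < G :=
    mul_pos (Real.Gamma_pos_of_pos (by linarith)) (Real.Gamma_pos_of_pos (by norm_num))
  have h2ν : (0:ℝ) < 2 ^ ν := Real.rpow_pos_of_pos (by norm_num) ν
  set μ : ℝ := ν - 1/2 with hμdef
  have hμ0 : 0 ≤ μ := by rw [hμdef]; linarith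
  have htriv : ∀ x : ℝ, 0 < x → ‖besselJ ν x‖ ≤ 2 / (2 ^ ν * G) * x ^ ν := by
    intro x hx
    have h := besselJ_trivial_bound hν2 x
    have he : |(x / 2) ^ ν| = x ^ ν / 2 ^ ν := by
      rw [_root_.abs_of_nonneg (Real.rpow_nonneg (by positivity) _),
        Real.div_rpow hx.le (by norm_num)]
    rw [he] at h
    refine h.trans (le_of_eq ?_)
    rw [hGdef]; ring
  rcases eq_or_lt_of_le hμ0 with hμeq | hμpos
  · have hνeq : ν = 1/2 := by rw [hμdef] at hμeq; linarith [hμeq]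
    have hν₀eq : ν₀ = ν := le_antisymm hνge (by rw [hνeq]; linarith)
    refine ⟨2 / (2 ^ ν * G), by positivity, fun x hx => ?_⟩
    rw [hν₀eq]
    exact htriv x hx
  · set Cμ : ℝ := 2 * (2 ^ μ * (Real.Gamma (2 * μ + 1) + 2 ^ μ * Real.Gamma (μ + 1))) with hCμ
    have hCμpos : 0 < Cμ := by
      have h1 := Real.Gamma_pos_of_pos (show (0:ℝ) < 2 * μ + 1 by linarith)
      have h2 := Real.Gamma_pos_of_pos (show (0:ℝ) < μ + 1 by linarith)
      have h3 : (0:ℝ) < 2 ^ μ := Real.rpow_pos_of_pos (by norm_num) μ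
      rw [hCμ]; positivity
    refine ⟨2 / (2 ^ ν * G) + Cμ / (2 ^ ν * G), by positivity, fun x hx => ?_⟩
    rcases le_or_gt x 1 with hx1 | hx1
    · have h := htriv x hx
      have h2 : x ^ ν ≤ x ^ ν₀ := Real.rpow_le_rpow_of_exponent_ge hx hx1 hνge
      have h3 : (0:ℝ) ≤ Cμ / (2 ^ ν * G) * x ^ ν₀ := by positivity
      calc ‖besselJ ν x‖ ≤ 2 / (2 ^ ν * G) * x ^ ν := h
        _ ≤ 2 / (2 ^ ν * G) * x ^ ν₀ := by
            exact mul_le_mul_of_nonneg_left h2 (by positivity)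
        _ ≤ _ := by nlinarith
    · have hosc := osc_bound (μ := μ) (x := x) hμpos hx1.le
      have hexpeq : (2 * ν - 1) / 2 = μ := by rw [hμdef]; ring
      have hb : ‖besselJ ν x‖ ≤ x ^ ν / 2 ^ ν / G * (Cμ * x ^ (-(μ + 1))) := by
        rw [besselJ, hexpeq, norm_mul]
        have h1 : ‖((((x / 2) ^ ν / G) : ℝ) : ℂ)‖ = x ^ ν / 2 ^ ν / G := by
          rw [Complex.norm_real, Real.norm_eq_abs, abs_div, abs_of_pos hG,
            _root_.abs_of_nonneg (Real.rpow_nonneg (by positivity) _),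
            Real.div_rpow hx.le (by norm_num)]
        rw [h1]
        refine mul_le_mul_of_nonneg_left ?_ (by positivity)
        rw [hCμ]
        calc ‖∫ s in (-1:ℝ)..1, Complex.exp (Complex.I * (s : ℂ) * (x : ℂ)) *
              (((1 - s ^ 2) ^ μ : ℝ) : ℂ)‖
            ≤ 2 * (2 ^ μ * (Real.Gamma (2 * μ + 1) + 2 ^ μ * Real.Gamma (μ + 1))) *
              x ^ (-(μ + 1)) := hosc
          _ = _ := by ring
      refine hb.trans ?_
      have hxpow : x ^ ν * x ^ (-(μ + 1)) = x ^ (-(1:ℝ)/2) := by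
        rw [← Real.rpow_add hx]
        congr 1
        rw [hμdef]; ring
      have hle1 : x ^ (-(1:ℝ)/2) ≤ 1 :=
        Real.rpow_le_one_of_one_le_of_nonpos hx1.le (by norm_num)
      have hge1 : (1:ℝ) ≤ x ^ ν₀ := by
        calc (1:ℝ) = x ^ (0:ℝ) := (Real.rpow_zero x).symm
          _ ≤ x ^ ν₀ := Real.rpow_le_rpow_of_exponent_le hx1.le hν₀0
      have step : x ^ ν / 2 ^ ν / G * (Cμ * x ^ (-(μ + 1))) =
          Cμ / (2 ^ ν * G) * (x ^ ν * x ^ (-(μ + 1))) := by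
        field_simp
      rw [step, hxpow]
      have h4 : Cμ / (2 ^ ν * G) * x ^ (-(1:ℝ)/2) ≤ Cμ / (2 ^ ν * G) * 1 :=
        mul_le_mul_of_nonneg_left hle1 (by positivity)
      have h5 : Cμ / (2 ^ ν * G) * 1 ≤ Cμ / (2 ^ ν * G) * x ^ ν₀ :=
        mul_le_mul_of_nonneg_left hge1 (by positivity)
      have h6 : (0:ℝ) ≤ 2 / (2 ^ ν * G) * x ^ ν₀ := by positivity
      nlinarith


/-- Dispersive estimate for radial data, `a ≥ 0` (Theorem 2.8(i)), expressed through the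
explicit propagator kernel: with `ν = √(((d-2)/2)² + a)`, for `t > 0` the radial evolution
`(1/(2t)) ∫₀^∞ F(s) s^{d-1} (rs)^{-(d-2)/2} e^{i(r²+s²)/(4t)} J_ν(rs/(2t)) ds`
is bounded by `C t^{-d/2} ∫₀^∞ |F(s)| s^{d-1} ds`. -/
theorem dispersive_estimate_nonneg (d : ℕ) (hd : 3 ≤ d) (a : ℝ) (ha : 0 ≤ a)
    (ν : ℝ) (hν : ν = Real.sqrt (((((d : ℝ) - 2) / 2) ^ 2) + a)) :
    ∃ C : ℝ, 0 < C ∧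
      ∀ t : ℝ, 0 < t → ∀ F : ℝ → ℂ, Measurable F →
        IntegrableOn (fun s => ‖F s‖ * s ^ ((d : ℝ) - 1)) (Ioi 0) →
        ∀ r : ℝ, 0 < r →
          ‖(1 / (2 * (t : ℂ))) * ∫ s in Ioi (0 : ℝ),
              F s * ((s ^ ((d : ℝ) - 1) : ℝ) : ℂ) * (((r * s) ^ (-((d : ℝ) - 2) / 2) : ℝ) : ℂ) *
                Complex.exp (Complex.I * (((r ^ 2 + s ^ 2) / (4 * t) : ℝ) : ℂ)) *
                besselJ ν (r * s / (2 * t))‖ ≤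
            C * t ^ (-(d : ℝ) / 2) * ∫ s in Ioi (0 : ℝ), ‖F s‖ * s ^ ((d : ℝ) - 1) := by
  obtain ⟨K, hKpos, hKb⟩ := besselJ_kernel_bound d hd a ha ν hν
  set ν₀ : ℝ := ((d : ℝ) - 2) / 2 with hν₀def
  have hd3 : (3:ℝ) ≤ (d : ℝ) := by exact_mod_cast hd
  refine ⟨K * 2 ^ (-(d:ℝ)/2), by positivity, ?_⟩
  intro t ht F hF hFint r hr
  have h2t : (0:ℝ) < 2 * t := by linarith
  set In := ∫ s in Ioi (0:ℝ), ‖F s‖ * s ^ ((d:ℝ) - 1) with hIn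
  set g : ℝ → ℝ := fun s => K * (2*t) ^ (-ν₀) * (‖F s‖ * s ^ ((d:ℝ) - 1)) with hg
  have hg_int : IntegrableOn g (Ioi 0) := hFint.const_mul _
  have hpt : ∀ s ∈ Ioi (0:ℝ),
      ‖F s * ((s ^ ((d : ℝ) - 1) : ℝ) : ℂ) * (((r * s) ^ (-((d : ℝ) - 2) / 2) : ℝ) : ℂ) *
        Complex.exp (Complex.I * (((r ^ 2 + s ^ 2) / (4 * t) : ℝ) : ℂ)) *
        besselJ ν (r * s / (2 * t))‖ ≤ g s := by
    intro s hs
    have hs0 : (0:ℝ) < s := hs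
    have hrs : (0:ℝ) < r * s := mul_pos hr hs0
    have hx0 : (0:ℝ) < r * s / (2 * t) := by positivity
    have hJ := hKb _ hx0
    have hB : ‖((s ^ ((d:ℝ) - 1) : ℝ) : ℂ)‖ = s ^ ((d:ℝ) - 1) := by
      rw [Complex.norm_real, Real.norm_eq_abs, _root_.abs_of_nonneg (Real.rpow_nonneg hs0.le _)]
    have hC : ‖(((r*s) ^ (-((d:ℝ) - 2)/2) : ℝ) : ℂ)‖ = (r*s) ^ (-((d:ℝ) - 2)/2) := by
      rw [Complex.norm_real, Real.norm_eq_abs, _root_.abs_of_nonneg (Real.rpow_nonneg hrs.le _)]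
    have hD : ‖Complex.exp (Complex.I * (((r ^ 2 + s ^ 2) / (4 * t) : ℝ) : ℂ))‖ = 1 := by
      have h0 : (Complex.I * (((r ^ 2 + s ^ 2) / (4 * t) : ℝ) : ℂ)).re = 0 := by
        rw [Complex.mul_re, Complex.I_re, Complex.I_im, Complex.ofReal_im, Complex.ofReal_re]
        ring
      rw [Complex.norm_exp, h0, Real.exp_zero]
    have hkey2 : (r*s) ^ (-ν₀) * (r*s/(2*t)) ^ ν₀ = (2*t) ^ (-ν₀) := by
      rw [Real.div_rpow hrs.le h2t.le, Real.rpow_neg hrs.le, Real.rpow_neg h2t.le]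
      have h1 : (r*s) ^ ν₀ ≠ 0 := ne_of_gt (Real.rpow_pos_of_pos hrs _)
      have h2 : (2*t) ^ ν₀ ≠ 0 := ne_of_gt (Real.rpow_pos_of_pos h2t _)
      field_simp
    have hexpν₀ : -((d:ℝ) - 2)/2 = -ν₀ := by rw [hν₀def]; ring
    calc ‖F s * ((s ^ ((d : ℝ) - 1) : ℝ) : ℂ) * (((r * s) ^ (-((d : ℝ) - 2) / 2) : ℝ) : ℂ) *
          Complex.exp (Complex.I * (((r ^ 2 + s ^ 2) / (4 * t) : ℝ) : ℂ)) *
          besselJ ν (r * s / (2 * t))‖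
        = ‖F s‖ * (s ^ ((d:ℝ) - 1)) * ((r*s) ^ (-((d:ℝ) - 2)/2)) * 1 *
          ‖besselJ ν (r * s / (2 * t))‖ := by
          rw [norm_mul, norm_mul, norm_mul, norm_mul, hB, hC, hD]
      _ ≤ ‖F s‖ * (s ^ ((d:ℝ) - 1)) * ((r*s) ^ (-((d:ℝ) - 2)/2)) * 1 *
          (K * (r * s / (2 * t)) ^ ν₀) := by
          refine mul_le_mul_of_nonneg_left hJ ?_
          have h1 : (0:ℝ) ≤ s ^ ((d:ℝ) - 1) := Real.rpow_nonneg hs0.le _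
          have h2 : (0:ℝ) ≤ (r*s) ^ (-((d:ℝ) - 2)/2) := Real.rpow_nonneg hrs.le _
          positivity
      _ = g s := by
          rw [hg, hexpν₀]
          linear_combination (‖F s‖ * s ^ ((d:ℝ) - 1) * K) * hkey2
  have hmain : ‖∫ s in Ioi (0:ℝ),
      F s * ((s ^ ((d : ℝ) - 1) : ℝ) : ℂ) * (((r * s) ^ (-((d : ℝ) - 2) / 2) : ℝ) : ℂ) *
        Complex.exp (Complex.I * (((r ^ 2 + s ^ 2) / (4 * t) : ℝ) : ℂ)) *
        besselJ ν (r * s / (2 * t))‖ ≤ K * (2*t) ^ (-ν₀) * In := by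
    have h := norm_integral_le_of_norm_le hg_int
      ((ae_restrict_iff' measurableSet_Ioi).2 (Eventually.of_forall hpt))
    refine h.trans (le_of_eq ?_)
    rw [hg, hIn]
    exact integral_const_mul _ _
  have hnorm2t : ‖(1 / (2 * (t:ℂ)))‖ = 1/(2*t) := by
    have h : (2 * (t:ℂ)) = ((2*t : ℝ) : ℂ) := by push_cast; ring
    rw [h, norm_div, Complex.norm_real, norm_one, Real.norm_eq_abs, _root_.abs_of_pos h2t]
  have hkey3 : (1/(2*t)) * ((2*t) ^ (-ν₀)) = 2 ^ (-(d:ℝ)/2) * t ^ (-(d:ℝ)/2) := by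
    rw [one_div, ← Real.rpow_neg_one (2*t), ← Real.rpow_add h2t,
      show (-1 : ℝ) + -ν₀ = -(d:ℝ)/2 by rw [hν₀def]; ring,
      Real.mul_rpow (by norm_num : (0:ℝ) ≤ 2) ht.le]
  calc ‖(1 / (2 * (t : ℂ))) * ∫ s in Ioi (0 : ℝ),
        F s * ((s ^ ((d : ℝ) - 1) : ℝ) : ℂ) * (((r * s) ^ (-((d : ℝ) - 2) / 2) : ℝ) : ℂ) *
          Complex.exp (Complex.I * (((r ^ 2 + s ^ 2) / (4 * t) : ℝ) : ℂ)) *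
          besselJ ν (r * s / (2 * t))‖
      = (1/(2*t)) * ‖∫ s in Ioi (0 : ℝ),
        F s * ((s ^ ((d : ℝ) - 1) : ℝ) : ℂ) * (((r * s) ^ (-((d : ℝ) - 2) / 2) : ℝ) : ℂ) *
          Complex.exp (Complex.I * (((r ^ 2 + s ^ 2) / (4 * t) : ℝ) : ℂ)) *
          besselJ ν (r * s / (2 * t))‖ := by rw [norm_mul, hnorm2t]
    _ ≤ (1/(2*t)) * (K * (2*t) ^ (-ν₀) * In) := by
        exact mul_le_mul_of_nonneg_left hmain (by positivity)
    _ = K * 2 ^ (-(d:ℝ)/2) * t ^ (-(d:ℝ)/2) * In := by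
        linear_combination (K * In) * hkey3
end

section
/- Let d ≥ 3 and -((d-2)/2)² < a < 0. Set σ = (d-2)/2 - √(((d-2)/2)² + a) (so 0 < σ < (d-2)/2) and ν = (d-2)/2 - σ. Then there exists a constant C = C(d,a) > 0 such that for every t > 0, every measurable F : (0,∞) → ℂ with ∫₀^∞ (1 + s^{-σ}) |F(s)| s^{d-1} ds < ∞, and every r > 0, one has (1 + r^{-σ})^{-1} · | (1/(2t)) ∫₀^∞ F(s) s^{d-1} (rs)^{-(d-2)/2} e^{i(r²+s²)/(4t)} J_ν(rs/(2t)) ds | ≤ C (1 + t^{σ}) t^{-d/2} ∫₀^∞ (1 + s^{-σ}) |F(s)| s^{d-1} ds. -/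
open MeasureTheory Set

lemma besselJ_bound (ν : ℝ) (hν : 0 < ν) :
    ∃ B : ℝ, 0 ≤ B ∧ ∀ x : ℝ, 0 < x → ‖besselJ ν x‖ ≤ B * x ^ ν := by
  set W : ℝ := ∫ s in (-1 : ℝ)..1, |(1 - s ^ 2) ^ ((2 * ν - 1) / 2)| with hW
  have hW0 : 0 ≤ W :=
    intervalIntegral.integral_nonneg (by norm_num) (fun s _ => abs_nonneg _)
  have hG1 : 0 < Real.Gamma (ν + 1 / 2) := Real.Gamma_pos_of_pos (by linarith)
  have hG2 : 0 < Real.Gamma (1 / 2) := Real.Gamma_pos_of_pos (by norm_num)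
  refine ⟨(1 / 2 : ℝ) ^ ν / (Real.Gamma (ν + 1 / 2) * Real.Gamma (1 / 2)) * W,
    by positivity, fun x hx => ?_⟩
  have hnormint : ‖∫ s in (-1 : ℝ)..1,
      Complex.exp (Complex.I * (s : ℂ) * (x : ℂ)) *
        (((1 - s ^ 2) ^ ((2 * ν - 1) / 2) : ℝ) : ℂ)‖ ≤ W := by
    refine le_trans (intervalIntegral.norm_integral_le_integral_norm (by norm_num)) ?_
    rw [hW]
    refine le_of_eq (intervalIntegral.integral_congr fun s _ => ?_)
    rw [norm_mul, Complex.norm_real, Real.norm_eq_abs]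
    have : ‖Complex.exp (Complex.I * (s : ℂ) * (x : ℂ))‖ = 1 := by
      rw [Complex.norm_exp]
      simp
    rw [this, one_mul]
  have hcoef : (0 : ℝ) ≤ (x / 2) ^ ν / (Real.Gamma (ν + 1 / 2) * Real.Gamma (1 / 2)) := by
    positivity
  calc ‖besselJ ν x‖
      = ((x / 2) ^ ν / (Real.Gamma (ν + 1 / 2) * Real.Gamma (1 / 2))) * ‖∫ s in (-1 : ℝ)..1,
          Complex.exp (Complex.I * (s : ℂ) * (x : ℂ)) *
            (((1 - s ^ 2) ^ ((2 * ν - 1) / 2) : ℝ) : ℂ)‖ := by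
        rw [besselJ, norm_mul, Complex.norm_real, Real.norm_eq_abs, abs_of_nonneg hcoef]
    _ ≤ ((x / 2) ^ ν / (Real.Gamma (ν + 1 / 2) * Real.Gamma (1 / 2))) * W :=
        mul_le_mul_of_nonneg_left hnormint hcoef
    _ = (1 / 2 : ℝ) ^ ν / (Real.Gamma (ν + 1 / 2) * Real.Gamma (1 / 2)) * W * x ^ ν := by
        rw [Real.div_rpow hx.le (by norm_num : (0:ℝ) ≤ 2),
          Real.div_rpow (by norm_num : (0:ℝ) ≤ 1) (by norm_num : (0:ℝ) ≤ 2), Real.one_rpow]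
        ring

set_option maxHeartbeats 1000000 in
/-- Weighted dispersive estimate for radial data, `-((d-2)/2)² < a < 0` (Theorem 2.8(ii)),
expressed through the explicit propagator kernel: with `σ = (d-2)/2 - √(((d-2)/2)² + a)`
and `ν = (d-2)/2 - σ`, for `t > 0`,
`(1+r^{-σ})⁻¹ |(1/(2t)) ∫₀^∞ F(s) s^{d-1} (rs)^{-(d-2)/2} e^{i(r²+s²)/(4t)} J_ν(rs/(2t)) ds|`
is bounded by `C (1+t^σ) t^{-d/2} ∫₀^∞ (1+s^{-σ}) |F(s)| s^{d-1} ds`. -/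
theorem dispersive_estimate_neg (d : ℕ) (hd : 3 ≤ d) (a : ℝ)
    (ha₁ : -((((d : ℝ) - 2) / 2) ^ 2) < a) (ha₂ : a < 0)
    (σ ν : ℝ) (hσ : σ = ((d : ℝ) - 2) / 2 - Real.sqrt (((((d : ℝ) - 2) / 2) ^ 2) + a))
    (hν : ν = ((d : ℝ) - 2) / 2 - σ) :
    ∃ C : ℝ, 0 < C ∧
      ∀ t : ℝ, 0 < t → ∀ F : ℝ → ℂ, Measurable F →
        IntegrableOn (fun s => (1 + s ^ (-σ)) * ‖F s‖ * s ^ ((d : ℝ) - 1)) (Ioi 0) →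
        ∀ r : ℝ, 0 < r →
          (1 + r ^ (-σ))⁻¹ *
            ‖(1 / (2 * (t : ℂ))) * ∫ s in Ioi (0 : ℝ),
                F s * ((s ^ ((d : ℝ) - 1) : ℝ) : ℂ) * (((r * s) ^ (-((d : ℝ) - 2) / 2) : ℝ) : ℂ) *
                  Complex.exp (Complex.I * (((r ^ 2 + s ^ 2) / (4 * t) : ℝ) : ℂ)) *
                  besselJ ν (r * s / (2 * t))‖ ≤
            C * (1 + t ^ σ) * t ^ (-(d : ℝ) / 2) *
              ∫ s in Ioi (0 : ℝ), (1 + s ^ (-σ)) * ‖F s‖ * s ^ ((d : ℝ) - 1) := by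
  set M : ℝ := ((d : ℝ) - 2) / 2 with hM
  have hd3 : (3 : ℝ) ≤ (d : ℝ) := by exact_mod_cast hd
  have hMpos : 0 < M := by rw [hM]; linarith
  have hMa : 0 < M ^ 2 + a := by rw [hM]; nlinarith [ha₁]
  have hsqrt_pos : 0 < Real.sqrt (M ^ 2 + a) := Real.sqrt_pos.2 hMa
  have hsqrt_lt : Real.sqrt (M ^ 2 + a) < M := by
    have h1 : Real.sqrt (M ^ 2 + a) < Real.sqrt (M ^ 2) :=
      Real.sqrt_lt_sqrt hMa.le (by linarith)
    rwa [Real.sqrt_sq hMpos.le] at h1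
  have hσpos : 0 < σ := by rw [hσ]; exact sub_pos.2 hsqrt_lt
  have hνpos : 0 < ν := by
    rw [hν, hσ]; simpa using hsqrt_pos
  obtain ⟨B, hB0, hB⟩ := besselJ_bound ν hνpos
  refine ⟨B / 2 + 1, by positivity, fun t ht F hFmeas hFint r hr => ?_⟩
  set I : ℝ := ∫ s in Ioi (0 : ℝ), (1 + s ^ (-σ)) * ‖F s‖ * s ^ ((d : ℝ) - 1) with hI
  have hI0 : 0 ≤ I := by
    refine setIntegral_nonneg measurableSet_Ioi fun s hs => ?_
    have hs' : (0 : ℝ) < s := hs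
    positivity
  -- the small integrand
  set g₀ : ℝ → ℝ := fun s => s ^ (-σ) * ‖F s‖ * s ^ ((d : ℝ) - 1) with hg₀
  have hg₀meas : Measurable g₀ := by
    have h1 : Measurable (fun s : ℝ => s ^ (-σ)) := by measurability
    have h2 : Measurable (fun s : ℝ => s ^ ((d : ℝ) - 1)) := by measurability
    exact (h1.mul hFmeas.norm).mul h2
  have hg₀le : ∀ s ∈ Ioi (0 : ℝ), g₀ s ≤ (1 + s ^ (-σ)) * ‖F s‖ * s ^ ((d : ℝ) - 1) := by
    intro s hs
    have hs' : (0 : ℝ) < s := hs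
    have h1 : (0 : ℝ) ≤ ‖F s‖ * s ^ ((d : ℝ) - 1) := by positivity
    have h2 : s ^ (-σ) ≤ 1 + s ^ (-σ) := by linarith
    calc g₀ s = s ^ (-σ) * (‖F s‖ * s ^ ((d : ℝ) - 1)) := by rw [hg₀]; ring
      _ ≤ (1 + s ^ (-σ)) * (‖F s‖ * s ^ ((d : ℝ) - 1)) := mul_le_mul_of_nonneg_right h2 h1
      _ = (1 + s ^ (-σ)) * ‖F s‖ * s ^ ((d : ℝ) - 1) := by ring
  have hg₀int : IntegrableOn g₀ (Ioi 0) := by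
    refine hFint.mono' (hg₀meas.aestronglyMeasurable) ?_
    rw [ae_restrict_iff' measurableSet_Ioi]
    filter_upwards with s
    intro hs
    have hs' : (0 : ℝ) < s := hs
    have : 0 ≤ g₀ s := by rw [hg₀]; positivity
    rw [Real.norm_eq_abs, abs_of_nonneg this]
    exact hg₀le s hs
  have hJle : (∫ s in Ioi (0 : ℝ), g₀ s) ≤ I := by
    refine setIntegral_mono_on hg₀int hFint measurableSet_Ioi hg₀le
  have hJ0 : 0 ≤ ∫ s in Ioi (0 : ℝ), g₀ s := by
    refine setIntegral_nonneg measurableSet_Ioi fun s hs => ?_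
    have hs' : (0 : ℝ) < s := hs
    rw [hg₀]; positivity
  -- pointwise bound on the kernel integrand
  set G : ℝ → ℂ := fun s =>
    F s * ((s ^ ((d : ℝ) - 1) : ℝ) : ℂ) * (((r * s) ^ (-((d : ℝ) - 2) / 2) : ℝ) : ℂ) *
      Complex.exp (Complex.I * (((r ^ 2 + s ^ 2) / (4 * t) : ℝ) : ℂ)) *
      besselJ ν (r * s / (2 * t)) with hG
  have hptwise : ∀ s ∈ Ioi (0 : ℝ),
      ‖G s‖ ≤ (B * t ^ (-ν) * r ^ (-σ)) * g₀ s := by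
    intro s hs
    have hs' : (0 : ℝ) < s := hs
    have hrs : 0 < r * s := mul_pos hr hs'
    have hx : 0 < r * s / (2 * t) := by positivity
    have hnorm_exp : ‖Complex.exp (Complex.I * (((r ^ 2 + s ^ 2) / (4 * t) : ℝ) : ℂ))‖ = 1 := by
      have hre : Complex.I * (((r ^ 2 + s ^ 2) / (4 * t) : ℝ) : ℂ) =
          (((r ^ 2 + s ^ 2) / (4 * t) : ℝ) : ℂ) * Complex.I := mul_comm _ _
      rw [hre, Complex.norm_exp_ofReal_mul_I]
    have hGnorm : ‖G s‖ = ‖F s‖ * s ^ ((d : ℝ) - 1) * (r * s) ^ (-((d : ℝ) - 2) / 2) *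
        ‖besselJ ν (r * s / (2 * t))‖ := by
      rw [hG]
      simp only [norm_mul, Complex.norm_real, Real.norm_eq_abs, hnorm_exp]
      rw [abs_of_nonneg (Real.rpow_nonneg hs'.le _),
        abs_of_nonneg (Real.rpow_nonneg hrs.le _)]
      ring
    rw [hGnorm]
    have hbess : ‖besselJ ν (r * s / (2 * t))‖ ≤ B * (r * s / (2 * t)) ^ ν :=
      hB _ hx
    have hkey : (r * s) ^ (-((d : ℝ) - 2) / 2) * (B * (r * s / (2 * t)) ^ ν)
        ≤ B * t ^ (-ν) * (r ^ (-σ) * s ^ (-σ)) := by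
      have hsplit : (r * s / (2 * t)) ^ ν = (r * s) ^ ν * (2 * t) ^ (-ν) := by
        rw [Real.div_rpow hrs.le (by positivity : (0:ℝ) ≤ 2 * t),
          Real.rpow_neg (by positivity : (0:ℝ) ≤ 2 * t), div_eq_mul_inv]
      rw [hsplit]
      have h2tle : (2 * t) ^ (-ν) ≤ t ^ (-ν) :=
        Real.rpow_le_rpow_of_nonpos ht (by linarith) (by linarith)
      have hmerge : (r * s) ^ (-((d : ℝ) - 2) / 2) * (r * s) ^ ν = r ^ (-σ) * s ^ (-σ) := by
        rw [← Real.rpow_add hrs]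
        have hexp2 : -((d : ℝ) - 2) / 2 + ν = -σ := by rw [hν, hM]; ring
        rw [hexp2, Real.mul_rpow hr.le hs'.le]
      calc (r * s) ^ (-((d : ℝ) - 2) / 2) * (B * ((r * s) ^ ν * (2 * t) ^ (-ν)))
          = B * (2 * t) ^ (-ν) * ((r * s) ^ (-((d : ℝ) - 2) / 2) * (r * s) ^ ν) := by ring
        _ = B * (2 * t) ^ (-ν) * (r ^ (-σ) * s ^ (-σ)) := by rw [hmerge]
        _ ≤ B * t ^ (-ν) * (r ^ (-σ) * s ^ (-σ)) := by
            have h0 : (0:ℝ) ≤ r ^ (-σ) * s ^ (-σ) := by positivity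
            exact mul_le_mul_of_nonneg_right (mul_le_mul_of_nonneg_left h2tle hB0) h0
    calc ‖F s‖ * s ^ ((d : ℝ) - 1) * (r * s) ^ (-((d : ℝ) - 2) / 2) *
          ‖besselJ ν (r * s / (2 * t))‖
        ≤ ‖F s‖ * s ^ ((d : ℝ) - 1) * (r * s) ^ (-((d : ℝ) - 2) / 2) *
          (B * (r * s / (2 * t)) ^ ν) := by
          have : (0:ℝ) ≤ ‖F s‖ * s ^ ((d : ℝ) - 1) * (r * s) ^ (-((d : ℝ) - 2) / 2) := by
            positivity
          exact mul_le_mul_of_nonneg_left hbess this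
      _ = (‖F s‖ * s ^ ((d : ℝ) - 1)) *
          ((r * s) ^ (-((d : ℝ) - 2) / 2) * (B * (r * s / (2 * t)) ^ ν)) := by ring
      _ ≤ (‖F s‖ * s ^ ((d : ℝ) - 1)) * (B * t ^ (-ν) * (r ^ (-σ) * s ^ (-σ))) := by
          have : (0:ℝ) ≤ ‖F s‖ * s ^ ((d : ℝ) - 1) := by positivity
          exact mul_le_mul_of_nonneg_left hkey this
      _ = (B * t ^ (-ν) * r ^ (-σ)) * g₀ s := by rw [hg₀]; ring
  -- bound the full integral
  have hbig : ‖∫ s in Ioi (0 : ℝ), G s‖ ≤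
      (B * t ^ (-ν) * r ^ (-σ)) * ∫ s in Ioi (0 : ℝ), g₀ s := by
    refine le_trans (norm_integral_le_integral_norm G) ?_
    rw [← integral_const_mul]
    refine integral_mono_of_nonneg ?_ ?_ ?_
    · filter_upwards with s using norm_nonneg _
    · exact (hg₀int.const_mul _)
    · show ∀ᵐ s ∂(volume.restrict (Ioi (0:ℝ))),
        ‖G s‖ ≤ (B * t ^ (-ν) * r ^ (-σ)) * g₀ s
      rw [ae_restrict_iff' measurableSet_Ioi]
      filter_upwards with s hs
      exact hptwise s hs
  -- put everything together
  have hnorm_coef : ‖(1 / (2 * (t : ℂ)))‖ = 1 / (2 * t) := by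
    rw [norm_div, norm_one]
    rw [norm_mul]
    simp [Complex.norm_real, abs_of_pos ht]
  have hLHS : (1 + r ^ (-σ))⁻¹ * ‖(1 / (2 * (t : ℂ))) * ∫ s in Ioi (0 : ℝ), G s‖ ≤
      (1 + r ^ (-σ))⁻¹ * (1 / (2 * t) *
        ((B * t ^ (-ν) * r ^ (-σ)) * ∫ s in Ioi (0 : ℝ), g₀ s)) := by
    have h1 : (0:ℝ) ≤ (1 + r ^ (-σ))⁻¹ := by positivity
    refine mul_le_mul_of_nonneg_left ?_ h1
    rw [norm_mul, hnorm_coef]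
    exact mul_le_mul_of_nonneg_left hbig (by positivity)
  -- weight absorption: (1 + r^{-σ})⁻¹ * r^{-σ} ≤ 1
  have hweight : (1 + r ^ (-σ))⁻¹ * r ^ (-σ) ≤ 1 := by
    rw [inv_mul_le_iff₀ (by positivity : (0:ℝ) < 1 + r ^ (-σ)), mul_one]
    have : (0:ℝ) ≤ r ^ (-σ) := by positivity
    linarith
  have hexp : t ^ (-(1:ℝ)) * t ^ (-ν) = t ^ σ * t ^ (-(d:ℝ)/2) := by
    rw [← Real.rpow_add ht, ← Real.rpow_add ht]
    congr 1
    rw [hν, hM]; ring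
  have hfinal : (1 + r ^ (-σ))⁻¹ * (1 / (2 * t) *
      ((B * t ^ (-ν) * r ^ (-σ)) * ∫ s in Ioi (0 : ℝ), g₀ s)) ≤
      (B / 2 + 1) * (1 + t ^ σ) * t ^ (-(d:ℝ)/2) * I := by
    have h2t : 1 / (2 * t) = (1/2) * t ^ (-(1:ℝ)) := by
      rw [Real.rpow_neg_one]; ring
    rw [h2t]
    have step1 : (1 + r ^ (-σ))⁻¹ * (1 / 2 * t ^ (-(1:ℝ)) *
        (B * t ^ (-ν) * r ^ (-σ) * ∫ s in Ioi (0 : ℝ), g₀ s)) =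
        ((1 + r ^ (-σ))⁻¹ * r ^ (-σ)) * (B / 2 * (t ^ (-(1:ℝ)) * t ^ (-ν)) *
          ∫ s in Ioi (0 : ℝ), g₀ s) := by ring
    rw [step1, hexp]
    have hb1 : ((1 + r ^ (-σ))⁻¹ * r ^ (-σ)) * (B / 2 * (t ^ σ * t ^ (-(d:ℝ)/2)) *
        ∫ s in Ioi (0 : ℝ), g₀ s) ≤ 1 * (B / 2 * (t ^ σ * t ^ (-(d:ℝ)/2)) *
        ∫ s in Ioi (0 : ℝ), g₀ s) := by
      refine mul_le_mul_of_nonneg_right hweight ?_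
      have : (0:ℝ) ≤ t ^ σ * t ^ (-(d:ℝ)/2) := by positivity
      positivity
    refine le_trans hb1 ?_
    rw [one_mul]
    have htσ : t ^ σ ≤ 1 + t ^ σ := by
      have h0 : (0:ℝ) ≤ t ^ σ := Real.rpow_nonneg ht.le σ
      linarith
    have htd : (0:ℝ) ≤ t ^ (-(d:ℝ)/2) := by positivity
    have hBp : (0:ℝ) ≤ B / 2 := by positivity
    calc B / 2 * (t ^ σ * t ^ (-(d:ℝ)/2)) * (∫ s in Ioi (0 : ℝ), g₀ s)
        ≤ B / 2 * (t ^ σ * t ^ (-(d:ℝ)/2)) * I := by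
          refine mul_le_mul_of_nonneg_left hJle ?_
          positivity
      _ ≤ (B / 2 + 1) * (1 + t ^ σ) * t ^ (-(d:ℝ)/2) * I := by
          have h1 : B / 2 * t ^ σ ≤ (B / 2 + 1) * (1 + t ^ σ) := by
            have h2 : (0:ℝ) ≤ t ^ σ := by positivity
            nlinarith
          have := mul_le_mul_of_nonneg_right
            (mul_le_mul_of_nonneg_right h1 htd) hI0
          calc B / 2 * (t ^ σ * t ^ (-(d:ℝ)/2)) * I
              = (B / 2 * t ^ σ) * t ^ (-(d:ℝ)/2) * I := by ring
            _ ≤ (B / 2 + 1) * (1 + t ^ σ) * t ^ (-(d:ℝ)/2) * I := this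
  exact le_trans hLHS hfinal
end
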